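/- arXiv:2302.03513 — 10 statements merged into one kernel-verified Lean document; each statement's English description precedes it below -/
import Mathlib

section
/- Let f : ℝ → ℝ be differentiable on all of ℝ and periodic with period 1, i.e. f(t+1) = f(t) for all t. If f has at least m distinct zeros in the half-open interval [0,1) (for some natural number m), then f' has at least m distinct zeros in [0,1). -/
/-- **Rolle inequality, periodic case.** If `f : ℝ → ℝ` is differentiable and
`1`-periodic, and has at least `m` distinct zeros in `[0,1)`, then `f'` has at
least `m` distinct zeros in `[0,1)`. -/
theorem stmt1 (f : ℝ → ℝ) (m : ℕ)
    (hd : Differentiable ℝ f)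
    (hper : ∀ t : ℝ, f (t + 1) = f t)
    (Z : Finset ℝ) (hZ : ∀ x ∈ Z, x ∈ Set.Ico (0:ℝ) 1 ∧ f x = 0)
    (hcard : m ≤ Z.card) :
    ∃ Z' : Finset ℝ, m ≤ Z'.card ∧ ∀ x ∈ Z', x ∈ Set.Ico (0:ℝ) 1 ∧ deriv f x = 0 := by
  rcases Nat.eq_zero_or_pos m with hm | hm
  · exact ⟨∅, by simp [hm], by simp⟩
  have hZne : Z.Nonempty := Finset.card_pos.mp (lt_of_lt_of_le hm hcard)
  set a := Z.min' hZne with ha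
  have haZ : a ∈ Z := Z.min'_mem hZne
  have ha0 : (0:ℝ) ≤ a := (hZ a haZ).1.1
  have ha1 : a < 1 := (hZ a haZ).1.2
  -- periodicity of derivative
  have hder : ∀ t : ℝ, deriv f (t + 1) = deriv f t := by
    intro t
    have : (fun x => f (x + 1)) = f := funext hper
    calc deriv f (t + 1) = deriv (fun x => f (x + 1)) t := (deriv_comp_add_const f 1 t).symm
    _ = deriv f t := by rw [this]
  -- next zero function
  set nxt : ℝ → ℝ := fun x =>
    if h : (Z.filter (x < ·)).Nonempty then (Z.filter (x < ·)).min' h else a + 1 with hnxt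
  have hlt_nxt : ∀ x ∈ Z, x < nxt x := by
    intro x hx
    by_cases h : (Z.filter (x < ·)).Nonempty
    · simp only [hnxt, dif_pos h]
      exact (Finset.mem_filter.mp ((Z.filter (x < ·)).min'_mem h)).2
    · simp only [hnxt, dif_neg h]
      have := (hZ x hx).1.2
      linarith
  have hnxt_le : ∀ x ∈ Z, nxt x ≤ a + 1 := by
    intro x hx
    by_cases h : (Z.filter (x < ·)).Nonempty
    · simp only [hnxt, dif_pos h]
      have hm := (Z.filter (x < ·)).min'_mem h
      have := (hZ _ (Finset.mem_filter.mp hm).1).1.2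
      linarith
    · simp only [hnxt, dif_neg h]
      exact le_refl _
  have hnxt_zero : ∀ x ∈ Z, f (nxt x) = 0 := by
    intro x hx
    by_cases h : (Z.filter (x < ·)).Nonempty
    · simp only [hnxt, dif_pos h]
      exact (hZ _ (Finset.mem_filter.mp ((Z.filter (x < ·)).min'_mem h)).1).2
    · simp only [hnxt, dif_neg h]
      rw [hper a]
      exact (hZ a haZ).2
  have hnxt_le_of_lt : ∀ x ∈ Z, ∀ y ∈ Z, x < y → nxt x ≤ y := by
    intro x hx y hy hxy
    have hyf : y ∈ Z.filter (x < ·) := Finset.mem_filter.mpr ⟨hy, hxy⟩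
    have h : (Z.filter (x < ·)).Nonempty := ⟨y, hyf⟩
    simp only [hnxt, dif_pos h]
    exact Finset.min'_le _ _ hyf
  -- Rolle between each zero and its next zero
  have hrolle : ∀ x, ∃ c, x ∈ Z → c ∈ Set.Ioo x (nxt x) ∧ deriv f c = 0 := by
    intro x
    by_cases hx : x ∈ Z
    · obtain ⟨c, hc1, hc2⟩ := exists_deriv_eq_zero (hlt_nxt x hx)
        (hd.continuous.continuousOn) (((hZ x hx).2).trans (hnxt_zero x hx).symm)
      exact ⟨c, fun _ => ⟨hc1, hc2⟩⟩
    · exact ⟨0, fun h => absurd h hx⟩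
  choose g hg using hrolle
  -- g is strictly monotone on Z and lands in (a, a+1)
  have hg_mem : ∀ x ∈ Z, g x ∈ Set.Ioo a (a + 1) := by
    intro x hx
    obtain ⟨h1, _⟩ := hg x hx
    exact ⟨lt_of_le_of_lt (Z.min'_le x hx) h1.1, lt_of_lt_of_le h1.2 (hnxt_le x hx)⟩
  have hg_mono : ∀ x ∈ Z, ∀ y ∈ Z, x < y → g x < g y := by
    intro x hx y hy hxy
    have h1 := (hg x hx).1
    have h2 := (hg y hy).1
    calc g x < nxt x := h1.2
    _ ≤ y := hnxt_le_of_lt x hx y hy hxy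
    _ < g y := h2.1
  -- the image under fract ∘ g
  have key : ∀ u ∈ Z, ∀ v ∈ Z, u < v → Int.fract (g u) ≠ Int.fract (g v) := by
    intro u hu v hv huv heq
    have hlt := hg_mono u hu v hv huv
    have m1 := hg_mem u hu
    have m2 := hg_mem v hv
    have b1 : (0:ℤ) ≤ ⌊g u⌋ := Int.le_floor.mpr (by push_cast; linarith [m1.1])
    have b1' : ⌊g u⌋ ≤ 1 := by
      have : ⌊g u⌋ < 2 := Int.floor_lt.mpr (by push_cast; linarith [m1.2])
      omega
    have b2 : (0:ℤ) ≤ ⌊g v⌋ := Int.le_floor.mpr (by push_cast; linarith [m2.1])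
    have b2' : ⌊g v⌋ ≤ 1 := by
      have : ⌊g v⌋ < 2 := Int.floor_lt.mpr (by push_cast; linarith [m2.2])
      omega
    have e1 : ⌊g u⌋ = 0 ∨ ⌊g u⌋ = 1 := by omega
    have e2 : ⌊g v⌋ = 0 ∨ ⌊g v⌋ = 1 := by omega
    rw [Int.fract, Int.fract] at heq
    rcases e1 with e1 | e1 <;> rcases e2 with e2 | e2 <;>
      rw [e1, e2] at heq <;> push_cast at heq <;>
      linarith [m1.1, m1.2, m2.1, m2.2]
  refine ⟨Z.image (fun x => Int.fract (g x)), ?_, ?_⟩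
  · rw [Finset.card_image_of_injOn]
    · exact hcard
    · intro x hx y hy hxy
      have hx' : x ∈ Z := hx
      have hy' : y ∈ Z := hy
      have hxy' : Int.fract (g x) = Int.fract (g y) := hxy
      by_contra hne
      rcases lt_or_gt_of_ne hne with h | h
      · exact key x hx' y hy' h hxy'
      · exact key y hy' x hx' h hxy'.symm
  · intro y hy
    obtain ⟨x, hx, rfl⟩ := Finset.mem_image.mp hy
    refine ⟨⟨Int.fract_nonneg _, Int.fract_lt_one _⟩, ?_⟩
    have m1 := hg_mem x hx
    have hdz := (hg x hx).2
    have h0 : (0:ℤ) ≤ ⌊g x⌋ := Int.le_floor.mpr (by push_cast; linarith [m1.1])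
    have h1 : ⌊g x⌋ ≤ 1 := by
      have : ⌊g x⌋ < 2 := Int.floor_lt.mpr (by push_cast; linarith [m1.2])
      omega
    interval_cases h : ⌊g x⌋
    · rw [Int.fract, h]; simpa using hdz
    · have e : deriv f (g x - 1) = deriv f (g x) := by
        have := hder (g x - 1)
        simpa using this.symm
      rw [Int.fract, h]
      push_cast
      rw [e]
      exact hdz
end

section
/- Let f be a nonconstant real-analytic function on an open neighborhood of the interval [0,1]. Then N(f) ≤ N(f') + 1, where N(g) denotes the number of zeros of g in [0,1] counted with multiplicities. -/
/-!
For analytic `f`, the order `sInf {j | f⁽ʲ⁾(x) ≠ 0}` is Mathlib's `analyticOrderNatAt f x`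
(a flat zero counts `0`), so each zero of `f` in `[0,1]` of finite positive order `m` is a zero
of `f'` of order `m - 1`. Rolle's theorem gives one zero of `f'` strictly between any two
consecutive such zeros of `f`; there are `k - 1` of them for `k` zeros, each of order at least one
because `f'` cannot be flat anywhere on `[0,1]` once it has a zero of finite order there.
Adding up: `N(f) = ∑ (ord f' + 1) ≤ N(f') + 1`.
-/

open Finset

section AnalyticOrder

variable {𝕜 E : Type*} [NontriviallyNormedField 𝕜] [NormedAddCommGroup E] [NormedSpace 𝕜 E]
  {f : 𝕜 → E} {x : 𝕜}

lemma exists_analyticOrderAt_eq_add_one (h : analyticOrderNatAt f x ≠ 0) :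
    ∃ n : ℕ, analyticOrderAt f x = n + 1 := by
  obtain ⟨n, hn⟩ := Nat.exists_eq_add_one_of_ne_zero h
  refine ⟨n, ?_⟩
  have hfin : analyticOrderAt f x ≠ ⊤ := fun htop => h (by simp [analyticOrderNatAt, htop])
  rw [← ENat.natCast_toNat hfin]
  exact_mod_cast hn

variable [CharZero 𝕜] [CompleteSpace E]

/-- The order of vanishing read off the Taylor coefficients is the analytic order, with the
convention that a flat zero (all derivatives vanish) has order `0` on both sides. -/
theorem AnalyticAt.sInf_setOf_iteratedDeriv_ne_zero (hf : AnalyticAt 𝕜 f x) :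
    sInf {j : ℕ | iteratedDeriv j f x ≠ 0} = analyticOrderNatAt f x := by
  cases h : analyticOrderAt f x with
  | top =>
    have hflat : ∀ j, iteratedDeriv j f x = 0 := fun j =>
      (natCast_le_analyticOrderAt_iff_iteratedDeriv_eq_zero hf).1 (by simp [h]) j j.lt_succ_self
    simp [analyticOrderNatAt, h, hflat]
  | coe n =>
    obtain ⟨hlt, hn⟩ := (analyticOrderAt_eq_nat_iff_iteratedDeriv_eq_zero hf).1 h
    rw [analyticOrderNatAt, h, ENat.toNat_natCast]
    exact le_antisymm (Nat.sInf_le hn)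
      (le_csInf ⟨n, hn⟩ fun j hj => not_lt.1 fun hjn => hj (hlt j hjn))

theorem AnalyticAt.analyticOrderNatAt_deriv_add_one (hf : AnalyticAt 𝕜 f x)
    (h : analyticOrderNatAt f x ≠ 0) :
    analyticOrderNatAt (deriv f) x + 1 = analyticOrderNatAt f x := by
  obtain ⟨n, hn⟩ := exists_analyticOrderAt_eq_add_one h
  simp only [analyticOrderNatAt, analyticOrderAt_deriv_of_pos hf hn, hn]
  norm_cast

/-- A zero of finite positive order of `f` somewhere in the preconnected set `K` keeps `f'` from
being locally zero anywhere on `K`. -/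
theorem AnalyticOnNhd.analyticOrderNatAt_deriv_ne_zero {K : Set 𝕜} {a c : 𝕜}
    (hf : AnalyticOnNhd 𝕜 f K) (hK : IsPreconnected K) (ha : a ∈ K)
    (hfa : analyticOrderNatAt f a ≠ 0) (hc : c ∈ K) (hf'c : deriv f c = 0) :
    analyticOrderNatAt (deriv f) c ≠ 0 := by
  obtain ⟨n, hn⟩ := exists_analyticOrderAt_eq_add_one hfa
  have hfin_a : analyticOrderAt (deriv f) a ≠ ⊤ := by
    simp [analyticOrderAt_deriv_of_pos (hf a ha) hn]
  have hfin_c := hf.deriv.analyticOrderAt_ne_top_of_isPreconnected hK ha hc hfin_a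
  have hpos_c : analyticOrderAt (deriv f) c ≠ 0 := (hf.deriv c hc).analyticOrderAt_ne_zero.2 hf'c
  simpa [analyticOrderNatAt, ENat.toNat_eq_zero] using ⟨hpos_c, hfin_c⟩

end AnalyticOrder

theorem AnalyticOnNhd.finite_inter_support_analyticOrderNatAt {𝕜 E : Type*}
    [NontriviallyNormedField 𝕜] [NormedAddCommGroup E] [NormedSpace 𝕜 E] {f : 𝕜 → E}
    {K : Set 𝕜} (hf : AnalyticOnNhd 𝕜 f K) (hK : IsCompact K) :
    (K ∩ Function.support (analyticOrderNatAt f)).Finite := by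
  refine (hK.finite_sdiff_of_mem_codiscreteWithin
    hf.codiscreteWithin_setOfPred_analyticOrderAt_eq_zero_or_top).subset ?_
  rintro x ⟨hxK, hx⟩
  exact ⟨hxK, by simpa [analyticOrderNatAt, ENat.toNat_eq_zero] using hx⟩

theorem Finset.sum_le_finsum_mem {α M : Type*} [AddCommMonoid M] [PartialOrder M]
    [CanonicallyOrderedAdd M] {g : α → M} {s : Set α} (hg : (s ∩ Function.support g).Finite)
    {t : Finset α} (ht : ↑t ⊆ s) : ∑ x ∈ t, g x ≤ ∑ᶠ x ∈ s, g x := by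
  classical
  rw [finsum_mem_eq_sum_of_subset g (t := t ∪ hg.toFinset) (by intro x hx; simp [hx])
    (by rw [coe_union, Set.union_subset_iff]; exact ⟨ht, fun x hx => (hg.mem_toFinset.1 hx).1⟩)]
  exact sum_le_sum_of_subset subset_union_left

theorem exists_finset_deriv_eq_zero {f : ℝ → ℝ} {I : Set ℝ} (hI : I.OrdConnected)
    (hf : ContinuousOn f I) (s : Finset ℝ) (hsI : ↑s ⊆ I) (hs : ∀ x ∈ s, f x = 0) :
    ∃ t : Finset ℝ, Disjoint s t ∧ #s ≤ #t + 1 ∧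
      ∀ c ∈ t, deriv f c = 0 ∧ ∃ a ∈ s, ∃ b ∈ s, a < c ∧ c < b := by
  classical
  induction s using Finset.induction_on_max with
  | empty => exact ⟨∅, by simp⟩
  | insert a s hlt ih =>
    rw [coe_insert, Set.insert_subset_iff] at hsI
    rw [forall_mem_insert] at hs
    obtain ⟨t, hst, hcard, ht⟩ := ih hsI.2 hs.2
    rcases s.eq_empty_or_nonempty with rfl | hne
    · exact ⟨∅, by simp⟩
    set m := s.max' hne
    have hm : m ∈ s := s.max'_mem hne
    obtain ⟨c, ⟨hmc, hca⟩, hc⟩ := exists_deriv_eq_zero (hlt m hm)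
      (hf.mono (hI.out (hsI.2 hm) hsI.1)) ((hs.2 m hm).trans hs.1.symm)
    have ht_lt_m : ∀ d ∈ t, d < m := fun d hd => by
      obtain ⟨-, -, -, b, hb, -, hdb⟩ := ht d hd
      exact hdb.trans_le (s.le_max' b hb)
    have hcs : c ∉ s := fun hcs => (s.le_max' c hcs).not_gt hmc
    have hct : c ∉ t := fun hct => (ht_lt_m c hct).not_gt hmc
    refine ⟨insert c t, ?_, ?_, ?_⟩
    · rw [disjoint_insert_left, disjoint_insert_right, mem_insert, not_or]
      exact ⟨⟨hca.ne', fun hat => (ht_lt_m a hat).not_gt (hlt m hm)⟩, hcs, hst⟩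
    · rw [card_insert_of_notMem (fun has => (hlt a has).false), card_insert_of_notMem hct]
      omega
    · rw [forall_mem_insert]
      refine ⟨⟨hc, m, mem_insert_of_mem hm, a, mem_insert_self a s, hmc, hca⟩, fun d hd => ?_⟩
      obtain ⟨hd0, a', ha', b', hb', hda, hdb⟩ := ht d hd
      exact ⟨hd0, a', mem_insert_of_mem ha', b', mem_insert_of_mem hb', hda, hdb⟩

theorem stmt2_general (U : Set ℝ) (hUI : Set.Icc (0:ℝ) 1 ⊆ U)
    (f : ℝ → ℝ) (hf : AnalyticOnNhd ℝ f U) :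
    (∑ᶠ x ∈ Set.Icc (0:ℝ) 1, sInf {j : ℕ | iteratedDeriv j f x ≠ 0})
      ≤ (∑ᶠ x ∈ Set.Icc (0:ℝ) 1, sInf {j : ℕ | iteratedDeriv j (deriv f) x ≠ 0}) + 1 := by
  have hfI : AnalyticOnNhd ℝ f (Set.Icc 0 1) := hf.mono hUI
  rw [finsum_mem_congr rfl fun x hx => (hfI x hx).sInf_setOf_iteratedDeriv_ne_zero,
    finsum_mem_congr rfl fun x hx => (hfI.deriv x hx).sInf_setOf_iteratedDeriv_ne_zero]
  set F := analyticOrderNatAt f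
  set G := analyticOrderNatAt (deriv f)
  have hFfin := hfI.finite_inter_support_analyticOrderNatAt isCompact_Icc
  set s := hFfin.toFinset
  have hs : ∀ x ∈ s, x ∈ Set.Icc (0:ℝ) 1 ∧ F x ≠ 0 := fun x hx => hFfin.mem_toFinset.1 hx
  obtain ⟨t, hst, hcard, ht⟩ := exists_finset_deriv_eq_zero Set.ordConnected_Icc hfI.continuousOn s
    (fun x hx => (hs x hx).1) fun x hx => apply_eq_zero_of_analyticOrderNatAt_ne_zero (hs x hx).2
  have htI : ∀ c ∈ t, c ∈ Set.Icc (0:ℝ) 1 := fun c hc => by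
    obtain ⟨-, a, ha, b, hb, hac, hcb⟩ := ht c hc
    exact Set.ordConnected_Icc.out (hs a ha).1 (hs b hb).1 ⟨hac.le, hcb.le⟩
  have htG : ∀ c ∈ t, 1 ≤ G c := fun c hc => by
    obtain ⟨hc0, a, ha, -⟩ := ht c hc
    exact Nat.one_le_iff_ne_zero.2 <| hfI.analyticOrderNatAt_deriv_ne_zero isPreconnected_Icc
      (hs a ha).1 (hs a ha).2 (htI c hc) hc0
  calc ∑ᶠ x ∈ Set.Icc (0:ℝ) 1, F x = ∑ x ∈ s, F x := finsum_mem_eq_sum _ hFfin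
    _ = ∑ x ∈ s, G x + #s := by
      rw [← sum_congr rfl fun x hx =>
        (hfI x (hs x hx).1).analyticOrderNatAt_deriv_add_one (hs x hx).2, sum_add_distrib,
        card_eq_sum_ones]
    _ ≤ ∑ x ∈ s ∪ t, G x + 1 := by
      rw [sum_union hst]
      have : #t ≤ ∑ x ∈ t, G x := by simpa using card_nsmul_le_sum t G 1 htG
      omega
    _ ≤ ∑ᶠ x ∈ Set.Icc (0:ℝ) 1, G x + 1 := by
      gcongr
      exact sum_le_finsum_mem (hfI.deriv.finite_inter_support_analyticOrderNatAt isCompact_Icc)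
        (by simpa using ⟨fun x hx => (hs x hx).1, htI⟩)

/-- **Rolle inequality with multiplicities.** For a nonconstant real-analytic
function `f` on an open neighborhood `U` of `[0,1]`, the number of zeros of `f`
in `[0,1]` counted with multiplicities is at most the corresponding number for
`f'` plus one.  The multiplicity (order) of `f` at `x` is the least `j` with
`f^{(j)}(x) ≠ 0` (equal to `0` at points where `f` does not vanish). -/
theorem stmt2 (U : Set ℝ) (hU : IsOpen U) (hUI : Set.Icc (0:ℝ) 1 ⊆ U)
    (f : ℝ → ℝ) (hf : AnalyticOnNhd ℝ f U)
    (hnc : ∃ x ∈ U, ∃ y ∈ U, f x ≠ f y) :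
    (∑ᶠ x ∈ Set.Icc (0:ℝ) 1, sInf {j : ℕ | iteratedDeriv j f x ≠ 0})
      ≤ (∑ᶠ x ∈ Set.Icc (0:ℝ) 1, sInf {j : ℕ | iteratedDeriv j (deriv f) x ≠ 0}) + 1 :=
  stmt2_general U hUI f hf
end

section
/- (de la Vallée Poussin) Let ℓ > 0 and let a_1,…,a_n : [0,ℓ] → ℝ be continuous functions with |a_k(t)| ≤ A_k for all t ∈ [0,ℓ], k = 1,…,n, where the constants A_k satisfy Σ_{k=1}^n A_k · ℓ^k / k! < 1. Let f : [0,ℓ] → ℝ be n times continuously differentiable and satisfy the linear ordinary differential equation f^{(n)}(t) + a_1(t) f^{(n−1)}(t) + ⋯ + a_{n−1}(t) f'(t) + a_n(t) f(t) = 0 for all t ∈ [0,ℓ]. If f has at least n distinct zeros in [0,ℓ], then f is identically zero on [0,ℓ]. Equivalently, every nontrivial solution has at most n − 1 distinct zeros on [0,ℓ]. -/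
/-!
Let `M = max |f⁽ⁿ⁾|` on `[0, ℓ]`. For `k ≤ n`, Rolle's theorem gives `f⁽ⁿ⁻ᵏ⁾` at least `k` zeros,
and the interpolation error formula at these zeros bounds `|f⁽ⁿ⁻ᵏ⁾| ≤ M ℓᵏ / k!`. Evaluating the
equation where `|f⁽ⁿ⁾| = M` gives `M ≤ M ∑ Aₖ ℓᵏ / k!`, hence `M = 0`, and the case `k = n`
gives `f = 0`.
-/

open Set

section IteratedDeriv

variable {𝕜 : Type*} [NontriviallyNormedField 𝕜] {F : Type*} [NormedAddCommGroup F]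
  [NormedSpace 𝕜 F] {f : 𝕜 → F} {s : Set 𝕜}

theorem iteratedDerivWithin_iteratedDerivWithin (k m : ℕ) :
    iteratedDerivWithin k (iteratedDerivWithin m f s) s = iteratedDerivWithin (k + m) f s := by
  have h : ∀ j, iteratedDerivWithin j f s = (fun g : 𝕜 → F => derivWithin g s)^[j] f :=
    fun j => funext fun _ => iteratedDerivWithin_eq_iterate
  ext x
  rw [iteratedDerivWithin_eq_iterate, h, h, Function.iterate_add_apply]

theorem ContDiffOn.iteratedDerivWithin_of_add {m k : ℕ} (hf : ContDiffOn 𝕜 (m + k) f s)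
    (hs : UniqueDiffOn 𝕜 s) : ContDiffOn 𝕜 k (iteratedDerivWithin m f s) s := by
  induction m generalizing f with
  | zero => simpa using hf
  | succ m ih =>
    rw [iteratedDerivWithin_succ']
    refine ih (hf.derivWithin hs ?_)
    push_cast
    exact le_of_eq (by ring)

end IteratedDeriv

theorem Polynomial.iteratedDeriv_eval {𝕜 : Type*} [NontriviallyNormedField 𝕜] (p : Polynomial 𝕜)
    (k : ℕ) :
    iteratedDeriv k (fun x => p.eval x) = fun x => (Polynomial.derivative^[k] p).eval x := by
  induction k generalizing p with
  | zero => simp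
  | succ k ih =>
    have hderiv : deriv (fun x => p.eval x) = fun x => p.derivative.eval x := by
      funext x; exact p.deriv
    rw [iteratedDeriv_succ', hderiv, ih, Function.iterate_succ_apply]

theorem iteratedDerivWithin_prod_sub_eq_factorial {𝕜 : Type*} [NontriviallyNormedField 𝕜]
    {s : Set 𝕜} (hs : UniqueDiffOn 𝕜 s) {x : 𝕜} (hx : x ∈ s) (S : Finset 𝕜) :
    iteratedDerivWithin S.card (fun y => ∏ z ∈ S, (y - z)) s x = S.card.factorial := by
  have hP : (fun y => ∏ z ∈ S, (y - z))
      = fun y => (∏ z ∈ S, (Polynomial.X - Polynomial.C z)).eval y := by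
    funext y; simp [Polynomial.eval_prod]
  have hω : ContDiff 𝕜 S.card fun y => ∏ z ∈ S, (y - z) :=
    contDiff_prod fun z _ => contDiff_id.sub contDiff_const
  rw [iteratedDerivWithin_eq_iteratedDeriv hs hω.contDiffAt hx, hP,
    Polynomial.iteratedDeriv_eval, Polynomial.iterate_derivative_prod_X_sub_C le_rfl]
  simp

theorem exists_finset_derivWithin_eq_zero {a b : ℝ} {h : ℝ → ℝ} (hh : ContinuousOn h (Icc a b))
    {S : Finset ℝ} (hS : ∀ t ∈ S, t ∈ Icc a b ∧ h t = 0) :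
    ∃ T : Finset ℝ, S.card ≤ T.card + 1 ∧
      ∀ t ∈ T, t ∈ Icc a b ∧ derivWithin h (Icc a b) t = 0 := by
  have rolle : ∀ x ∈ S, ∀ y ∈ S, x < y →
      ∃ c ∈ Ioo x y, c ∈ Icc a b ∧ derivWithin h (Icc a b) c = 0 := by
    intro x hx y hy hxy
    obtain ⟨⟨hax, -⟩, hx0⟩ := hS x hx
    obtain ⟨⟨-, hyb⟩, hy0⟩ := hS y hy
    obtain ⟨c, hc, hc0⟩ :=
      exists_deriv_eq_zero hxy (hh.mono (Icc_subset_Icc hax hyb)) (hx0.trans hy0.symm)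
    have hc_int : Icc a b ∈ nhds c := Icc_mem_nhds (hax.trans_lt hc.1) (hc.2.trans_le hyb)
    exact ⟨c, hc, mem_of_mem_nhds hc_int, (derivWithin_of_mem_nhds hc_int).trans hc0⟩
  choose! c hc using rolle
  refine ⟨((S ×ˢ S).filter fun p => p.1 < p.2).image fun p => c p.1 p.2,
    Finset.card_le_of_interleaved fun x hx y hy hxy _ => ⟨c x y, ?_, (hc x hx y hy hxy).1⟩, ?_⟩
  · exact Finset.mem_image.2 ⟨(x, y), by simp [hx, hy, hxy], rfl⟩
  · simp only [Finset.mem_image, Finset.mem_filter, Finset.mem_product]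
    rintro _ ⟨p, ⟨⟨hp₁, hp₂⟩, hp⟩, rfl⟩
    exact (hc _ hp₁ _ hp₂ hp).2

theorem exists_finset_iteratedDerivWithin_eq_zero {a b : ℝ} (hab : a < b) {h : ℝ → ℝ} {k : ℕ}
    (hh : ContDiffOn ℝ k h (Icc a b)) {S : Finset ℝ} (hS : ∀ t ∈ S, t ∈ Icc a b ∧ h t = 0) :
    ∃ T : Finset ℝ, S.card ≤ T.card + k ∧
      ∀ t ∈ T, t ∈ Icc a b ∧ iteratedDerivWithin k h (Icc a b) t = 0 := by
  induction k generalizing h S with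
  | zero => exact ⟨S, le_rfl, by simpa using hS⟩
  | succ k ih =>
    obtain ⟨T₁, hT₁, hT₁0⟩ := exists_finset_derivWithin_eq_zero hh.continuousOn hS
    obtain ⟨T, hT, hT0⟩ :=
      ih (hh.derivWithin (uniqueDiffOn_Icc hab) (by push_cast; rfl)) hT₁0
    exact ⟨T, by omega, by simpa only [iteratedDerivWithin_succ'] using hT0⟩

theorem exists_mul_factorial_eq_iteratedDerivWithin_mul_prod {a b : ℝ} (hab : a < b)
    {g : ℝ → ℝ} {S : Finset ℝ} (hg : ContDiffOn ℝ S.card g (Icc a b))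
    (hS : ∀ z ∈ S, z ∈ Icc a b ∧ g z = 0) {t : ℝ} (ht : t ∈ Icc a b) :
    ∃ ξ ∈ Icc a b, g t * S.card.factorial
      = iteratedDerivWithin S.card g (Icc a b) ξ * ∏ z ∈ S, (t - z) := by
  by_cases htS : t ∈ S
  · refine ⟨t, ht, ?_⟩
    rw [(hS t htS).2, Finset.prod_eq_zero htS (sub_self t), zero_mul, mul_zero]
  set ω : ℝ → ℝ := fun x => ∏ z ∈ S, (x - z)
  have hωt : ω t ≠ 0 :=
    Finset.prod_ne_zero_iff.2 fun z hz => sub_ne_zero.2 fun h => htS (h ▸ hz)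
  have hω : ContDiffOn ℝ S.card ω (Icc a b) :=
    (contDiff_prod fun z _ => contDiff_id.sub contDiff_const).contDiffOn
  -- `c` makes `g - c ω` vanish at `t` too, so Rolle gives a zero `ξ` of
  -- `(g - c ω)⁽ᵏ⁾ = g⁽ᵏ⁾ - c k!`, where `k = S.card`.
  set c := g t / ω t
  have hzeros : ∀ x ∈ insert t S, x ∈ Icc a b ∧ (g - c • ω) x = 0 := by
    intro x hx
    rcases Finset.mem_insert.1 hx with rfl | hx
    · exact ⟨ht, by simp [c, div_mul_cancel₀ _ hωt]⟩
    · exact ⟨(hS x hx).1, by simp [ω, (hS x hx).2, Finset.prod_eq_zero hx (sub_self x)]⟩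
  obtain ⟨T, hT, hT0⟩ := exists_finset_iteratedDerivWithin_eq_zero (h := g - c • ω) hab
    (hg.sub (hω.const_smul c)) hzeros
  obtain ⟨ξ, hξ⟩ : T.Nonempty := by
    rw [Finset.card_insert_of_notMem htS] at hT
    exact Finset.card_pos.1 (by omega)
  obtain ⟨hξab, hξ0⟩ := hT0 ξ hξ
  refine ⟨ξ, hξab, ?_⟩
  rw [iteratedDerivWithin_sub hξab (uniqueDiffOn_Icc hab) (hg ξ hξab) (g := c • ω)
      ((hω.const_smul c) ξ hξab), iteratedDerivWithin_const_smul_field,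
    iteratedDerivWithin_prod_sub_eq_factorial (uniqueDiffOn_Icc hab) hξab, sub_eq_zero] at hξ0
  change _ = _ * ω t
  rw [hξ0, smul_eq_mul, mul_right_comm, div_mul_cancel₀ _ hωt]

theorem abs_le_mul_pow_div_factorial_of_card_zeros {a b : ℝ} (hab : a < b) {g : ℝ → ℝ} {k : ℕ}
    (hg : ContDiffOn ℝ k g (Icc a b)) {M : ℝ}
    (hM : ∀ x ∈ Icc a b, |iteratedDerivWithin k g (Icc a b) x| ≤ M)
    {T : Finset ℝ} (hT : ∀ z ∈ T, z ∈ Icc a b ∧ g z = 0) (hk : k ≤ T.card)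
    {t : ℝ} (ht : t ∈ Icc a b) : |g t| ≤ M * (b - a) ^ k / k.factorial := by
  obtain ⟨S, hST, rfl⟩ := Finset.exists_subset_card_eq hk
  obtain ⟨ξ, hξ, hξeq⟩ := exists_mul_factorial_eq_iteratedDerivWithin_mul_prod hab hg
    (fun z hz => hT z (hST hz)) ht
  have hprod : |∏ z ∈ S, (t - z)| ≤ (b - a) ^ S.card := by
    rw [Finset.abs_prod, ← Finset.prod_const]
    refine Finset.prod_le_prod (fun _ _ => abs_nonneg _) fun z hz => ?_
    obtain ⟨⟨haz, hzb⟩, -⟩ := hT z (hST hz)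
    exact abs_sub_le_iff.2 ⟨by linarith [ht.2], by linarith [ht.1]⟩
  calc |g t| = |g t * S.card.factorial| / S.card.factorial := by
        rw [abs_mul, Nat.abs_cast, mul_div_cancel_right₀ _ (by positivity)]
    _ = |iteratedDerivWithin S.card g (Icc a b) ξ| * |∏ z ∈ S, (t - z)| / S.card.factorial := by
        rw [hξeq, abs_mul]
    _ ≤ M * (b - a) ^ S.card / S.card.factorial := by
        gcongr
        · exact (abs_nonneg _).trans (hM ξ hξ)
        · exact hM ξ hξ

theorem abs_iteratedDerivWithin_sub_le_of_card_zeros {a b : ℝ} (hab : a < b) {f : ℝ → ℝ} {n : ℕ}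
    (hf : ContDiffOn ℝ n f (Icc a b)) {Z : Finset ℝ} (hZ : ∀ z ∈ Z, z ∈ Icc a b ∧ f z = 0)
    (hn : n ≤ Z.card) {M : ℝ} (hM : ∀ x ∈ Icc a b, |iteratedDerivWithin n f (Icc a b) x| ≤ M)
    {k : ℕ} (hk : k ≤ n) {t : ℝ} (ht : t ∈ Icc a b) :
    |iteratedDerivWithin (n - k) f (Icc a b) t| ≤ M * (b - a) ^ k / k.factorial := by
  have hnk : n - k + k = n := Nat.sub_add_cancel hk
  obtain ⟨T, hT, hT0⟩ :=
    exists_finset_iteratedDerivWithin_eq_zero hab (hf.of_le (by exact_mod_cast n.sub_le k)) hZ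
  refine abs_le_mul_pow_div_factorial_of_card_zeros hab
    ((hnk ▸ hf).iteratedDerivWithin_of_add (uniqueDiffOn_Icc hab)) (fun x hx => ?_) hT0
    (by omega) ht
  rw [iteratedDerivWithin_iteratedDerivWithin, add_comm, hnk]
  exact hM x hx

theorem stmt5_general (ℓ : ℝ) (hℓ : 0 < ℓ) (n : ℕ) (a : ℕ → ℝ → ℝ) (A : ℕ → ℝ)
    (hbd : ∀ k ∈ Finset.Icc 1 n, ∀ t ∈ Set.Icc 0 ℓ, |a k t| ≤ A k)
    (hsmall : ∑ k ∈ Finset.Icc 1 n, A k * ℓ ^ k / (k.factorial : ℝ) < 1)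
    (f : ℝ → ℝ) (hf : ContDiffOn ℝ n f (Set.Icc 0 ℓ))
    (hode : ∀ t ∈ Set.Icc 0 ℓ,
      iteratedDerivWithin n f (Set.Icc 0 ℓ) t
        + ∑ k ∈ Finset.Icc 1 n, a k t * iteratedDerivWithin (n - k) f (Set.Icc 0 ℓ) t = 0)
    (Z : Finset ℝ) (hZ : ∀ t ∈ Z, t ∈ Set.Icc 0 ℓ ∧ f t = 0)
    (hcard : n ≤ Z.card) :
    ∀ t ∈ Set.Icc 0 ℓ, f t = 0 := by
  obtain ⟨t₀, ht₀, hmax⟩ := isCompact_Icc.exists_isMaxOn (nonempty_Icc.2 hℓ.le)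
    (hf.continuousOn_iteratedDerivWithin le_rfl (uniqueDiffOn_Icc hℓ)).abs
  set M := |iteratedDerivWithin n f (Icc 0 ℓ) t₀|
  have hbound : ∀ k ≤ n, ∀ t ∈ Icc 0 ℓ,
      |iteratedDerivWithin (n - k) f (Icc 0 ℓ) t| ≤ M * ℓ ^ k / k.factorial := fun k hk t ht => by
    simpa using abs_iteratedDerivWithin_sub_le_of_card_zeros hℓ hf hZ hcard (fun x hx => hmax hx)
      hk ht
  have hM : M ≤ M * ∑ k ∈ Finset.Icc 1 n, A k * ℓ ^ k / k.factorial := calc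
    M = |∑ k ∈ Finset.Icc 1 n, a k t₀ * iteratedDerivWithin (n - k) f (Icc 0 ℓ) t₀| := by
        rw [← abs_neg, ← eq_neg_of_add_eq_zero_left (hode t₀ ht₀)]
    _ ≤ ∑ k ∈ Finset.Icc 1 n, |a k t₀ * iteratedDerivWithin (n - k) f (Icc 0 ℓ) t₀| :=
        Finset.abs_sum_le_sum_abs _ _
    _ ≤ ∑ k ∈ Finset.Icc 1 n, A k * (M * ℓ ^ k / k.factorial) :=
        Finset.sum_le_sum fun k hk => (abs_mul _ _).trans_le <| mul_le_mul (hbd k hk t₀ ht₀)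
          (hbound k (Finset.mem_Icc.1 hk).2 t₀ ht₀) (abs_nonneg _)
          ((abs_nonneg _).trans (hbd k hk t₀ ht₀))
    _ = M * ∑ k ∈ Finset.Icc 1 n, A k * ℓ ^ k / k.factorial := by
        rw [Finset.mul_sum]
        exact Finset.sum_congr rfl fun k _ => by ring
  have hM0 : M = 0 := by nlinarith [abs_nonneg (iteratedDerivWithin n f (Icc 0 ℓ) t₀)]
  intro t ht
  simpa [hM0] using hbound n le_rfl t ht

/-- **de la Vallée Poussin theorem.** If the coefficients of the linear ODE
`y^{(n)} + a₁ y^{(n-1)} + ⋯ + aₙ y = 0` on `[0,ℓ]` satisfy `|a_k| ≤ A_k` with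
`Σ A_k ℓ^k / k! < 1`, then any solution with at least `n` distinct zeros on
`[0,ℓ]` vanishes identically on `[0,ℓ]`. -/
theorem stmt5 (ℓ : ℝ) (hℓ : 0 < ℓ) (n : ℕ) (a : ℕ → ℝ → ℝ) (A : ℕ → ℝ)
    (hacont : ∀ k ∈ Finset.Icc 1 n, ContinuousOn (a k) (Set.Icc 0 ℓ))
    (hbd : ∀ k ∈ Finset.Icc 1 n, ∀ t ∈ Set.Icc 0 ℓ, |a k t| ≤ A k)
    (hsmall : ∑ k ∈ Finset.Icc 1 n, A k * ℓ ^ k / (k.factorial : ℝ) < 1)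
    (f : ℝ → ℝ) (hf : ContDiffOn ℝ n f (Set.Icc 0 ℓ))
    (hode : ∀ t ∈ Set.Icc 0 ℓ,
      iteratedDerivWithin n f (Set.Icc 0 ℓ) t
        + ∑ k ∈ Finset.Icc 1 n, a k t * iteratedDerivWithin (n - k) f (Set.Icc 0 ℓ) t = 0)
    (Z : Finset ℝ) (hZ : ∀ t ∈ Z, t ∈ Set.Icc 0 ℓ ∧ f t = 0)
    (hcard : n ≤ Z.card) :
    ∀ t ∈ Set.Icc 0 ℓ, f t = 0 :=
  stmt5_general ℓ hℓ n a A hbd hsmall f hf hode Z hZ hcard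
end

section
/- (Real meandering theorem, qualitative form) For every pair of natural numbers n ≥ 1 and d there exists a natural number ν = ν(n,d), and for every R > 0 there exists δ = δ(n,d,R) > 0, with the following property. Let v = (v_1,…,v_n) be a polynomial vector field on ℝⁿ with deg v_i ≤ d and all coefficients of all v_i bounded in absolute value by R, let q ∈ ℝⁿ satisfy |q_i| ≤ R for all i, and let γ : (−δ, δ) → ℝⁿ be a solution of the system ẋ = v(x) with γ(0) = q. Then for every affine hyperplane Π ⊆ ℝⁿ, the set { t ∈ (−δ,δ) : γ(t) ∈ Π } has at most ν isolated points. -/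
/-!
Let `V` and `ℓ` be the vector field and the affine function with indeterminate coefficients, and
`Pₖ = L_V^k ℓ` the iterated Lie derivatives. In the Noetherian polynomial ring the ideals
`(P₀, …, Pₖ)` stabilise, so `P_{K+1} = ∑ hⱼ Pⱼ` for some `K`, and `ν = K + 1`. Along a solution `γ`
the functions `fₖ(t) = Pₖ(γ t)` satisfy `fₖ' = fₖ₊₁`. After normalising the hyperplane, an a priori
estimate keeps `(parameters, γ t)` in a fixed ball for `|t| < δ`, so the `hⱼ(γ t)` are bounded
independently of the data. If `f₀` had `K + 2` zeros, Rolle's theorem would give every `fₖ`,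
`k ≤ K`, a zero in an interval of length `< 2δ`, and on such a short interval the relation
`f_{K+1} = ∑ hⱼ fⱼ` forces `f₀ ≡ 0` there, so none of these zeros is isolated.
-/

open MvPolynomial Set

section APriori

variable {E : Type*} [NormedAddCommGroup E] [NormedSpace ℝ E] {F : E → E} {γ : ℝ → E} {r M δ : ℝ}

theorem norm_sub_le_of_hasDerivAt_Ico (hr : 0 < r) (hF : ∀ x, ‖x - γ 0‖ ≤ r → ‖F x‖ ≤ M)
    (hMδ : M * δ < r) (hγ : ∀ t ∈ Ico 0 δ, HasDerivAt γ (F (γ t)) t) :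
    ∀ t ∈ Ico 0 δ, ‖γ t - γ 0‖ ≤ r := by
  intro t ht
  have hδ : 0 < δ := ht.1.trans_lt ht.2
  have hsub : Icc 0 t ⊆ Ico 0 δ := Icc_subset_Ico_right ht.2
  -- barrier argument with the linear barrier `s ↦ (r / δ) * s`, whose slope exceeds `M`
  have hbarrier := image_norm_le_of_norm_deriv_right_lt_deriv_boundary'
    (f := fun s => γ s - γ 0) (B := fun s => r / δ * s) (B' := fun _ => r / δ * 1)
    (fun s hs => ((hγ s (hsub hs)).continuousAt.sub continuousAt_const).continuousWithinAt)
    (fun s hs => ((hγ s (hsub (Ico_subset_Icc_self hs))).sub_const _).hasDerivWithinAt)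
    (by simp) (continuous_const.mul continuous_id).continuousOn
    (fun s _ => ((hasDerivAt_id s).const_mul _).hasDerivWithinAt)
    (fun s hs hs_eq => by
      have hsr : ‖γ s - γ 0‖ ≤ r := by
        rw [hs_eq, div_mul_eq_mul_div, div_le_iff₀ hδ]
        exact mul_le_mul_of_nonneg_left (hsub (Ico_subset_Icc_self hs)).2.le hr.le
      rw [mul_one, lt_div_iff₀ hδ]
      exact (mul_le_mul_of_nonneg_right (hF _ hsr) hδ.le).trans_lt hMδ)
    (right_mem_Icc.2 ht.1)
  calc ‖γ t - γ 0‖ ≤ r / δ * t := hbarrier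
    _ ≤ r := by
      rw [div_mul_eq_mul_div, div_le_iff₀ hδ]
      exact mul_le_mul_of_nonneg_left ht.2.le hr.le

theorem norm_sub_le_of_hasDerivAt_Ioo (hr : 0 < r) (hF : ∀ x, ‖x - γ 0‖ ≤ r → ‖F x‖ ≤ M)
    (hMδ : M * δ < r) (hγ : ∀ t ∈ Ioo (-δ) δ, HasDerivAt γ (F (γ t)) t) :
    ∀ t ∈ Ioo (-δ) δ, ‖γ t - γ 0‖ ≤ r := by
  intro t ht
  rcases le_total 0 t with h0t | ht0
  · exact norm_sub_le_of_hasDerivAt_Ico hr hF hMδ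
      (fun s hs => hγ s ⟨by linarith [hs.1, hs.2], hs.2⟩) t ⟨h0t, ht.2⟩
  · have hrev := norm_sub_le_of_hasDerivAt_Ico (γ := fun s => γ (-s)) (F := fun x => -F x) hr
      (by simpa using hF) hMδ
      (fun s hs => by
        simpa [Function.comp_def] using
          (hγ (-s) ⟨by linarith [hs.2], by linarith [hs.1, hs.2]⟩).scomp s (hasDerivAt_neg s))
      (-t) ⟨by linarith, by linarith [ht.1]⟩
    simpa using hrev

theorem norm_le_of_hasDerivAt_Ioo (hr : 0 < r) (h0 : ‖γ 0‖ ≤ r)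
    (hF : ∀ x, ‖x‖ ≤ 2 * r → ‖F x‖ ≤ M) (hMδ : M * δ < r)
    (hγ : ∀ t ∈ Ioo (-δ) δ, HasDerivAt γ (F (γ t)) t) : ∀ t ∈ Ioo (-δ) δ, ‖γ t‖ ≤ 2 * r := by
  have hball (x : E) (hx : ‖x - γ 0‖ ≤ r) : ‖x‖ ≤ 2 * r := by
    linarith [norm_le_norm_sub_add x (γ 0)]
  exact fun t ht =>
    hball _ (norm_sub_le_of_hasDerivAt_Ioo hr (fun x hx => hF x (hball x hx)) hMδ hγ t ht)

end APriori

section Rolle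

variable {a b : ℝ}

theorem exists_strictMono_zeros_of_hasDerivAt {g g' : ℝ → ℝ}
    (hg : ∀ x ∈ Icc a b, HasDerivAt g (g' x) x) {m : ℕ} {x : Fin (m + 2) → ℝ}
    (hx : StrictMono x) (hxab : ∀ i, x i ∈ Icc a b) (hx0 : ∀ i, g (x i) = 0) :
    ∃ y : Fin (m + 1) → ℝ, StrictMono y ∧ (∀ i, y i ∈ Icc a b) ∧ ∀ i, g' (y i) = 0 := by
  have hrolle (i : Fin (m + 1)) : ∃ c ∈ Ioo (x i.castSucc) (x i.succ), g' c = 0 := by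
    have hsub : Icc (x i.castSucc) (x i.succ) ⊆ Icc a b := Icc_subset_Icc (hxab _).1 (hxab _).2
    exact exists_hasDerivAt_eq_zero (hx i.castSucc_lt_succ)
      (fun y hy => (hg y (hsub hy)).continuousAt.continuousWithinAt) (by rw [hx0, hx0])
      (fun y hy => hg y (hsub (Ioo_subset_Icc_self hy)))
  choose y hy hy0 using hrolle
  refine ⟨y, Fin.strictMono_iff_lt_succ.2 fun i => ?_, fun i => ?_, hy0⟩
  · calc y i.castSucc < x i.castSucc.succ := (hy _).2
      _ = x i.succ.castSucc := by rw [Fin.succ_castSucc]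
      _ < y i.succ := (hy _).1
  · exact ⟨(hxab _).1.trans (hy i).1.le, (hy i).2.le.trans (hxab _).2⟩

theorem exists_zero_of_strictMono_zeros {f : ℕ → ℝ → ℝ}
    (hf : ∀ k, ∀ x ∈ Icc a b, HasDerivAt (f k) (f (k + 1) x) x) {m : ℕ} {x : Fin (m + 1) → ℝ}
    (hx : StrictMono x) (hxab : ∀ i, x i ∈ Icc a b) (hx0 : ∀ i, f 0 (x i) = 0) {k : ℕ}
    (hk : k ≤ m) : ∃ y ∈ Icc a b, f k y = 0 := by
  induction k generalizing f m with
  | zero => exact ⟨x 0, hxab 0, hx0 0⟩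
  | succ k ih =>
    obtain ⟨m, rfl⟩ : ∃ m', m = m' + 1 := ⟨m - 1, by omega⟩
    obtain ⟨y, hy, hyab, hy0⟩ := exists_strictMono_zeros_of_hasDerivAt (hf 0) hx hxab hx0
    exact ih (f := fun j => f (j + 1)) (fun j => hf (j + 1)) hy hyab hy0 (by omega)

end Rolle

theorem nonpos_of_forall_le_half {T : Set ℝ} (hT : BddAbove T)
    (h : ∀ M, (∀ y ∈ T, y ≤ M) → ∀ y ∈ T, y ≤ M / 2) : ∀ y ∈ T, y ≤ 0 := by
  intro y hy
  have hhalf := h (sSup T) fun z hz => le_csSup hT hz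
  have : sSup T ≤ sSup T / 2 := csSup_le ⟨y, hy⟩ hhalf
  linarith [hhalf y hy]

-- de la Vallée Poussin's argument: on a short interval, any common bound of
-- `|f 0|, …, |f (K + 1)|` can be halved.
theorem eqOn_zero_of_hasDerivAt_of_eq_sum_mul {a b B : ℝ} {K : ℕ} {f : ℕ → ℝ → ℝ}
    {h : Fin (K + 1) → ℝ → ℝ} (hf : ∀ k, ∀ x ∈ Icc a b, HasDerivAt (f k) (f (k + 1) x) x)
    (hzero : ∀ k ≤ K, ∃ y ∈ Icc a b, f k y = 0)
    (hrel : ∀ x ∈ Icc a b, f (K + 1) x = ∑ k, h k x * f k x)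
    (hh : ∀ k, ∀ x ∈ Icc a b, |h k x| ≤ B)
    (hab : 2 * (b - a) ≤ 1) (hBab : 2 * B * (K + 1) * (b - a) ≤ 1) :
    ∀ x ∈ Icc a b, f 0 x = 0 := by
  have hcont (k : ℕ) : ContinuousOn (fun x => |f k x|) (Icc a b) :=
    fun x hx => (hf k x hx).continuousAt.continuousWithinAt.abs
  have hbdd : BddAbove (⋃ k ∈ Iic (K + 1), (fun x => |f k x|) '' Icc a b) :=
    (finite_Iic _).bddAbove_biUnion.2 fun k _ =>
      (isCompact_Icc.image_of_continuousOn (hcont k)).bddAbove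
  have hhalf (M : ℝ) (hM : ∀ k ≤ K + 1, ∀ x ∈ Icc a b, |f k x| ≤ M) :
      ∀ k ≤ K + 1, ∀ x ∈ Icc a b, |f k x| ≤ M / 2 := by
    obtain ⟨y₀, hy₀, -⟩ := hzero 0 (Nat.zero_le _)
    have hM0 : 0 ≤ M := (abs_nonneg _).trans (hM 0 (Nat.zero_le _) y₀ hy₀)
    have hsmall (k : ℕ) (hk : k ≤ K) (x : ℝ) (hx : x ∈ Icc a b) : |f k x| ≤ M * (b - a) := by
      obtain ⟨y, hy, hy0⟩ := hzero k hk
      have hmvt := (convex_Icc a b).norm_image_sub_le_of_norm_hasDerivWithin_le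
        (fun z hz => (hf k z hz).hasDerivWithinAt) (fun z hz => hM (k + 1) (by omega) z hz) hy hx
      rw [hy0, sub_zero, Real.norm_eq_abs, Real.norm_eq_abs] at hmvt
      exact hmvt.trans (mul_le_mul_of_nonneg_left (abs_sub_le_iff.2
        ⟨by linarith [hx.2, hy.1], by linarith [hx.1, hy.2]⟩) hM0)
    intro k hk x hx
    rcases Nat.lt_succ_iff_lt_or_eq.1 (Nat.lt_succ_of_le hk) with hk | rfl
    · exact (hsmall k (by omega) x hx).trans (by nlinarith)
    · have hB : 0 ≤ B := (abs_nonneg _).trans (hh 0 x hx)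
      calc |f (K + 1) x| = |∑ k, h k x * f k x| := by rw [hrel x hx]
        _ ≤ ∑ k, |h k x| * |f k x| := by
          simpa only [abs_mul] using Finset.abs_sum_le_sum_abs (fun k => h k x * f k x) Finset.univ
        _ ≤ ∑ _k : Fin (K + 1), B * (M * (b - a)) := Finset.sum_le_sum fun k _ =>
            mul_le_mul (hh k x hx) (hsmall k (by omega) x hx) (abs_nonneg _) hB
        _ = M * (B * (K + 1) * (b - a)) := by
          simp only [Finset.sum_const, Finset.card_univ, Fintype.card_fin, nsmul_eq_mul,
            Nat.cast_add, Nat.cast_one]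
          ring
        _ ≤ M / 2 := by nlinarith
  have hnonpos := nonpos_of_forall_le_half hbdd (by
    simp only [mem_iUnion, mem_image, mem_Iic, exists_prop, forall_exists_index, and_imp]
    rintro M hM _ k hk x hx rfl
    exact hhalf M (fun j hj y hy => hM _ j hj y hy rfl) k hk x hx)
  intro x hx
  exact abs_nonpos_iff.1 (hnonpos _ (mem_biUnion (mem_Iic.2 (Nat.zero_le _)) ⟨x, hx, rfl⟩))

theorem card_le_of_isolated_zeros {δ B : ℝ} {K : ℕ} {f : ℕ → ℝ → ℝ} {h : Fin (K + 1) → ℝ → ℝ}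
    (hf : ∀ k, ∀ t ∈ Ioo (-δ) δ, HasDerivAt (f k) (f (k + 1) t) t)
    (hrel : ∀ t ∈ Ioo (-δ) δ, f (K + 1) t = ∑ k, h k t * f k t)
    (hh : ∀ k, ∀ t ∈ Ioo (-δ) δ, |h k t| ≤ B) (hδ : 4 * (B + 1) * (K + 1) * δ ≤ 1)
    {S : Finset ℝ} (hS : ∀ t ∈ S, t ∈ Ioo (-δ) δ ∧ f 0 t = 0 ∧
      ∃ ε > 0, ∀ s ∈ Ioo (-δ) δ, f 0 s = 0 → |s - t| < ε → s = t) :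
    S.card ≤ K + 1 := by
  by_contra! hcard
  set x : Fin (K + 2) ↪o ℝ := (Fin.castLEOrderEmb hcard).trans (S.orderEmbOfFin rfl)
  have hx : StrictMono x := x.strictMono
  have hxS (i : Fin (K + 2)) : x i ∈ S := S.orderEmbOfFin_mem rfl _
  have hxab (i : Fin (K + 2)) : x i ∈ Icc (x 0) (x (Fin.last _)) :=
    ⟨hx.monotone (Fin.zero_le _), hx.monotone (Fin.le_last _)⟩
  have hsub : Icc (x 0) (x (Fin.last _)) ⊆ Ioo (-δ) δ :=
    Icc_subset_Ioo (hS _ (hxS 0)).1.1 (hS _ (hxS _)).1.2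
  have hlen : x (Fin.last _) - x 0 < 2 * δ := by
    linarith [(hS _ (hxS 0)).1.1, (hS _ (hxS (Fin.last _))).1.2]
  have hB : 0 ≤ B := (abs_nonneg _).trans (hh 0 _ (hsub (hxab 0)))
  have hδ0 : 0 ≤ δ := by linarith [(hS _ (hxS 0)).1.1, (hS _ (hxS 0)).1.2]
  have hδ4 : 4 * δ ≤ 1 := by
    nlinarith [mul_le_mul_of_nonneg_right (one_le_mul_of_one_le_of_one_le
      (by linarith : (1 : ℝ) ≤ B + 1) (by simp : (1 : ℝ) ≤ K + 1)) hδ0]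
  have hvanish := eqOn_zero_of_hasDerivAt_of_eq_sum_mul
    (fun k t ht => hf k t (hsub ht))
    (fun k hk => exists_zero_of_strictMono_zeros (fun k t ht => hf k t (hsub ht)) hx hxab
      (fun i => (hS _ (hxS i)).2.1) (Nat.le_succ_of_le hk))
    (fun t ht => hrel t (hsub ht)) (fun k t ht => hh k t (hsub ht))
    (by linarith)
    (by nlinarith [mul_le_mul_of_nonneg_left hlen.le (by positivity : (0 : ℝ) ≤ 2 * B * (K + 1))])
  obtain ⟨-, -, ε, hε, hiso⟩ := hS _ (hxS 0)
  have h0last : x 0 < x (Fin.last _) := hx (Fin.last_pos)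
  set s := min (x 0 + ε / 2) (x (Fin.last _))
  have hs : s ∈ Icc (x 0) (x (Fin.last _)) := ⟨le_min (by linarith) h0last.le, min_le_right _ _⟩
  have hs0 : x 0 < s := lt_min (by linarith) h0last
  refine hs0.ne' (hiso s (hsub hs) (hvanish s hs) ?_)
  rw [abs_of_pos (sub_pos.2 hs0)]
  linarith [min_le_left (x 0 + ε / 2) (x (Fin.last _))]

theorem exists_ne_zero_norm_smul_le {E : Type*} [NormedAddCommGroup E] [NormedSpace ℝ E] {c : E}
    (hc : c ≠ 0) (c₀ : ℝ) {R : ℝ} (hR : 0 < R) : ∃ μ : ℝ, μ ≠ 0 ∧ ‖μ • c‖ ≤ R ∧ |μ * c₀| ≤ R := by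
  have hpos : 0 < ‖c‖ + |c₀| := add_pos_of_pos_of_nonneg (norm_pos_iff.2 hc) (abs_nonneg c₀)
  refine ⟨R / (‖c‖ + |c₀|), (div_pos hR hpos).ne', ?_, ?_⟩
  · rw [norm_smul, Real.norm_of_nonneg (div_pos hR hpos).le, div_mul_eq_mul_div, div_le_iff₀ hpos]
    nlinarith [abs_nonneg c₀]
  · rw [abs_mul, abs_of_pos (div_pos hR hpos), div_mul_eq_mul_div, div_le_iff₀ hpos]
    nlinarith [norm_nonneg c]

theorem norm_sumElim_le {α β E : Type*} [Fintype α] [Fintype β] [SeminormedAddGroup E]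
    {p : α → E} {x : β → E} {r : ℝ} (hp : ‖p‖ ≤ r) (hx : ‖x‖ ≤ r) : ‖Sum.elim p x‖ ≤ r :=
  (pi_norm_le_iff_of_nonneg ((norm_nonneg p).trans hp)).2 fun
    | .inl i => (norm_le_pi_norm p i).trans hp
    | .inr i => (norm_le_pi_norm x i).trans hx

section LieDerivative

variable {σ : Type*} [Fintype σ] [DecidableEq σ]

theorem hasDerivAt_eval_comp {z : ℝ → σ → ℝ} {z' : σ → ℝ} {t : ℝ} (hz : HasDerivAt z z' t)
    (Q : MvPolynomial σ ℝ) :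
    HasDerivAt (fun s => eval (z s) Q) (∑ j, eval (z t) (pderiv j Q) * z' j) t := by
  induction Q using MvPolynomial.induction_on with
  | C a => simpa using hasDerivAt_const t a
  | add p q hp hq =>
    simp only [map_add, add_mul, Finset.sum_add_distrib]
    exact hp.add hq
  | mul_X p i hp =>
    simp only [map_mul, eval_X]
    refine (hp.mul (hasDerivAt_pi.1 hz i)).congr_deriv ?_
    simp only [Derivation.leibniz, pderiv_X, Pi.single_apply, smul_eq_mul, map_add, map_mul,
      eval_X, add_mul, Finset.sum_add_distrib, Finset.sum_mul, mul_ite, mul_one, mul_zero,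
      apply_ite (eval (z t)), map_zero, ite_mul, zero_mul, Finset.sum_ite_eq, Finset.mem_univ,
      if_true]
    rw [add_comm]
    exact congrArg₂ _ rfl (Finset.sum_congr rfl fun j _ => by ring)

noncomputable def lieDeriv {R : Type*} [CommSemiring R] (W : σ → MvPolynomial σ R)
    (Q : MvPolynomial σ R) : MvPolynomial σ R :=
  ∑ j, pderiv j Q * W j

theorem hasDerivAt_eval_lieDeriv {W : σ → MvPolynomial σ ℝ} {z : ℝ → σ → ℝ} {t : ℝ}
    (hz : HasDerivAt z (fun j => eval (z t) (W j)) t) (Q : MvPolynomial σ ℝ) :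
    HasDerivAt (fun s => eval (z s) Q) (eval (z t) (lieDeriv W Q)) t := by
  simpa [lieDeriv] using hasDerivAt_eval_comp hz Q

end LieDerivative

theorem exists_eq_sum_mul_of_isNoetherianRing {A : Type*} [CommRing A] [IsNoetherianRing A]
    (P : ℕ → A) : ∃ (K : ℕ) (h : Fin (K + 1) → A), P (K + 1) = ∑ j, h j * P j := by
  let I : ℕ →o Ideal A := ⟨fun k => Ideal.span (range fun j : Fin (k + 1) => P j), fun k m hkm =>
    Ideal.span_mono (range_subset_iff.2 fun j => ⟨Fin.castLE (by omega) j, rfl⟩)⟩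
  obtain ⟨K, hK⟩ := monotone_stabilizes_iff_noetherian.2 inferInstance I
  have hmem : P (K + 1) ∈ I K := (hK (K + 1) K.le_succ).symm ▸ Ideal.subset_span ⟨Fin.last _, rfl⟩
  obtain ⟨h, hh⟩ := (Submodule.mem_span_range_iff_exists_fun A).1 hmem
  exact ⟨K, h, hh.symm⟩

theorem exists_forall_abs_eval_le {σ ι : Type*} [Fintype σ] [Fintype ι]
    (Q : ι → MvPolynomial σ ℝ) (r : ℝ) :
    ∃ C, ∀ i, ∀ x : σ → ℝ, ‖x‖ ≤ r → |eval x (Q i)| ≤ C := by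
  obtain ⟨C, hC⟩ := (isCompact_closedBall (0 : σ → ℝ) r).exists_bound_of_continuousOn
    (continuous_pi fun i => continuous_eval (Q i)).continuousOn
  exact ⟨C, fun i x hx => (norm_le_pi_norm (fun i => eval x (Q i)) i).trans
    (hC x (mem_closedBall_zero_iff.2 hx))⟩

theorem sum_coeff_mul_prod_pow_eq_eval {σ R : Type*} [Fintype σ] [DecidableEq σ] [CommSemiring R]
    {p : MvPolynomial σ R} {d : ℕ} (hp : p.totalDegree ≤ d) (x : σ → R) :
    ∑ e : σ → Fin (d + 1), p.coeff (Finsupp.equivFunOnFinite.symm fun i => (e i : ℕ)) *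
      ∏ i, x i ^ (e i : ℕ) = eval x p := by
  rw [eval_eq']
  refine Finset.sum_bij_ne_zero (fun e _ _ => Finsupp.equivFunOnFinite.symm fun i => (e i : ℕ))
    (fun e _ he => mem_support_iff.2 (left_ne_zero_of_mul he))
    (fun e₁ _ _ e₂ _ _ h => funext fun i => Fin.ext (DFunLike.congr_fun h i))
    (fun m hm hm0 => ⟨fun i => ⟨m i, Nat.lt_succ_of_le ?_⟩, Finset.mem_univ _,
      (Finsupp.equivFunOnFinite.symm_apply_apply m).symm ▸ hm0,
      Finsupp.equivFunOnFinite.symm_apply_apply m⟩)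
    (fun e _ _ => by simp)
  exact (m.le_degree i).trans ((le_totalDegree hm).trans hp)

-- Coordinates on the parameter space: `(j, e)` is the coefficient of `x ^ e` in the `j`-th
-- component of the vector field (exponents `e i ≤ d`, a box containing all monomials of degree
-- `≤ d`), and `some i` (resp. `none`) the coefficient of `xᵢ` (resp. the constant term) of the
-- affine function.
abbrev Params (n d : ℕ) : Type := (Fin n × (Fin n → Fin (d + 1))) ⊕ Option (Fin n)

noncomputable def params {n d : ℕ} (v : Fin n → MvPolynomial (Fin n) ℝ) (c : Fin n → ℝ) (c₀ : ℝ) :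
    Params n d → ℝ :=
  Sum.elim (fun je => (v je.1).coeff (Finsupp.equivFunOnFinite.symm fun i => (je.2 i : ℕ)))
    fun o => o.elim c₀ c

noncomputable def univField (n d : ℕ) :
    Params n d ⊕ Fin n → MvPolynomial (Params n d ⊕ Fin n) ℝ
  | .inl _ => 0
  | .inr j => ∑ e : Fin n → Fin (d + 1), X (.inl (.inl (j, e))) * ∏ i, X (.inr i) ^ (e i : ℕ)

noncomputable def univAffine (n d : ℕ) : MvPolynomial (Params n d ⊕ Fin n) ℝ :=
  ∑ i, X (.inl (.inr (some i))) * X (.inr i) + X (.inl (.inr none))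

section Universal

variable {n d : ℕ} {v : Fin n → MvPolynomial (Fin n) ℝ} {c : Fin n → ℝ} {c₀ : ℝ}

theorem eval_univField_inr (hv : ∀ j, (v j).totalDegree ≤ d) (x : Fin n → ℝ) (j : Fin n) :
    eval (Sum.elim (params v c c₀) x) (univField n d (.inr j)) = eval x (v j) := by
  simp [univField, params, ← sum_coeff_mul_prod_pow_eq_eval (hv j)]

theorem eval_univAffine (x : Fin n → ℝ) :
    eval (Sum.elim (params (d := d) v c c₀) x) (univAffine n d) = ∑ i, c i * x i + c₀ := by
  simp [univAffine, params]

theorem norm_params_le {R : ℝ} (hv : ∀ j m, |(v j).coeff m| ≤ R) (hc : ‖c‖ ≤ R) (hc₀ : |c₀| ≤ R) :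
    ‖params (d := d) v c c₀‖ ≤ R := by
  refine (pi_norm_le_iff_of_nonneg ((norm_nonneg c).trans hc)).2 fun
    | .inl _ => hv _ _
    | .inr none => hc₀
    | .inr (some i) => (norm_le_pi_norm c i).trans hc

theorem hasDerivAt_sumElim_params {γ : ℝ → Fin n → ℝ} {t : ℝ} (hv : ∀ j, (v j).totalDegree ≤ d)
    (hγ : HasDerivAt γ (fun j => eval (γ t) (v j)) t) :
    HasDerivAt (fun s => Sum.elim (params v c c₀) (γ s))
      (fun j => eval (Sum.elim (params v c c₀) (γ t)) (univField n d j)) t := by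
  refine hasDerivAt_pi.2 fun
    | .inl _ => by simpa [univField] using hasDerivAt_const t _
    | .inr j => by simpa [eval_univField_inr hv] using hasDerivAt_pi.1 hγ j

theorem norm_sumElim_params_le {γ : ℝ → Fin n → ℝ} {R C δ : ℝ} (hR : 0 < R)
    (hv : ∀ j, (v j).totalDegree ≤ d) (hp : ‖params (d := d) v c c₀‖ ≤ R)
    (hC : ∀ j, ∀ x, ‖x‖ ≤ 2 * R → |eval x (univField n d j)| ≤ C) (hCδ : C * δ < R)
    (h0 : ‖γ 0‖ ≤ R) (hγ : ∀ t ∈ Ioo (-δ) δ, HasDerivAt γ (fun j => eval (γ t) (v j)) t) :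
    ∀ t ∈ Ioo (-δ) δ, ‖Sum.elim (params (d := d) v c c₀) (γ t)‖ ≤ 2 * R := by
  have hball {x : Fin n → ℝ} (hx : ‖x‖ ≤ 2 * R) : ‖Sum.elim (params (d := d) v c c₀) x‖ ≤ 2 * R :=
    norm_sumElim_le (hp.trans (by linarith)) hx
  have hC0 : 0 ≤ C := by simpa [univField] using hC (.inl (.inr none)) 0 (by simp [hR.le])
  intro t ht
  refine hball (norm_le_of_hasDerivAt_Ioo (F := fun x j => eval x (v j)) hR h0
    (fun x hx => (pi_norm_le_iff_of_nonneg hC0).2 fun j => ?_) hCδ hγ t ht)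
  rw [Real.norm_eq_abs, ← eval_univField_inr hv (c := c) (c₀ := c₀)]
  exact hC _ _ (hball hx)

end Universal

theorem stmt6_general (n d : ℕ) :
    ∃ ν : ℕ, ∀ R : ℝ, 0 < R → ∃ δ : ℝ, 0 < δ ∧
      ∀ v : Fin n → MvPolynomial (Fin n) ℝ,
        (∀ i, (v i).totalDegree ≤ d) →
        (∀ (i : Fin n) (m : (Fin n) →₀ ℕ), |(v i).coeff m| ≤ R) →
        ∀ q : Fin n → ℝ, (∀ i, |q i| ≤ R) →
        ∀ γ : ℝ → (Fin n → ℝ), γ 0 = q →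
        (∀ t ∈ Set.Ioo (-δ) δ,
          HasDerivAt γ (fun i => MvPolynomial.eval (γ t) (v i)) t) →
        ∀ (c : Fin n → ℝ) (c₀ : ℝ), c ≠ 0 →
        ∀ S : Finset ℝ,
          (∀ t ∈ S, t ∈ Set.Ioo (-δ) δ ∧ (∑ i, c i * γ t i) + c₀ = 0 ∧
            ∃ ε > 0, ∀ s ∈ Set.Ioo (-δ) δ,
              (∑ i, c i * γ s i) + c₀ = 0 → |s - t| < ε → s = t) →
          S.card ≤ ν := by
  classical
  set P : ℕ → MvPolynomial (Params n d ⊕ Fin n) ℝ :=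
    fun k => (lieDeriv (univField n d))^[k] (univAffine n d)
  obtain ⟨K, h, hrel⟩ := exists_eq_sum_mul_of_isNoetherianRing P
  refine ⟨K + 1, fun R hR => ?_⟩
  obtain ⟨C, hC⟩ := exists_forall_abs_eval_le (Sum.elim (univField n d) h) (2 * R)
  set δ := min R 1 / (4 * (C + 1) * (K + 1))
  have hC0 : 0 ≤ C := by simpa [univField] using hC (.inl (.inl (.inr none))) 0 (by simp [hR.le])
  have hδ : 0 < δ := by positivity
  have hδC : 4 * (C + 1) * (K + 1) * δ = min R 1 := mul_div_cancel₀ _ (by positivity)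
  refine ⟨δ, hδ, fun v hdeg hcoef q hq γ hγ0 hγ c c₀ hc S hS => ?_⟩
  obtain ⟨μ, hμ, hcR, hc₀R⟩ := exists_ne_zero_norm_smul_le hc c₀ hR
  set p := params (d := d) v (μ • c) (μ * c₀)
  have hzR := norm_sumElim_params_le hR hdeg (norm_params_le hcoef hcR hc₀R)
    (fun j => hC (.inl j)) (by nlinarith [min_le_left R 1])
    (hγ0 ▸ (pi_norm_le_iff_of_nonneg hR.le).2 hq) hγ
  have hzero (t : ℝ) : eval (Sum.elim p (γ t)) (P 0) = μ * (∑ i, c i * γ t i + c₀) := by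
    simp [P, p, eval_univAffine, Finset.mul_sum, mul_add, mul_assoc]
  refine card_le_of_isolated_zeros (f := fun k t => eval (Sum.elim p (γ t)) (P k))
    (h := fun k t => eval (Sum.elim p (γ t)) (h k)) (B := C) (fun k t ht => ?_)
    (fun t _ => by simp [hrel]) (fun k t ht => hC (.inr k) _ (hzR t ht))
    (hδC.trans_le (min_le_right R 1)) ?_
  · simpa only [P, Function.iterate_succ_apply'] using
      hasDerivAt_eval_lieDeriv (hasDerivAt_sumElim_params hdeg (hγ t ht)) (P k)
  · simpa only [hzero, mul_eq_zero, hμ, false_or] using hS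

/-- **Real meandering theorem (qualitative form).** For every `n ≥ 1` and `d`
there is `ν = ν(n,d)`, and for every `R > 0` there is `δ = δ(n,d,R) > 0`, such
that every solution `γ : (-δ,δ) → ℝⁿ` of a polynomial system `ẋ = v(x)` of
degree `≤ d` with coefficients and initial condition bounded by `R` meets any
affine hyperplane in at most `ν` isolated points. -/
theorem stmt6 (n d : ℕ) (hn : 1 ≤ n) :
    ∃ ν : ℕ, ∀ R : ℝ, 0 < R → ∃ δ : ℝ, 0 < δ ∧
      ∀ v : Fin n → MvPolynomial (Fin n) ℝ,
        (∀ i, (v i).totalDegree ≤ d) →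
        (∀ (i : Fin n) (m : (Fin n) →₀ ℕ), |(v i).coeff m| ≤ R) →
        ∀ q : Fin n → ℝ, (∀ i, |q i| ≤ R) →
        ∀ γ : ℝ → (Fin n → ℝ), γ 0 = q →
        (∀ t ∈ Set.Ioo (-δ) δ,
          HasDerivAt γ (fun i => MvPolynomial.eval (γ t) (v i)) t) →
        ∀ (c : Fin n → ℝ) (c₀ : ℝ), c ≠ 0 →
        ∀ S : Finset ℝ,
          (∀ t ∈ S, t ∈ Set.Ioo (-δ) δ ∧ (∑ i, c i * γ t i) + c₀ = 0 ∧
            ∃ ε > 0, ∀ s ∈ Set.Ioo (-δ) δ,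
              (∑ i, c i * γ s i) + c₀ = 0 → |s - t| < ε → s = t) →
          S.card ≤ ν :=
  stmt6_general n d
end

section
/- (Gabrièlov–Khovanskii tangency bound, qualitative form) For every pair of natural numbers n ≥ 1 and d there exists μ = μ(n,d) ∈ ℕ with the following property. Let v be a polynomial vector field on ℝⁿ of degree ≤ d with v(0) ≠ 0, let P ∈ ℝ[y_1,…,y_n] be a squarefree polynomial of degree ≤ d with P(0) = 0, and let γ : (−ε,ε) → ℝⁿ be a solution of ẋ = v(x) with γ(0) = 0. If the function t ↦ P(γ(t)) is not identically zero near t = 0 (i.e. the intersection of the trajectory with the hypersurface {P = 0} at the origin is isolated), then its order of vanishing at t = 0 is at most μ(n,d); that is, some derivative of P∘γ of order ≤ μ(n,d) is nonzero at t = 0. -/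
/-!
Along a trajectory, `d/dt Q(γ t) = (L Q)(γ t)` where `L = mkDerivation ℝ v` is the derivation
`X i ↦ v i`, so the `j`-th derivative of `P ∘ γ` at `0` is `(L^j P)(0)`. By Noetherianity the
ideals spanned by `P, L P, …, L^(m-1) P` stabilise, so `L` maps these generators into their span
and their values along `γ` solve a linear ODE; if every `L^j P` vanishes at `0`, uniqueness of
solutions forces `P ∘ γ = 0` near `0`. For a bound depending only on `n` and `d`, run the same
stabilisation with the coefficients of `v` and `P` replaced by indeterminates: the chain
stabilises at some `μ` in the Noetherian ring of generic coefficients, and specialising shows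
that the vanishing of `(L^j P)(0)` for `j < μ` forces it for all `j`.
-/

open MvPolynomial Set Filter Topology Matrix

theorem eventuallyEq_zero_of_hasDerivAt_clm_apply {E : Type*} [NormedAddCommGroup E]
    [NormedSpace ℝ E] {A : ℝ → E →L[ℝ] E} {u : ℝ → E} {t₀ : ℝ} (hA : ContinuousAt A t₀)
    (hu : ∀ᶠ t in 𝓝 t₀, HasDerivAt u (A t (u t)) t) (h₀ : u t₀ = 0) : u =ᶠ[𝓝 t₀] 0 := by
  have hLip : ∀ᶠ t in 𝓝 t₀, LipschitzOnWith (‖A t₀‖₊ + 1) (A t) univ := by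
    filter_upwards [hA.nnnorm.eventually (gt_mem_nhds (lt_add_one ‖A t₀‖₊))] with t ht
    exact ((A t).lipschitz.weaken ht.le).lipschitzOnWith
  refine ODE_solution_unique_of_eventually (s := fun _ => univ) hLip
    (hu.mono fun t ht => ⟨ht, mem_univ _⟩)
    (.of_forall fun t => ⟨by simp, mem_univ _⟩) h₀

theorem eventuallyEq_zero_of_hasDerivAt_mulVec {ι : Type*} [Fintype ι]
    {M : ℝ → Matrix ι ι ℝ} {u : ℝ → ι → ℝ} {t₀ : ℝ} (hM : ContinuousAt M t₀)
    (hu : ∀ᶠ t in 𝓝 t₀, HasDerivAt u (M t *ᵥ u t) t) (h₀ : u t₀ = 0) : u =ᶠ[𝓝 t₀] 0 := by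
  classical
  let toCLM : Matrix ι ι ℝ ≃ₗ[ℝ] (ι → ℝ) →L[ℝ] ι → ℝ :=
    Matrix.toLin'.trans LinearMap.toContinuousLinearMap
  exact eventuallyEq_zero_of_hasDerivAt_clm_apply (A := fun t => toCLM (M t))
    ((LinearMap.continuous_of_finiteDimensional toCLM.toLinearMap).continuousAt.comp hM) hu h₀

theorem exists_forall_mem_span_range_fin {R : Type*} [CommRing R] [IsNoetherianRing R]
    (f : ℕ → R) : ∃ m, ∀ j, f j ∈ Ideal.span (range fun k : Fin m => f k) := by
  let I : ℕ →o Ideal R := ⟨fun m => Ideal.span (range fun k : Fin m => f k), fun a b hab =>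
    Ideal.span_mono fun _ ⟨k, hk⟩ => ⟨Fin.castLE hab k, hk⟩⟩
  obtain ⟨m, hm⟩ := monotone_stabilizes_iff_noetherian.mpr inferInstance I
  refine ⟨m, fun j => ?_⟩
  rcases lt_or_ge j m with hj | hj
  · exact Ideal.subset_span ⟨⟨j, hj⟩, rfl⟩
  · exact (hm (j + 1) (by omega)).ge (Ideal.subset_span ⟨Fin.last j, rfl⟩)

section Trajectory

variable {σ : Type*} {v : σ → MvPolynomial σ ℝ} {γ : ℝ → σ → ℝ}

theorem hasDerivAt_eval_comp_of_hasDerivAt {t : ℝ}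
    (hγ : HasDerivAt γ (fun i => eval (γ t) (v i)) t) (Q : MvPolynomial σ ℝ) :
    HasDerivAt (fun s => eval (γ s) Q) (eval (γ t) (mkDerivation ℝ v Q)) t := by
  induction Q using MvPolynomial.induction_on with
  | C a => simpa using hasDerivAt_const t a
  | add Q₁ Q₂ h₁ h₂ => simp only [map_add]; exact h₁.add h₂
  | mul_X Q i h =>
    simp only [Derivation.leibniz, mkDerivation_X, smul_eq_mul, map_add, map_mul, eval_X]
    exact (h.fun_mul (hasDerivAt_pi.1 hγ i)).congr_deriv (by ring)

theorem iteratedDeriv_eval_comp_eq {t₀ : ℝ}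
    (hγ : ∀ᶠ t in 𝓝 t₀, HasDerivAt γ (fun i => eval (γ t) (v i)) t) (Q : MvPolynomial σ ℝ)
    (j : ℕ) :
    iteratedDeriv j (fun t => eval (γ t) Q) t₀ = eval (γ t₀) ((mkDerivation ℝ v)^[j] Q) := by
  suffices ∀ j, iteratedDeriv j (fun t => eval (γ t) Q)
      =ᶠ[𝓝 t₀] fun t => eval (γ t) ((mkDerivation ℝ v)^[j] Q) from (this j).eq_of_nhds
  intro j
  induction j with
  | zero => rfl
  | succ j ih =>
    rw [iteratedDeriv_succ]
    filter_upwards [ih.deriv, hγ] with t ht hγt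
    rw [ht, Function.iterate_succ_apply']
    exact (hasDerivAt_eval_comp_of_hasDerivAt hγt _).deriv

theorem eventually_eval_eq_zero_of_mkDerivation_eq_sum {ι : Type*} [Fintype ι] {t₀ : ℝ}
    (hγ : ∀ᶠ t in 𝓝 t₀, HasDerivAt γ (fun i => eval (γ t) (v i)) t)
    {g : ι → MvPolynomial σ ℝ} (c : ι → ι → MvPolynomial σ ℝ)
    (hc : ∀ k, mkDerivation ℝ v (g k) = ∑ l, c k l * g l) (h₀ : ∀ k, eval (γ t₀) (g k) = 0) :
    ∀ᶠ t in 𝓝 t₀, ∀ k, eval (γ t) (g k) = 0 := by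
  have hγc : ContinuousAt γ t₀ :=
    continuousAt_pi.2 fun i => (hasDerivAt_pi.1 hγ.self_of_nhds i).continuousAt
  have hM : ContinuousAt (fun t => Matrix.of fun k l => eval (γ t) (c k l)) t₀ :=
    continuousAt_pi.2 fun k => continuousAt_pi.2 fun l =>
      (continuous_eval (c k l)).continuousAt.comp hγc
  have hu : ∀ᶠ t in 𝓝 t₀, HasDerivAt (fun t k => eval (γ t) (g k))
      ((Matrix.of fun k l => eval (γ t) (c k l)) *ᵥ fun k => eval (γ t) (g k)) t := by
    filter_upwards [hγ] with t hγt
    refine hasDerivAt_pi.2 fun k => ?_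
    simpa [hc, Matrix.mulVec, dotProduct] using hasDerivAt_eval_comp_of_hasDerivAt hγt (g k)
  filter_upwards [eventuallyEq_zero_of_hasDerivAt_mulVec hM hu (funext h₀)] with t ht
  exact congrFun ht

theorem eventually_eval_eq_zero_of_forall_iterate_mkDerivation [Finite σ] {t₀ : ℝ}
    (hγ : ∀ᶠ t in 𝓝 t₀, HasDerivAt γ (fun i => eval (γ t) (v i)) t) {P : MvPolynomial σ ℝ}
    (h₀ : ∀ j, eval (γ t₀) ((mkDerivation ℝ v)^[j] P) = 0) :
    ∀ᶠ t in 𝓝 t₀, eval (γ t) P = 0 := by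
  obtain ⟨m, hm⟩ := exists_forall_mem_span_range_fin fun j => (mkDerivation ℝ v)^[j] P
  choose c hc using fun k : Fin m => Ideal.mem_span_range_iff_exists_fun.1 (hm (k + 1))
  have hL : ∀ k : Fin m, mkDerivation ℝ v ((mkDerivation ℝ v)^[k] P) =
      ∑ l, c k l * (mkDerivation ℝ v)^[l] P := fun k => by
    rw [hc k, Function.iterate_succ_apply']
  filter_upwards [eventually_eval_eq_zero_of_mkDerivation_eq_sum hγ c hL fun k => h₀ k]
    with t ht
  show P ∈ RingHom.ker (eval (γ t))
  exact Ideal.span_le.2 (by rintro _ ⟨k, rfl⟩; exact ht k) (hm 0)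

end Trajectory

section Generic

variable {K : Type*} [CommRing K] {σ : Type*}

theorem map_mkDerivation {L : Type*} [CommRing L] (f : K →+* L) (v : σ → MvPolynomial σ K)
    (Q : MvPolynomial σ K) :
    map f (mkDerivation K v Q) = mkDerivation L (fun i => map f (v i)) (map f Q) := by
  induction Q using MvPolynomial.induction_on with
  | C a => simp [derivation_C]
  | add Q₁ Q₂ h₁ h₂ => simp only [map_add, h₁, h₂]
  | mul_X Q i h => simp [Derivation.leibniz, mkDerivation_X, h]

theorem map_iterate_mkDerivation {L : Type*} [CommRing L] (f : K →+* L)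
    (v : σ → MvPolynomial σ K) (Q : MvPolynomial σ K) (j : ℕ) :
    map f ((mkDerivation K v)^[j] Q) = (mkDerivation L fun i => map f (v i))^[j] (map f Q) :=
  Function.Semiconj.iterate_right (map_mkDerivation f v) j Q

noncomputable def genericPoly (S : Finset (σ →₀ ℕ)) {ι : Type*} (a : ι) :
    MvPolynomial σ (MvPolynomial (ι × S) K) :=
  ∑ s : S, monomial (s : σ →₀ ℕ) (X (a, s))

theorem map_eval_genericPoly {S : Finset (σ →₀ ℕ)} {ι : Type*} {Q : ι → MvPolynomial σ K}
    (hQ : ∀ a, (Q a).support ⊆ S) (a : ι) :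
    map (eval fun p : ι × S => coeff p.2 (Q p.1)) (genericPoly S a) = Q a := by
  rw [genericPoly, map_sum]
  simp only [map_monomial, eval_X]
  rw [Finset.sum_coe_sort S fun s => monomial s (coeff s (Q a))]
  conv_rhs => rw [as_sum (Q a)]
  exact (Finset.sum_subset (hQ a) fun s _ hs => by rw [notMem_support_iff.1 hs, map_zero]).symm

theorem exists_forall_iterate_mkDerivation_eval_eq_zero [IsNoetherianRing K] [Finite σ]
    (S : Finset (σ →₀ ℕ)) :
    ∃ μ, ∀ (v : σ → MvPolynomial σ K) (P : MvPolynomial σ K) (x : σ → K),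
      (∀ i, (v i).support ⊆ S) → P.support ⊆ S →
      (∀ j < μ, eval x ((mkDerivation K v)^[j] P) = 0) →
      ∀ j, eval x ((mkDerivation K v)^[j] P) = 0 := by
  let V : σ → MvPolynomial σ (MvPolynomial (Option σ × S) K) := fun i => genericPoly S (some i)
  obtain ⟨μ, hμ⟩ :=
    exists_forall_mem_span_range_fin fun j => (mkDerivation _ V)^[j] (genericPoly S none)
  refine ⟨μ, fun v P x hv hP h₀ j => ?_⟩
  let Q : Option σ → MvPolynomial σ K := fun a => a.elim P v
  have hQ : ∀ a, (Q a).support ⊆ S := fun a => by cases a <;> simp [Q, hP, hv]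
  let ψ := (eval x).comp (map (eval fun p : Option σ × S => coeff p.2 (Q p.1)))
  have hψ : ∀ j, ψ ((mkDerivation _ V)^[j] (genericPoly S none)) =
      eval x ((mkDerivation K v)^[j] P) := fun j => by
    simp only [ψ, RingHom.comp_apply, map_iterate_mkDerivation, V, map_eval_genericPoly hQ]
    rfl
  have hker : Ideal.span (range fun k : Fin μ =>
      (mkDerivation _ V)^[k] (genericPoly S none)) ≤ RingHom.ker ψ :=
    Ideal.span_le.2 <| by rintro _ ⟨k, rfl⟩; exact (hψ k).trans (h₀ k k.2)
  exact (hψ j).symm.trans (hker (hμ j))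

end Generic

theorem stmt7_general (n d : ℕ) :
    ∃ μ : ℕ, ∀ v : Fin n → MvPolynomial (Fin n) ℝ,
      (∀ i, (v i).totalDegree ≤ d) →
      (fun i => MvPolynomial.eval (0 : Fin n → ℝ) (v i)) ≠ 0 →
      ∀ P : MvPolynomial (Fin n) ℝ, Squarefree P → P.totalDegree ≤ d →
        MvPolynomial.eval (0 : Fin n → ℝ) P = 0 →
      ∀ ε : ℝ, 0 < ε → ∀ γ : ℝ → (Fin n → ℝ), γ 0 = 0 →
        (∀ t ∈ Set.Ioo (-ε) ε,
          HasDerivAt γ (fun i => MvPolynomial.eval (γ t) (v i)) t) →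
        ¬ (∀ᶠ t in nhds (0:ℝ), MvPolynomial.eval (γ t) P = 0) →
        ∃ j ≤ μ, iteratedDeriv j (fun t => MvPolynomial.eval (γ t) P) 0 ≠ 0 := by
  have hfin := Finsupp.finite_of_degree_le (σ := Fin n) d
  have hsupp : ∀ Q : MvPolynomial (Fin n) ℝ, Q.totalDegree ≤ d → Q.support ⊆ hfin.toFinset :=
    fun Q hQ s hs => hfin.mem_toFinset.2 ((le_totalDegree hs).trans hQ)
  obtain ⟨μ, hμ⟩ := exists_forall_iterate_mkDerivation_eval_eq_zero (K := ℝ) hfin.toFinset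
  refine ⟨μ, fun v hv _ P _ hP _ ε hε γ _ hγ hne => ?_⟩
  have hγ' : ∀ᶠ t in 𝓝 0, HasDerivAt γ (fun i => eval (γ t) (v i)) t :=
    eventually_of_mem (Ioo_mem_nhds (neg_neg_of_pos hε) hε) hγ
  by_contra! hderiv
  refine hne (eventually_eval_eq_zero_of_forall_iterate_mkDerivation hγ' fun j => ?_)
  refine hμ v P (γ 0) (fun i => hsupp _ (hv i)) (hsupp P hP) (fun j hj => ?_) j
  rw [← iteratedDeriv_eval_comp_eq hγ']
  exact hderiv j hj.le

/-- **Gabrièlov–Khovanskii tangency bound (qualitative form).** For every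
`n ≥ 1`, `d` there is `μ(n,d)` bounding the order of tangency at `0` between a
trajectory of a polynomial vector field of degree `≤ d` nonvanishing at `0`
and an algebraic hypersurface `{P = 0}` of degree `≤ d` through `0`, whenever
the intersection is isolated. -/
theorem stmt7 (n d : ℕ) (hn : 1 ≤ n) :
    ∃ μ : ℕ, ∀ v : Fin n → MvPolynomial (Fin n) ℝ,
      (∀ i, (v i).totalDegree ≤ d) →
      (fun i => MvPolynomial.eval (0 : Fin n → ℝ) (v i)) ≠ 0 →
      ∀ P : MvPolynomial (Fin n) ℝ, Squarefree P → P.totalDegree ≤ d →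
        MvPolynomial.eval (0 : Fin n → ℝ) P = 0 →
      ∀ ε : ℝ, 0 < ε → ∀ γ : ℝ → (Fin n → ℝ), γ 0 = 0 →
        (∀ t ∈ Set.Ioo (-ε) ε,
          HasDerivAt γ (fun i => MvPolynomial.eval (γ t) (v i)) t) →
        ¬ (∀ᶠ t in nhds (0:ℝ), MvPolynomial.eval (γ t) P = 0) →
        ∃ j ≤ μ, iteratedDeriv j (fun t => MvPolynomial.eval (γ t) P) 0 ≠ 0 :=
  stmt7_general n d
end

section
/- (Rolle theorem in ℝⁿ, Khovanskii–Yakovenko) Let γ : [0,ℓ] → ℝⁿ be a C² curve such that γ(t) ≠ 0 and γ'(t) ≠ 0 for all t ∈ [0,ℓ]. Define the spherical projections Sγ(t) = γ(t)/‖γ(t)‖ and Sγ'(t) = γ'(t)/‖γ'(t)‖, curves on the unit sphere of ℝⁿ. Then length(Sγ) ≤ length(Sγ') − ( d(Sγ(ℓ), Sγ'(ℓ)) − d(Sγ(0), Sγ'(0)) ), where d(u,v) = arccos⟨u,v⟩ is the spherical (angular) distance between unit vectors. In particular length(Sγ) ≤ length(Sγ') + 2π always, and if γ(0) = γ(ℓ)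 and γ'(0) = γ'(ℓ) then length(Sγ) ≤ length(Sγ'). -/
/-!
Write `u = Sγ`, `v = Sγ'`, `θ t = arccos ⟪u t, v t⟫`, and let `Vᵤ t`, `Vᵥ t` be the lengths of
`u` and `v` on `[0, t]`. Differentiating `γ / ‖γ‖` gives `u' = c • (v - ⟪u, v⟫ • u)` with
`c = ‖γ'‖ / ‖γ‖ ≥ 0`: the point `u` moves along the great circle towards `v`, whereas `v` moves in
an arbitrary tangent direction. By Cauchy–Schwarz the angle between them therefore satisfies
`θ' ≤ ‖v'‖ - ‖u'‖`. At `θ ∈ {0, π}`, where `arccos` is not differentiable, `u' = 0` and the bound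
still holds for the upper right Dini derivative: at `θ = 0` compare `θ` with the chord `‖u - v‖`,
and `π` is the maximum of `θ`. Since `Vᵤ` and `Vᵥ` have right derivatives `‖u'‖` and `‖v'‖` in the
Dini sense, `Vᵤ + θ - Vᵥ` is antitone.
-/

open Set Filter Topology Real
open scoped NNReal RealInnerProductSpace

def UpperDiniLE (f : ℝ → ℝ) (x c : ℝ) : Prop :=
  ∀ r, c < r → ∀ᶠ z in 𝓝[>] x, slope f x z < r

namespace UpperDiniLE

variable {f g : ℝ → ℝ} {x c d : ℝ}

theorem mono (hf : UpperDiniLE f x c) (hcd : c ≤ d) : UpperDiniLE f x d :=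
  fun r hr => hf r (hcd.trans_lt hr)

theorem of_eventually_le (hle : ∀ᶠ z in 𝓝[>] x, slope f x z ≤ g z)
    (hg : Tendsto g (𝓝[>] x) (𝓝 c)) : UpperDiniLE f x c := fun _ hr =>
  (hle.and (hg.eventually_lt_const hr)).mono fun _ h => h.1.trans_lt h.2

theorem add (hf : UpperDiniLE f x c) (hg : UpperDiniLE g x d) :
    UpperDiniLE (fun t => f t + g t) x (c + d) := by
  intro r hr
  filter_upwards [hf (c + (r - c - d) / 2) (by linarith),
    hg (d + (r - c - d) / 2) (by linarith)] with z hfz hgz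
  have : slope (fun t => f t + g t) x z = slope f x z + slope g x z := by
    simp only [slope_def_field]; ring
  linarith

end UpperDiniLE

theorem HasDerivWithinAt.upperDiniLE {f : ℝ → ℝ} {f' x : ℝ} {s : Set ℝ}
    (hf : HasDerivWithinAt f f' s x) (hs : s ∈ 𝓝[>] x) : UpperDiniLE f x f' :=
  .of_eventually_le (.of_forall fun _ => le_rfl)
    ((hasDerivWithinAt_iff_tendsto_slope' (lt_irrefl x)).1 (hf.mono_of_mem_nhdsWithin hs))

theorem antitoneOn_of_upperDiniLE_zero {f : ℝ → ℝ} {a b : ℝ} (hf : ContinuousOn f (Icc a b))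
    (hD : ∀ x ∈ Ico a b, UpperDiniLE f x 0) : AntitoneOn f (Icc a b) := by
  intro x hx y hy hxy
  exact image_le_of_liminf_slope_right_le_deriv_boundary (hf.mono (Icc_subset_Icc hx.1 hy.2))
    (B := fun _ => f x) le_rfl continuousOn_const (fun _ _ => hasDerivWithinAt_const _ _ _)
    (fun t ht r hr => (hD t ⟨hx.1.trans ht.1, ht.2.trans_le hy.2⟩ r hr).frequently)
    ⟨hxy, le_rfl⟩

section Variation

variable {E : Type*}

theorem dist_le_variationOnFromTo [PseudoMetricSpace E] {f : ℝ → E} {s : Set ℝ}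
    (hf : LocallyBoundedVariationOn f s) {x z : ℝ} (hx : x ∈ s) (hz : z ∈ s) (hxz : x ≤ z) :
    dist (f x) (f z) ≤ variationOnFromTo f s x z := by
  rw [variationOnFromTo.eq_of_le f s hxz, dist_edist]
  exact ENNReal.toReal_mono (hf x z hx hz)
    (eVariationOn.edist_le f ⟨hx, le_rfl, hxz⟩ ⟨hz, hxz, le_rfl⟩)

theorem variationOnFromTo_le_mul_of_lipschitzOnWith [PseudoEMetricSpace E] {f : ℝ → E}
    {s : Set ℝ} {K : ℝ≥0} {x z : ℝ} (hf : LipschitzOnWith K f (s ∩ Icc x z)) (hx : x ∈ s)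
    (hz : z ∈ s) (hxz : x ≤ z) : variationOnFromTo f s x z ≤ K * (z - x) := by
  rw [variationOnFromTo.eq_of_le f s hxz]
  refine ENNReal.toReal_le_of_le_ofReal (mul_nonneg K.coe_nonneg (sub_nonneg.2 hxz)) ?_
  calc eVariationOn f (s ∩ Icc x z) = eVariationOn (f ∘ id) (s ∩ Icc x z) := rfl
    _ ≤ K * eVariationOn id (s ∩ Icc x z) := hf.comp_eVariationOn_le (mapsTo_id _)
    _ ≤ K * ENNReal.ofReal (z - x) := by gcongr; exact (monotoneOn_id.eVariationOn_eq hx hz).le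
    _ = ENNReal.ofReal (K * (z - x)) := by
      rw [ENNReal.ofReal_mul K.coe_nonneg, ENNReal.ofReal_coe_nnreal]

theorem LipschitzOnWith.variationOnFromTo [PseudoEMetricSpace E] {f : ℝ → E} {s : Set ℝ}
    {K : ℝ≥0} (hf : LipschitzOnWith K f s) {a : ℝ} (ha : a ∈ s) :
    LipschitzOnWith K (variationOnFromTo f s a) s := by
  refine LipschitzOnWith.of_dist_le_mul fun x hx z hz => ?_
  wlog hxz : x ≤ z generalizing x z
  · rw [dist_comm, dist_comm x]; exact this z hz x hx (le_of_not_ge hxz)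
  rw [Real.dist_eq, Real.dist_eq, variationOnFromTo.sub_right hf.locallyBoundedVariationOn ha hx hz,
    variationOnFromTo.eq_neg_swap, abs_neg, abs_sub_comm,
    abs_of_nonneg (variationOnFromTo.nonneg_of_le f s hxz), abs_of_nonneg (sub_nonneg.2 hxz)]
  exact variationOnFromTo_le_mul_of_lipschitzOnWith (hf.mono inter_subset_left) hx hz hxz

theorem norm_slope_of_lt [NormedAddCommGroup E] [NormedSpace ℝ E] (f : ℝ → E) {x z : ℝ}
    (hxz : x < z) : ‖slope f x z‖ = ‖f z - f x‖ / (z - x) := by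
  rw [slope_def_module, norm_smul, norm_inv, Real.norm_of_nonneg (sub_pos.2 hxz).le, inv_mul_eq_div]

theorem upperDiniLE_neg_variationOnFromTo [NormedAddCommGroup E] [NormedSpace ℝ E] {f : ℝ → E}
    {f' : E} {s : Set ℝ} {a x : ℝ} (hf : LocallyBoundedVariationOn f s) (ha : a ∈ s)
    (hx : x ∈ s) (hs : s ∈ 𝓝[>] x) (hder : HasDerivWithinAt f f' s x) :
    UpperDiniLE (fun t => -variationOnFromTo f s a t) x (-‖f'‖) := by
  refine .of_eventually_le (g := fun z => -‖slope f x z‖) ?_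
    ((hasDerivWithinAt_iff_tendsto_slope' (lt_irrefl x)).1
      (hder.mono_of_mem_nhdsWithin hs)).norm.neg
  filter_upwards [hs, self_mem_nhdsWithin] with z hz (hxz : x < z)
  calc slope (fun t => -variationOnFromTo f s a t) x z
      = -(variationOnFromTo f s x z / (z - x)) := by
        rw [slope_def_field, ← variationOnFromTo.sub_right hf ha hz hx]; ring
    _ ≤ -(‖f z - f x‖ / (z - x)) := by
        gcongr
        rw [← dist_eq_norm, dist_comm]
        exact dist_le_variationOnFromTo hf hx hz hxz.le
    _ = -‖slope f x z‖ := by rw [norm_slope_of_lt f hxz]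

variable [NormedAddCommGroup E] [NormedSpace ℝ E] {f f' : ℝ → E} {a b : ℝ}

theorem exists_lipschitzOnWith_of_hasDerivWithinAt
    (hf : ∀ t ∈ Icc a b, HasDerivWithinAt f (f' t) (Icc a b) t)
    (hf' : ContinuousOn f' (Icc a b)) : ∃ K, LipschitzOnWith K f (Icc a b) := by
  obtain ⟨C, hC⟩ := isCompact_Icc.exists_bound_of_continuousOn hf'
  refine ⟨C.toNNReal, (convex_Icc a b).lipschitzOnWith_of_nnnorm_hasDerivWithin_le hf
    fun t ht => ?_⟩
  rw [← NNReal.coe_le_coe, coe_nnnorm]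
  exact (hC t ht).trans (le_coe_toNNReal C)

theorem upperDiniLE_variationOnFromTo
    (hf : ∀ t ∈ Icc a b, HasDerivWithinAt f (f' t) (Icc a b) t)
    (hf' : ContinuousOn f' (Icc a b)) {x : ℝ} (hx : x ∈ Ico a b) :
    UpperDiniLE (variationOnFromTo f (Icc a b) a) x ‖f' x‖ := by
  intro r hr
  obtain ⟨K₀, hK₀⟩ := exists_lipschitzOnWith_of_hasDerivWithinAt hf hf'
  obtain ⟨K, hK, hKr⟩ := exists_between hr
  have hxI : x ∈ Icc a b := Ico_subset_Icc_self hx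
  have hnear : ∀ᶠ t in 𝓝[≥] x, ‖f' t‖ < K :=
    nhdsWithin_le_of_mem (Icc_mem_nhdsGE_of_mem hx) ((hf' x hxI).norm.eventually_lt_const hK)
  obtain ⟨u, hxu, hu⟩ := mem_nhdsGE_iff_exists_Ico_subset.1 hnear
  filter_upwards [Ioo_mem_nhdsGT hxu, Icc_mem_nhdsGT_of_mem hx] with z hz hzI
  have hsub : Icc x z ⊆ Icc a b := Icc_subset_Icc hxI.1 hzI.2
  have hlip : LipschitzOnWith K.toNNReal f (Icc a b ∩ Icc x z) := by
    rw [inter_eq_right.2 hsub]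
    refine (convex_Icc x z).lipschitzOnWith_of_nnnorm_hasDerivWithin_le
      (fun t ht => (hf t (hsub ht)).mono hsub) fun t ht => ?_
    rw [← NNReal.coe_le_coe, coe_nnnorm, coe_toNNReal _ ((norm_nonneg _).trans hK.le)]
    exact (hu ⟨ht.1, ht.2.trans_lt hz.2⟩).le
  have hzx : 0 < z - x := sub_pos.2 hz.1
  calc slope (variationOnFromTo f (Icc a b) a) x z
      = variationOnFromTo f (Icc a b) x z / (z - x) := by
        rw [slope_def_field, variationOnFromTo.sub_right
          hK₀.locallyBoundedVariationOn ⟨le_rfl, hxI.1.trans hxI.2⟩ hzI hxI]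
    _ ≤ K := by
        rw [div_le_iff₀ hzx]
        simpa [coe_toNNReal _ ((norm_nonneg _).trans hK.le)] using
          variationOnFromTo_le_mul_of_lipschitzOnWith hlip hxI hzI hz.1.le
    _ < r := hKr

end Variation

section Sphere

variable {E : Type*} [NormedAddCommGroup E] [InnerProductSpace ℝ E]

theorem norm_sub_inner_smul_sq {u v : E} (hu : ‖u‖ = 1) (hv : ‖v‖ = 1) :
    ‖v - ⟪u, v⟫ • u‖ ^ 2 = 1 - ⟪u, v⟫ ^ 2 := by
  rw [norm_sub_sq_real, norm_smul, inner_smul_right, real_inner_comm, hu, hv, Real.norm_eq_abs,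
    mul_pow, sq_abs]
  ring

theorem norm_sub_eq_two_mul_sin {a b : E} (ha : ‖a‖ = 1) (hb : ‖b‖ = 1) :
    ‖a - b‖ = 2 * sin (arccos ⟪a, b⟫ / 2) := by
  have hι : |⟪a, b⟫| ≤ 1 := by simpa [ha, hb] using abs_real_inner_le_norm a b
  set θ := arccos ⟪a, b⟫
  have hcos : cos (2 * (θ / 2)) = ⟪a, b⟫ := by
    rw [mul_div_cancel₀ _ two_ne_zero, cos_arccos (neg_le_of_abs_le hι) (le_of_abs_le hι)]
  have hsin : 0 ≤ sin (θ / 2) :=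
    sin_nonneg_of_nonneg_of_le_pi (div_nonneg (arccos_nonneg _) zero_le_two)
      (by linarith [arccos_le_pi ⟪a, b⟫, pi_pos])
  refine (pow_left_inj₀ (norm_nonneg _) (mul_nonneg zero_le_two hsin) two_ne_zero).1 ?_
  rw [norm_sub_sq_real, ha, hb, ← hcos, cos_two_mul, cos_sq']
  ring

theorem arccos_inner_sub_cube_le_norm_sub {a b : E} (ha : ‖a‖ = 1) (hb : ‖b‖ = 1) :
    arccos ⟪a, b⟫ - arccos ⟪a, b⟫ ^ 3 / 24 ≤ ‖a - b‖ := by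
  rw [norm_sub_eq_two_mul_sin ha hb]
  nlinarith [sin_ge_sub_cube (div_nonneg (arccos_nonneg ⟪a, b⟫) zero_le_two)]

theorem neg_inner_add_inner_le_sqrt_mul {u v u' v' : E} {c : ℝ} (hu : ‖u‖ = 1) (hv : ‖v‖ = 1)
    (hv' : ⟪v, v'⟫ = 0) (hc : 0 ≤ c) (hu' : u' = c • (v - ⟪u, v⟫ • u)) :
    -(⟪u, v'⟫ + ⟪u', v⟫) ≤ √(1 - ⟪u, v⟫ ^ 2) * (‖v'‖ - ‖u'‖) := by
  have hσ : ‖v - ⟪u, v⟫ • u‖ = √(1 - ⟪u, v⟫ ^ 2) := by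
    rw [← norm_sub_inner_smul_sq hu hv, sqrt_sq (norm_nonneg _)]
  have hσ' : ‖u - ⟪u, v⟫ • v‖ = √(1 - ⟪u, v⟫ ^ 2) := by
    rw [← real_inner_comm u v, ← norm_sub_inner_smul_sq hv hu, sqrt_sq (norm_nonneg _)]
  have hw : ⟪v - ⟪u, v⟫ • u, v⟫ = ‖v - ⟪u, v⟫ • u‖ ^ 2 := by
    rw [norm_sub_inner_smul_sq hu hv, inner_sub_left, real_inner_smul_left,
      real_inner_self_eq_norm_sq, hv, real_inner_comm]
    ring
  have hu'v : ⟪u', v⟫ = √(1 - ⟪u, v⟫ ^ 2) * ‖u'‖ := by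
    rw [hu', real_inner_smul_left, hw, norm_smul, Real.norm_of_nonneg hc, hσ]
    ring
  have huv' : -(√(1 - ⟪u, v⟫ ^ 2) * ‖v'‖) ≤ ⟪u, v'⟫ := by
    have he : ⟪u - ⟪u, v⟫ • v, v'⟫ = ⟪u, v'⟫ := by
      rw [inner_sub_left, real_inner_smul_left, hv', mul_zero, sub_zero]
    rw [← hσ', ← he]
    linarith [abs_real_inner_le_norm (u - ⟪u, v⟫ • v) v', neg_abs_le ⟪u - ⟪u, v⟫ • v, v'⟫]
  linarith

theorem HasDerivWithinAt.inner_eq_zero_of_norm_eq_one {v : ℝ → E} {v' : E} {s : Set ℝ} {x : ℝ}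
    (hv : HasDerivWithinAt v v' s x) (hxs : x ∈ s) (hs : s ∈ 𝓝[>] x)
    (h1 : ∀ t ∈ s, ‖v t‖ = 1) : ⟪v x, v'⟫ = 0 := by
  have hconst : HasDerivWithinAt (‖v ·‖ ^ 2) 0 s x :=
    (hasDerivWithinAt_const x s 1).congr (fun t ht => by simp [h1 t ht]) (by simp [h1 x hxs])
  have := ((uniqueDiffWithinAt_Ioi x).mono_nhds (nhdsWithin_le_of_mem hs)).eq_deriv _
    hv.norm_sq hconst
  linarith

theorem upperDiniLE_arccos_inner_of_eq {u v : ℝ → E} {u' v' : E} {s : Set ℝ} {x : ℝ}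
    (hxs : x ∈ s) (hs : s ∈ 𝓝[>] x) (hu1 : ∀ t ∈ s, ‖u t‖ = 1) (hv1 : ∀ t ∈ s, ‖v t‖ = 1)
    (hu : HasDerivWithinAt u u' s x) (hv : HasDerivWithinAt v v' s x) (huv : u x = v x) :
    UpperDiniLE (fun t => arccos ⟪u t, v t⟫) x (‖u'‖ + ‖v'‖) := by
  set θ : ℝ → ℝ := fun t => arccos ⟪u t, v t⟫
  have hθx : θ x = 0 := by
    simp only [θ, ← huv, real_inner_self_eq_norm_sq, hu1 x hxs, one_pow, arccos_one]
  have hθ : Tendsto θ (𝓝[>] x) (𝓝 0) := by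
    rw [← hθx]
    exact (continuous_arccos.tendsto _).comp
      ((hu.continuousWithinAt.inner hv.continuousWithinAt).tendsto.mono_left
        (nhdsWithin_le_of_mem hs))
  have hslope {w : ℝ → E} {w' : E} (hw : HasDerivWithinAt w w' s x) :
      Tendsto (fun z => ‖slope w x z‖) (𝓝[>] x) (𝓝 ‖w'‖) :=
    ((hasDerivWithinAt_iff_tendsto_slope' (lt_irrefl x)).1 (hw.mono_of_mem_nhdsWithin hs)).norm
  refine .of_eventually_le (g := fun z => (‖slope u x z‖ + ‖slope v x z‖) / (1 - θ z ^ 2 / 24))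
    ?_ ?_
  · filter_upwards [hs, self_mem_nhdsWithin] with z hz (hxz : x < z)
    have hchord := arccos_inner_sub_cube_le_norm_sub (hu1 z hz) (hv1 z hz)
    have htri : ‖u z - v z‖ ≤ ‖u z - u x‖ + ‖v z - v x‖ := by
      rw [huv]
      simpa using norm_sub_le (u z - v x) (v z - v x)
    have hθ24 : 0 < 1 - θ z ^ 2 / 24 := by
      nlinarith [arccos_nonneg ⟪u z, v z⟫, arccos_le_pi ⟪u z, v z⟫, pi_lt_four]
    rw [slope_def_field, hθx, sub_zero, norm_slope_of_lt u hxz, norm_slope_of_lt v hxz,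
      le_div_iff₀ hθ24, ← add_div, div_mul_eq_mul_div,
      div_le_div_iff_of_pos_right (sub_pos.2 hxz)]
    simp only [θ] at hθ24 ⊢
    nlinarith
  · have hlim := ((hslope hu).add (hslope hv)).div
      (tendsto_const_nhds.sub ((hθ.pow 2).div_const 24)) (show (1 : ℝ) - 0 ^ 2 / 24 ≠ 0 by norm_num)
    rwa [show (1 : ℝ) - 0 ^ 2 / 24 = 1 by norm_num, div_one] at hlim

theorem upperDiniLE_arccos_inner {u v : ℝ → E} {u' v' : E} {s : Set ℝ} {x : ℝ}
    (hxs : x ∈ s) (hs : s ∈ 𝓝[>] x) (hu1 : ∀ t ∈ s, ‖u t‖ = 1) (hv1 : ∀ t ∈ s, ‖v t‖ = 1)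
    (hu : HasDerivWithinAt u u' s x) (hv : HasDerivWithinAt v v' s x) {c : ℝ} (hc : 0 ≤ c)
    (hu' : u' = c • (v x - ⟪u x, v x⟫ • u x)) :
    UpperDiniLE (fun t => arccos ⟪u t, v t⟫) x (‖v'‖ - ‖u'‖) := by
  have hsq := norm_sub_inner_smul_sq (hu1 x hxs) (hv1 x hxs)
  have hι : |⟪u x, v x⟫| ≤ 1 := by
    simpa [hu1 x hxs, hv1 x hxs] using abs_real_inner_le_norm (u x) (v x)
  rcases eq_or_ne ⟪u x, v x⟫ 1 with h1 | h1
  · have hvu : v x - ⟪u x, v x⟫ • u x = 0 := by simpa [h1] using hsq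
    have hu'0 : u' = 0 := by rw [hu', hvu, smul_zero]
    refine (upperDiniLE_arccos_inner_of_eq hxs hs hu1 hv1 hu hv ?_).mono (by simp [hu'0])
    rw [h1, one_smul, sub_eq_zero] at hvu
    exact hvu.symm
  rcases eq_or_ne ⟪u x, v x⟫ (-1) with h2 | h2
  · have hvu : v x - ⟪u x, v x⟫ • u x = 0 := by simpa [h2] using hsq
    have hu'0 : u' = 0 := by rw [hu', hvu, smul_zero]
    refine (UpperDiniLE.of_eventually_le (g := fun _ => 0) ?_ tendsto_const_nhds).mono
      (by simp [hu'0])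
    filter_upwards [self_mem_nhdsWithin] with z (hxz : x < z)
    rw [slope_def_field, h2, arccos_neg_one]
    exact div_nonpos_of_nonpos_of_nonneg (by linarith [arccos_le_pi ⟪u z, v z⟫])
      (sub_pos.2 hxz).le
  have hσ : 0 < √(1 - ⟪u x, v x⟫ ^ 2) := by
    have := lt_of_le_of_ne (le_of_abs_le hι) h1
    have := lt_of_le_of_ne (neg_le_of_abs_le hι) h2.symm
    exact sqrt_pos.2 (by nlinarith)
  have key := neg_inner_add_inner_le_sqrt_mul (hu1 x hxs) (hv1 x hxs)
    (hv.inner_eq_zero_of_norm_eq_one hxs hs hv1) hc hu'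
  refine (((hasDerivAt_arccos h2 h1).comp_hasDerivWithinAt x (hu.inner ℝ hv)).upperDiniLE hs).mono ?_
  rw [neg_mul, one_div, ← mul_neg, inv_mul_le_iff₀ hσ]
  linarith

theorem eVariationOn_add_arccos_inner_le {u v u' v' : ℝ → E} {a b : ℝ} (hab : a ≤ b)
    (hu1 : ∀ t ∈ Icc a b, ‖u t‖ = 1) (hv1 : ∀ t ∈ Icc a b, ‖v t‖ = 1)
    (hu : ∀ t ∈ Icc a b, HasDerivWithinAt u (u' t) (Icc a b) t)
    (hv : ∀ t ∈ Icc a b, HasDerivWithinAt v (v' t) (Icc a b) t)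
    (hu' : ContinuousOn u' (Icc a b)) (hv' : ContinuousOn v' (Icc a b))
    (hdir : ∀ t ∈ Icc a b, ∃ c : ℝ, 0 ≤ c ∧ u' t = c • (v t - ⟪u t, v t⟫ • u t)) :
    eVariationOn u (Icc a b) + ENNReal.ofReal (arccos ⟪u b, v b⟫)
      ≤ eVariationOn v (Icc a b) + ENNReal.ofReal (arccos ⟪u a, v a⟫) := by
  have ha : a ∈ Icc a b := left_mem_Icc.2 hab
  have hb : b ∈ Icc a b := right_mem_Icc.2 hab
  obtain ⟨Ku, hKu⟩ := exists_lipschitzOnWith_of_hasDerivWithinAt hu hu'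
  obtain ⟨Kv, hKv⟩ := exists_lipschitzOnWith_of_hasDerivWithinAt hv hv'
  set Vu := variationOnFromTo u (Icc a b) a
  set Vv := variationOnFromTo v (Icc a b) a
  set θ : ℝ → ℝ := fun t => arccos ⟪u t, v t⟫
  have hθ : ContinuousOn θ (Icc a b) := continuous_arccos.comp_continuousOn
    (hKu.continuousOn.inner hKv.continuousOn)
  have hanti : AntitoneOn (fun t => Vu t + θ t + -Vv t) (Icc a b) := by
    refine antitoneOn_of_upperDiniLE_zero
      (((hKu.variationOnFromTo ha).continuousOn.add hθ).add
        (hKv.variationOnFromTo ha).continuousOn.neg) fun x hx => ?_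
    have hxI := Ico_subset_Icc_self hx
    obtain ⟨c, hc, hcu⟩ := hdir x hxI
    refine (((upperDiniLE_variationOnFromTo hu hu' hx).add
      (upperDiniLE_arccos_inner hxI (Icc_mem_nhdsGT_of_mem hx) hu1 hv1 (hu x hxI) (hv x hxI)
        hc hcu)).add
      (upperDiniLE_neg_variationOnFromTo hKv.locallyBoundedVariationOn ha hxI
        (Icc_mem_nhdsGT_of_mem hx) (hv x hxI))).mono (le_of_eq (by ring))
  have key := hanti ha hb hab
  simp only [Vu, Vv, variationOnFromTo.self, zero_add, neg_zero, add_zero] at key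
  have hfin {w : ℝ → E} {K} (hw : LipschitzOnWith K w (Icc a b)) :
      eVariationOn w (Icc a b) = ENNReal.ofReal (variationOnFromTo w (Icc a b) a b) := by
    rw [variationOnFromTo.eq_of_le _ _ hab, inter_self, ENNReal.ofReal_toReal]
    exact (by simpa using hw.locallyBoundedVariationOn a b ha hb : BoundedVariationOn w (Icc a b))
  rw [hfin hKu, hfin hKv, ← ENNReal.ofReal_add (variationOnFromTo.nonneg_of_le _ _ hab)
    (arccos_nonneg _), ← ENNReal.ofReal_add (variationOnFromTo.nonneg_of_le _ _ hab)
    (arccos_nonneg _)]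
  exact ENNReal.ofReal_le_ofReal (by linarith)

theorem ContDiffOn.inv_norm_smul {G : Type*} [NormedAddCommGroup G] [NormedSpace ℝ G]
    {n : WithTop ℕ∞} {f : G → E} {s : Set G} (hf : ContDiffOn ℝ n f s)
    (h0 : ∀ x ∈ s, f x ≠ 0) : ContDiffOn ℝ n (fun t => ‖f t‖⁻¹ • f t) s :=
  ((hf.norm ℝ h0).inv fun x hx => norm_ne_zero_iff.2 (h0 x hx)).smul hf

theorem HasDerivWithinAt.inv_norm_smul {f : ℝ → E} {f' : E} {s : Set ℝ} {x : ℝ}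
    (hf : HasDerivWithinAt f f' s x) (h0 : f x ≠ 0) (h0' : f' ≠ 0) :
    HasDerivWithinAt (fun t => ‖f t‖⁻¹ • f t)
      ((‖f x‖⁻¹ * ‖f'‖) • (‖f'‖⁻¹ • f' - ⟪‖f x‖⁻¹ • f x, ‖f'‖⁻¹ • f'⟫ • (‖f x‖⁻¹ • f x))) s x := by
  have hn : ‖f x‖ ≠ 0 := norm_ne_zero_iff.2 h0
  have hn' : ‖f'‖ ≠ 0 := norm_ne_zero_iff.2 h0'
  have hnorm : HasDerivWithinAt (fun t => ‖f t‖) (⟪f x, f'⟫ / ‖f x‖) s x := by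
    refine ((hasDerivAt_sqrt (pow_ne_zero 2 hn)).comp_hasDerivWithinAt x hf.norm_sq).congr
      (fun t _ => (sqrt_sq (norm_nonneg _)).symm) (sqrt_sq (norm_nonneg _)).symm |>.congr_deriv ?_
    rw [sqrt_sq (norm_nonneg _)]
    field_simp
  convert (hnorm.inv hn).smul hf using 1
  · rfl
  rw [real_inner_smul_left, real_inner_smul_right, Pi.inv_apply]
  match_scalars <;> field_simp

end Sphere

/-- **Rolle theorem in ℝⁿ (Khovanskii–Yakovenko).** For a C² curve `γ` on
`[0,ℓ]` avoiding the origin and with nonvanishing velocity,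
`length(Sγ) ≤ length(Sγ') − (d(Sγ(ℓ),Sγ'(ℓ)) − d(Sγ(0),Sγ'(0)))`, stated
additively in `ℝ≥0∞`; in particular `length(Sγ) ≤ length(Sγ') + 2π`, and for
closed curves `length(Sγ) ≤ length(Sγ')`.  Here `Sc = c/‖c‖` is the spherical
projection, length is total variation, and `d(u,v) = arccos⟨u,v⟩`. -/
theorem stmt8 (n : ℕ) (ℓ : ℝ) (hℓ : 0 < ℓ)
    (γ : ℝ → EuclideanSpace ℝ (Fin n))
    (hγ : ContDiffOn ℝ 2 γ (Set.Icc 0 ℓ))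
    (hne : ∀ t ∈ Set.Icc 0 ℓ, γ t ≠ 0)
    (hne' : ∀ t ∈ Set.Icc 0 ℓ, derivWithin γ (Set.Icc 0 ℓ) t ≠ 0) :
    let γ' : ℝ → EuclideanSpace ℝ (Fin n) := derivWithin γ (Set.Icc 0 ℓ)
    let Sγ : ℝ → EuclideanSpace ℝ (Fin n) := fun t => ‖γ t‖⁻¹ • γ t
    let Sγ' : ℝ → EuclideanSpace ℝ (Fin n) := fun t => ‖γ' t‖⁻¹ • γ' t
    let d : EuclideanSpace ℝ (Fin n) → EuclideanSpace ℝ (Fin n) → ℝ :=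
      fun u v => Real.arccos (@inner ℝ _ _ u v)
    (eVariationOn Sγ (Set.Icc 0 ℓ) + ENNReal.ofReal (d (Sγ ℓ) (Sγ' ℓ))
        ≤ eVariationOn Sγ' (Set.Icc 0 ℓ) + ENNReal.ofReal (d (Sγ 0) (Sγ' 0)))
    ∧ (eVariationOn Sγ (Set.Icc 0 ℓ)
        ≤ eVariationOn Sγ' (Set.Icc 0 ℓ) + ENNReal.ofReal (2 * Real.pi))
    ∧ (γ 0 = γ ℓ → γ' 0 = γ' ℓ →
        eVariationOn Sγ (Set.Icc 0 ℓ) ≤ eVariationOn Sγ' (Set.Icc 0 ℓ)) := by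
  intro γ' Sγ Sγ' d
  have hUD : UniqueDiffOn ℝ (Icc 0 ℓ) := uniqueDiffOn_Icc hℓ
  have hγ₁ : ContDiffOn ℝ 1 γ (Icc 0 ℓ) := hγ.of_le (by norm_num)
  have hγ'₁ : ContDiffOn ℝ 1 γ' (Icc 0 ℓ) := hγ.derivWithin hUD (by norm_num)
  have hS := hγ₁.inv_norm_smul hne
  have hS' := hγ'₁.inv_norm_smul hne'
  have hderiv {w : ℝ → EuclideanSpace ℝ (Fin n)} (hw : ContDiffOn ℝ 1 w (Icc 0 ℓ)) :
      ∀ t ∈ Icc 0 ℓ, HasDerivWithinAt w (derivWithin w (Icc 0 ℓ) t) (Icc 0 ℓ) t :=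
    fun t ht => (hw.differentiableOn one_ne_zero t ht).hasDerivWithinAt
  have hrolle : eVariationOn Sγ (Icc 0 ℓ) + ENNReal.ofReal (d (Sγ ℓ) (Sγ' ℓ))
      ≤ eVariationOn Sγ' (Icc 0 ℓ) + ENNReal.ofReal (d (Sγ 0) (Sγ' 0)) :=
    eVariationOn_add_arccos_inner_le hℓ.le (fun t ht => norm_smul_inv_norm (hne t ht))
      (fun t ht => norm_smul_inv_norm (hne' t ht)) (hderiv hS) (hderiv hS')
      (hS.continuousOn_derivWithin hUD le_rfl) (hS'.continuousOn_derivWithin hUD le_rfl)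
      fun t ht => ⟨_, by positivity,
        ((hderiv hγ₁ t ht).inv_norm_smul (hne t ht) (hne' t ht)).derivWithin (hUD t ht)⟩
  refine ⟨hrolle, ?_, fun h0 h0' => ?_⟩
  · calc eVariationOn Sγ (Icc 0 ℓ)
        ≤ eVariationOn Sγ (Icc 0 ℓ) + ENNReal.ofReal (d (Sγ ℓ) (Sγ' ℓ)) := le_self_add
      _ ≤ eVariationOn Sγ' (Icc 0 ℓ) + ENNReal.ofReal (d (Sγ 0) (Sγ' 0)) := hrolle
      _ ≤ eVariationOn Sγ' (Icc 0 ℓ) + ENNReal.ofReal (2 * π) := by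
        gcongr
        linarith [arccos_le_pi (inner ℝ (Sγ 0) (Sγ' 0)), pi_pos]
  · have hd : d (Sγ ℓ) (Sγ' ℓ) = d (Sγ 0) (Sγ' 0) := by simp only [Sγ, Sγ', h0, h0']
    rw [hd] at hrolle
    exact ENNReal.le_of_add_le_add_right ENNReal.ofReal_ne_top hrolle
end

section
/- Let U ⊆ ℂ be a bounded convex open set of diameter ℓ and let f be holomorphic on U and continuous on the closure of U, with f not identically zero. If f has at least n zeros in U counted with multiplicities, then for every k = 0, 1, …, n−1, sup_{z∈U} |f^{(n−k)}(z)| ≤ sup_{z∈U} |f^{(n)}(z)| · ℓ^k / k!. -/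
/-!
Over `ℂ` there is no Rolle theorem, so instead of passing zeros from `f` to `f'` we divide them
out. If `f` vanishes at `a`, then `f = (z - a) • g` with `g = dslope f a`, and Leibniz' rule
`f⁽ʲ⁾ = (z - a) g⁽ʲ⁾ + j g⁽ʲ⁻¹⁾` shows that `g` keeps the remaining zeros. For `f` with `n`
zeros the same rule says that `h = g⁽ⁿ⁻¹⁾` solves `(z - a) h' + n h = f⁽ⁿ⁾`, and since
`t ↦ tⁿ h(a + t (z - a))` has derivative `tⁿ⁻¹ f⁽ⁿ⁾(a + t (z - a))`, convexity gives
`‖g⁽ⁿ⁻¹⁾‖ ≤ C / n`. By induction on the number of zeros, `‖g⁽ⁿ⁻¹⁻ⁱ⁾‖ ≤ C ℓ^i / (n i!)` for all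
`i ≤ n - 1`, and Leibniz' rule with `‖z - a‖ ≤ ℓ` gives
`‖f⁽ⁿ⁻ᵏ⁾‖ ≤ ℓ C ℓ^(k-1) / (n (k-1)!) + (n - k) C ℓ^k / (n k!) = C ℓ^k / k!`.
The bound also holds for `k = n`, and the induction needs it.
-/

open Set

section

variable {E : Type*} [NormedAddCommGroup E] [NormedSpace ℂ E]

theorem norm_le_div_of_norm_sub_smul_deriv_add_smul_le {U : Set ℂ} (hU : Convex ℝ U) {a : ℂ}
    (ha : a ∈ U) {h h' : ℂ → E} (hh : ∀ z ∈ U, HasDerivAt h (h' z) z) {m : ℕ} (hm : 0 < m)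
    {C : ℝ} (hC : ∀ z ∈ U, ‖(z - a) • h' z + (m : ℂ) • h z‖ ≤ C) {z : ℂ} (hz : z ∈ U) :
    ‖h z‖ ≤ C / m := by
  set γ : ℂ → ℂ := fun u => a + u * (z - a)
  have hγU : ∀ t ∈ Icc (0 : ℝ) 1, γ t ∈ U := fun t ht => by
    simpa only [γ, Complex.real_smul] using hU.add_smul_sub_mem ha hz ht
  have hφ : ∀ t ∈ Icc (0 : ℝ) 1, HasDerivAt (fun t : ℝ => ((t : ℂ) ^ m) • h (γ t))
      (((t : ℂ) ^ (m - 1)) • ((γ t - a) • h' (γ t) + (m : ℂ) • h (γ t))) t := by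
    intro t ht
    have hγ : HasDerivAt γ (z - a) (t : ℂ) := by
      have := ((hasDerivAt_id (t : ℂ)).mul_const (z - a)).const_add a
      simpa only [id, one_mul] using this
    refine (((hasDerivAt_pow m (t : ℂ)).smul ((hh _ (hγU t ht)).scomp (t : ℂ) hγ)).scomp t
      Complex.ofRealCLM.hasDerivAt).congr_deriv ?_
    obtain ⟨k, rfl⟩ : ∃ k, m = k + 1 := ⟨m - 1, by omega⟩
    simp only [Complex.ofRealCLM_apply, Complex.ofReal_one, Function.comp_apply,
      Nat.add_sub_cancel, γ, add_sub_cancel_left, smul_add, smul_smul]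
    congr 2 <;> push_cast <;> ring
  have hB : ∀ t : ℝ, HasDerivAt (fun t : ℝ => C * t ^ m / m) (C * t ^ (m - 1)) t := fun t => by
    refine (((hasDerivAt_pow m t).const_mul C).div_const (m : ℝ)).congr_deriv ?_
    have : (m : ℝ) ≠ 0 := by positivity
    rw [mul_left_comm, mul_div_cancel_left₀ _ this]
  have key := image_norm_le_of_norm_deriv_right_le_deriv_boundary
    (fun t ht => (hφ t ht).continuousAt.continuousWithinAt)
    (fun t ht => (hφ t (Ico_subset_Icc_self ht)).hasDerivWithinAt)
    (by simp [hm.ne']) hB ?_ (right_mem_Icc.mpr zero_le_one)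
  · simpa [γ] using key
  · intro t ht
    rw [norm_smul, norm_pow, Complex.norm_real, Real.norm_of_nonneg ht.1, mul_comm C]
    exact mul_le_mul_of_nonneg_left (hC _ (hγU t (Ico_subset_Icc_self ht))) (by positivity [ht.1])

def HasZerosWithMultiplicity (f : ℂ → E) (Z : Multiset ℂ) : Prop :=
  ∀ a, ∀ j < Z.count a, iteratedDeriv j f a = 0

theorem hasZerosWithMultiplicity_sum_replicate {ι : Type*} [Fintype ι] {f : ℂ → E} {z : ι → ℂ}
    (hz : Function.Injective z) {μ : ι → ℕ} (hf : ∀ i, ∀ j < μ i, iteratedDeriv j f (z i) = 0) :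
    HasZerosWithMultiplicity f (∑ i, Multiset.replicate (μ i) (z i)) := by
  classical
  intro b j hj
  simp only [Multiset.count_sum', Multiset.count_replicate] at hj
  obtain ⟨i, -, hi⟩ := Finset.exists_ne_zero_of_sum_ne_zero hj.ne_bot
  obtain rfl : z i = b := by
    by_contra h
    simp [h] at hi
  simp only [hz.eq_iff, Finset.sum_ite_eq', Finset.mem_univ, if_true] at hj
  exact hf i j hj

variable [CompleteSpace E]

theorem DifferentiableOn.hasDerivAt_iteratedDeriv {U : Set ℂ} (hU : IsOpen U) {f : ℂ → E}
    (hf : DifferentiableOn ℂ f U) (j : ℕ) {z : ℂ} (hz : z ∈ U) :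
    HasDerivAt (iteratedDeriv j f) (iteratedDeriv (j + 1) f z) z := by
  have := (hf.analyticOnNhd hU).iterated_deriv j z hz
  rw [← iteratedDeriv_eq_iterate] at this
  rw [iteratedDeriv_succ]
  exact this.differentiableAt.hasDerivAt

-- At `j = 0` the truncated `j - 1` does no harm: its coefficient is `0`.
theorem iteratedDeriv_sub_smul {U : Set ℂ} (hU : IsOpen U) {g : ℂ → E}
    (hg : DifferentiableOn ℂ g U) (a : ℂ) (j : ℕ) {z : ℂ} (hz : z ∈ U) :
    iteratedDeriv j (fun w => (w - a) • g w) z =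
      (z - a) • iteratedDeriv j g z + (j : ℂ) • iteratedDeriv (j - 1) g z := by
  induction j generalizing z with
  | zero => simp
  | succ j ih =>
    have hlow : HasDerivAt (fun w => (j : ℂ) • iteratedDeriv (j - 1) g w)
        ((j : ℂ) • iteratedDeriv j g z) z := by
      rcases j with _ | i
      · simpa using hasDerivAt_const z (0 : E)
      · exact (hg.hasDerivAt_iteratedDeriv hU i hz).const_smul _
    have hder : HasDerivAt
        (fun w => (w - a) • iteratedDeriv j g w + (j : ℂ) • iteratedDeriv (j - 1) g w)
        ((z - a) • iteratedDeriv (j + 1) g z + ((j + 1 : ℕ) : ℂ) • iteratedDeriv j g z) z := by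
      refine ((((hasDerivAt_id z).sub_const a).smul
        (hg.hasDerivAt_iteratedDeriv hU j hz)).add hlow).congr_deriv ?_
      push_cast
      simp only [id, one_smul, add_smul]
      abel
    rw [iteratedDeriv_succ, Nat.add_sub_cancel, ← hder.deriv]
    exact Filter.EventuallyEq.deriv_eq (Filter.eventually_of_mem (hU.mem_nhds hz) fun w hw => ih hw)

theorem iteratedDeriv_eq_sub_smul_iteratedDeriv_dslope {U : Set ℂ} (hU : IsOpen U) {f : ℂ → E}
    (hf : DifferentiableOn ℂ f U) {a : ℂ} (ha : a ∈ U) (hfa : f a = 0) (j : ℕ) {z : ℂ}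
    (hz : z ∈ U) :
    iteratedDeriv j f z = (z - a) • iteratedDeriv j (dslope f a) z +
      (j : ℂ) • iteratedDeriv (j - 1) (dslope f a) z := by
  have hfg : f = fun w => (w - a) • dslope f a w := by
    funext w
    rw [sub_smul_dslope, hfa, sub_zero]
  have := iteratedDeriv_sub_smul hU ((Complex.differentiableOn_dslope (hU.mem_nhds ha)).mpr hf)
    a j hz
  rwa [← hfg] at this

theorem norm_iteratedDeriv_dslope_le {U : Set ℂ} (hUo : IsOpen U) (hUc : Convex ℝ U) {f : ℂ → E}
    (hf : DifferentiableOn ℂ f U) {a : ℂ} (ha : a ∈ U) (hfa : f a = 0) {n : ℕ} {C : ℝ}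
    (hC : ∀ w ∈ U, ‖iteratedDeriv (n + 1) f w‖ ≤ C) {z : ℂ} (hz : z ∈ U) :
    ‖iteratedDeriv n (dslope f a) z‖ ≤ C / (n + 1 : ℕ) :=
  norm_le_div_of_norm_sub_smul_deriv_add_smul_le hUc ha
    (fun w hw => ((Complex.differentiableOn_dslope (hUo.mem_nhds ha)).mpr hf)
      |>.hasDerivAt_iteratedDeriv hUo n hw) n.succ_pos
    (fun w hw => by
      simpa [iteratedDeriv_eq_sub_smul_iteratedDeriv_dslope hUo hf ha hfa (n + 1) hw] using hC w hw)
    hz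

theorem HasZerosWithMultiplicity.dslope {U : Set ℂ} (hU : IsOpen U) {f : ℂ → E}
    (hf : DifferentiableOn ℂ f U) {a : ℂ} (ha : a ∈ U) {Z : Multiset ℂ}
    (hZU : ∀ b ∈ Z, b ∈ U) (hZ : HasZerosWithMultiplicity f (a ::ₘ Z)) :
    HasZerosWithMultiplicity (_root_.dslope f a) Z := by
  intro b j hj
  have leib := fun i => iteratedDeriv_eq_sub_smul_iteratedDeriv_dslope hU hf ha
    (by simpa using hZ a 0 (by simp)) i (hZU b (Multiset.count_pos.mp (by omega)))
  by_cases hba : b = a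
  · subst hba
    have h0 := hZ b (j + 1) (by simpa using hj)
    rw [leib, sub_self, zero_smul, zero_add, Nat.add_sub_cancel] at h0
    exact (smul_eq_zero.mp h0).resolve_left (by exact_mod_cast j.succ_ne_zero)
  · have hcount : (a ::ₘ Z).count b = Z.count b := Multiset.count_cons_of_ne hba Z
    induction j with
    | zero =>
      have h0 := hZ b 0 (by omega)
      rw [leib, Nat.cast_zero, zero_smul, add_zero] at h0
      exact (smul_eq_zero.mp h0).resolve_left (sub_ne_zero.mpr hba)
    | succ i ih =>
      have h0 := hZ b (i + 1) (by omega)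
      rw [leib, Nat.add_sub_cancel, ih (by omega), smul_zero, add_zero] at h0
      exact (smul_eq_zero.mp h0).resolve_left (sub_ne_zero.mpr hba)

theorem norm_iteratedDeriv_le_of_hasZerosWithMultiplicity {U : Set ℂ} (hUo : IsOpen U)
    (hUc : Convex ℝ U) {ℓ : ℝ} (hℓ : ∀ z ∈ U, ∀ w ∈ U, ‖z - w‖ ≤ ℓ) (n : ℕ) {f : ℂ → E}
    (hf : DifferentiableOn ℂ f U) {Z : Multiset ℂ} (hZU : ∀ a ∈ Z, a ∈ U)
    (hZ : HasZerosWithMultiplicity f Z) (hn : n ≤ Z.card) {C : ℝ}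
    (hC : ∀ w ∈ U, ‖iteratedDeriv n f w‖ ≤ C) {k : ℕ} (hk : k ≤ n) {w : ℂ} (hw : w ∈ U) :
    ‖iteratedDeriv (n - k) f w‖ ≤ C * ℓ ^ k / k.factorial := by
  induction n generalizing f Z C k w with
  | zero =>
    obtain rfl : k = 0 := by omega
    simpa using hC w hw
  | succ n ih =>
    obtain ⟨a, haZ⟩ := Multiset.card_pos_iff_exists_mem.mp (by omega : 0 < Z.card)
    have ha := hZU a haZ
    rw [← Multiset.cons_erase haZ] at hZ hn
    have hfa : f a = 0 := by simpa using hZ a 0 (by simp)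
    set g := dslope f a
    have hZU' : ∀ b ∈ Z.erase a, b ∈ U := fun b hb => hZU b (Multiset.mem_of_mem_erase hb)
    have hgk : ∀ i ≤ n, ∀ z ∈ U,
        ‖iteratedDeriv (n - i) g z‖ ≤ C / (n + 1 : ℕ) * ℓ ^ i / i.factorial :=
      fun i hi z hz => ih ((Complex.differentiableOn_dslope (hUo.mem_nhds ha)).mpr hf) hZU'
        (hZ.dslope hUo hf ha hZU') (by simpa using hn)
        (fun w hw => norm_iteratedDeriv_dslope_le hUo hUc hf ha hfa hC hw) hi hz
    rcases k with _ | k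
    · simpa using hC w hw
    have hkn : k ≤ n := by omega
    have hℓ0 : 0 ≤ ℓ := by simpa using hℓ a ha a ha
    have hfirst : ‖(w - a) • iteratedDeriv (n - k) g w‖ ≤
        ℓ * (C / (n + 1 : ℕ) * ℓ ^ k / k.factorial) := by
      rw [norm_smul]
      exact mul_le_mul (hℓ w hw a ha) (hgk k hkn w hw) (norm_nonneg _) hℓ0
    have hsecond : ‖((n - k : ℕ) : ℂ) • iteratedDeriv (n - k - 1) g w‖ ≤
        (n - k : ℕ) * (C / (n + 1 : ℕ) * ℓ ^ (k + 1) / (k + 1).factorial) := by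
      rw [norm_smul, Complex.norm_natCast]
      rcases hkn.lt_or_eq with hlt | rfl
      · exact mul_le_mul_of_nonneg_left (by simpa [Nat.sub_sub] using hgk (k + 1) hlt w hw)
          (Nat.cast_nonneg _)
      · simp
    calc ‖iteratedDeriv (n + 1 - (k + 1)) f w‖
        ≤ ℓ * (C / (n + 1 : ℕ) * ℓ ^ k / k.factorial) +
            (n - k : ℕ) * (C / (n + 1 : ℕ) * ℓ ^ (k + 1) / (k + 1).factorial) := by
          rw [Nat.add_sub_add_right,
            iteratedDeriv_eq_sub_smul_iteratedDeriv_dslope hUo hf ha hfa (n - k) hw]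
          exact (norm_add_le _ _).trans (add_le_add hfirst hsecond)
      _ = C * ℓ ^ (k + 1) / (k + 1).factorial := by
          rw [Nat.factorial_succ]
          push_cast [Nat.cast_sub hkn]
          field_simp
          ring

end

theorem stmt9_general (U : Set ℂ) (hUo : IsOpen U) (hUc : Convex ℝ U)
    (hUb : Bornology.IsBounded U) (ℓ : ℝ) (hdiam : Metric.diam U = ℓ)
    (f : ℂ → ℂ) (hf : DifferentiableOn ℂ f U)
    (n : ℕ) (m : ℕ) (z : Fin m → ℂ) (μ : Fin m → ℕ)
    (hinj : Function.Injective z) (hzU : ∀ i, z i ∈ U)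
    (hmult : ∀ i, ∀ j < μ i, iteratedDeriv j f (z i) = 0)
    (hsum : n ≤ ∑ i, μ i) :
    ∀ k < n, ∀ C : ℝ,
      (∀ w ∈ U, ‖iteratedDeriv n f w‖ ≤ C) →
      ∀ w ∈ U, ‖iteratedDeriv (n - k) f w‖ ≤ C * ℓ ^ k / (k.factorial : ℝ) := by
  intro k hk C hC w hw
  have hℓ : ∀ x ∈ U, ∀ y ∈ U, ‖x - y‖ ≤ ℓ := fun x hx y hy => by
    rw [← dist_eq_norm, ← hdiam]
    exact Metric.dist_le_diam_of_mem hUb hx hy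
  have hZU : ∀ a ∈ ∑ i, Multiset.replicate (μ i) (z i), a ∈ U := fun a ha => by
    obtain ⟨i, -, hai⟩ := Multiset.mem_sum.mp ha
    rw [Multiset.eq_of_mem_replicate hai]
    exact hzU i
  exact norm_iteratedDeriv_le_of_hasZerosWithMultiplicity hUo hUc hℓ n hf hZU
    (hasZerosWithMultiplicity_sum_replicate hinj hmult) (by simpa using hsum) hC hk.le hw

/-- If `f` is holomorphic on a bounded convex open set `U ⊆ ℂ` of diameter `ℓ`,
continuous on its closure, not identically zero, and has at least `n` zeros in
`U` counted with multiplicities, then for every `k = 0,…,n-1`,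
`sup_U |f^{(n-k)}| ≤ sup_U |f^{(n)}| · ℓ^k / k!` (expressed via arbitrary upper
bounds `C` of `|f^{(n)}|` on `U`). -/
theorem stmt9 (U : Set ℂ) (hUo : IsOpen U) (hUc : Convex ℝ U)
    (hUb : Bornology.IsBounded U) (ℓ : ℝ) (hdiam : Metric.diam U = ℓ)
    (f : ℂ → ℂ) (hf : DifferentiableOn ℂ f U) (hfc : ContinuousOn f (closure U))
    (hfne : ∃ z ∈ U, f z ≠ 0)
    (n : ℕ) (m : ℕ) (z : Fin m → ℂ) (μ : Fin m → ℕ)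
    (hinj : Function.Injective z) (hzU : ∀ i, z i ∈ U)
    (hmult : ∀ i, ∀ j < μ i, iteratedDeriv j f (z i) = 0)
    (hsum : n ≤ ∑ i, μ i) :
    ∀ k < n, ∀ C : ℝ,
      (∀ w ∈ U, ‖iteratedDeriv n f w‖ ≤ C) →
      ∀ w ∈ U, ‖iteratedDeriv (n - k) f w‖ ≤ C * ℓ ^ k / (k.factorial : ℝ) :=
  stmt9_general U hUo hUc hUb ℓ hdiam f hf n m z μ hinj hzU hmult hsum
end

section
/- (Kim) Let U ⊆ ℂ be a bounded convex open set of diameter ℓ and let a_1,…,a_n be holomorphic functions on U with |a_k(z)| ≤ A_k for all z ∈ U, where Σ_{k=1}^n A_k · ℓ^k / k! < 1. Let f be holomorphic on U and continuous on the closure of U, satisfying f^{(n)}(z) + a_1(z) f^{(n−1)}(z) + ⋯ + a_n(z) f(z) = 0 for all z ∈ U. If f has at least n zeros in U counted with multiplicities, then f is identically zero. Equivalently, every nontrivial holomorphic solution of the equation has at most n − 1 zeros in U counted with multiplicities. -/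
/-!
Dividing out a zero `w` of `f`, i.e. passing to `g = dslope f w`, removes one zero, and on a
convex set `‖f⁽q⁺¹⁾‖ ≤ M` gives `‖g⁽q⁾‖ ≤ M / (q + 1)`, because
`((z - w) ^ (q + 1) * g⁽q⁾)' = (z - w) ^ q * f⁽q⁺¹⁾`. Inducting over the `n` zeros gives
`‖f⁽ⁿ⁻ᵏ⁾‖ ≤ M ℓ ^ k / k!` with `M = sup ‖f⁽ⁿ⁾‖`. At a point where `‖f⁽ⁿ⁾‖` attains `M`, the
equation then yields `M ≤ M * ∑ A k ℓ ^ k / k!`, so `M = 0`; hence `f` vanishes near its zeros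
and, by the identity theorem, on `U`. For `M` to be attained we work on a convex open
neighbourhood of the zeros whose closure is a compact subset of `U`.
-/

open Set Metric Filter Topology

theorem Multiset.exists_le_card_eq {α : Type*} {s : Multiset α} {n : ℕ} (hn : n ≤ card s) :
    ∃ t ≤ s, card t = n := by
  obtain ⟨t, ht⟩ := card_pos_iff_exists_mem.1 (by rw [card_powersetCard]; exact Nat.choose_pos hn)
  exact ⟨t, mem_powersetCard.1 ht⟩

theorem AnalyticOnNhd.iteratedDeriv {𝕜 F : Type*} [NontriviallyNormedField 𝕜]
    [NormedAddCommGroup F] [NormedSpace 𝕜 F] [CompleteSpace F] {f : 𝕜 → F} {s : Set 𝕜}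
    (h : AnalyticOnNhd 𝕜 f s) (n : ℕ) : AnalyticOnNhd 𝕜 (iteratedDeriv n f) s := by
  simpa only [iteratedDeriv_eq_iterate] using h.iterated_deriv n

theorem iteratedDeriv_succ_sub_mul {𝕜 : Type*} [NontriviallyNormedField 𝕜] {g : 𝕜 → 𝕜}
    {w x : 𝕜} {n : ℕ} (hg : ContDiffAt 𝕜 (n + 1) g x) :
    iteratedDeriv (n + 1) (fun z => (z - w) * g z) x
      = (x - w) * iteratedDeriv (n + 1) g x + (n + 1) * iteratedDeriv n g x := by
  rw [iteratedDeriv_fun_mul (by fun_prop) hg, Finset.sum_range_succ', Finset.sum_range_succ']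
  have : ∀ i, iteratedDeriv (i + 1 + 1) (fun z => z - w) x = 0 := by
    intro i
    simp [iteratedDeriv_succ']
  simp [this, iteratedDeriv_succ']
  ring

theorem norm_sub_le_of_norm_deriv_le_mul_pow {E : Type*} [NormedAddCommGroup E]
    [NormedSpace ℂ E] {V : Set ℂ} (hV : Convex ℝ V) {ψ ψ' : ℂ → E}
    (hψ : ∀ ζ ∈ V, HasDerivAt ψ (ψ' ζ) ζ) {M : ℝ} {q : ℕ} {w x : ℂ}
    (hψ' : ∀ ζ ∈ V, ‖ψ' ζ‖ ≤ M * ‖ζ - w‖ ^ q) (hw : w ∈ V) (hx : x ∈ V) :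
    ‖ψ x - ψ w‖ ≤ M * ‖x - w‖ ^ (q + 1) / (q + 1) := by
  let γ : ℝ → ℂ := fun t => w + t • (x - w)
  have hγV : ∀ t ∈ Icc (0 : ℝ) 1, γ t ∈ V := fun t ht => hV.add_smul_sub_mem hw hx ht
  have hφ : ∀ t ∈ Icc (0 : ℝ) 1,
      HasDerivAt (fun t => ψ (γ t) - ψ w) ((x - w) • ψ' (γ t)) t := by
    intro t ht
    have hγ : HasDerivAt γ (x - w) t :=
      (((hasDerivAt_id t).smul_const (x - w)).const_add w).congr_deriv (one_smul ℝ _)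
    exact ((hψ _ (hγV t ht)).scomp t hγ).sub_const _
  have hB : ∀ t : ℝ, HasDerivAt (fun t => M * ‖x - w‖ ^ (q + 1) * t ^ (q + 1) / (q + 1))
      (M * ‖x - w‖ ^ (q + 1) * t ^ q) t := by
    intro t
    refine (((hasDerivAt_pow (q + 1) t).const_mul (M * ‖x - w‖ ^ (q + 1))).div_const
      ((q : ℝ) + 1)).congr_deriv ?_
    push_cast
    field_simp
  have hbound : ∀ t ∈ Ico (0 : ℝ) 1, ‖(x - w) • ψ' (γ t)‖ ≤ M * ‖x - w‖ ^ (q + 1) * t ^ q := by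
    intro t ht
    have hγw : ‖γ t - w‖ = t * ‖x - w‖ := by
      simp [γ, abs_of_nonneg ht.1]
    calc ‖(x - w) • ψ' (γ t)‖ ≤ ‖x - w‖ * (M * ‖γ t - w‖ ^ q) := by
          rw [norm_smul]
          exact mul_le_mul_of_nonneg_left (hψ' _ (hγV t (Ico_subset_Icc_self ht))) (norm_nonneg _)
      _ = M * ‖x - w‖ ^ (q + 1) * t ^ q := by rw [hγw]; ring
  have key := image_norm_le_of_norm_deriv_right_le_deriv_boundary
    (fun t ht => (hφ t ht).continuousAt.continuousWithinAt)
    (fun t ht => (hφ t (Ico_subset_Icc_self ht)).hasDerivWithinAt) (by simp [γ]) hB hbound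
    (right_mem_Icc.2 zero_le_one)
  simpa [γ] using key

theorem exists_isOpen_convex_isCompact_closure_subset {E : Type*} [NormedAddCommGroup E]
    [NormedSpace ℝ E] [ProperSpace E] {U S : Set E} (hUo : IsOpen U) (hUc : Convex ℝ U)
    (hS : S.Finite) (hSU : S ⊆ U) :
    ∃ V, IsOpen V ∧ Convex ℝ V ∧ S ⊆ V ∧ IsCompact (closure V) ∧ closure V ⊆ U := by
  have hK : IsCompact (convexHull ℝ S) := hS.isCompact_convexHull ℝ
  obtain ⟨δ, hδ, hδU⟩ := hK.exists_cthickening_subset_open hUo (convexHull_min hSU hUc)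
  have hcl := closure_thickening_subset_cthickening δ (convexHull ℝ S)
  exact ⟨_, isOpen_thickening, (convex_convexHull ℝ S).thickening δ,
    (subset_convexHull ℝ S).trans (self_subset_thickening hδ _),
    hK.cthickening.of_isClosed_subset isClosed_closure hcl, hcl.trans hδU⟩

def HasZeros (f : ℂ → ℂ) (s : Multiset ℂ) : Prop :=
  ∀ p, ∀ j < s.count p, iteratedDeriv j f p = 0

theorem HasZeros.mono {f : ℂ → ℂ} {s t : Multiset ℂ} (h : HasZeros f s) (hts : t ≤ s) :
    HasZeros f t :=
  fun p j hj => h p j (hj.trans_le (Multiset.count_le_of_le p hts))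

theorem hasZeros_sum_replicate {f : ℂ → ℂ} {m : ℕ} {z : Fin m → ℂ} {μ : Fin m → ℕ}
    (hinj : Function.Injective z) (hmult : ∀ i, ∀ j < μ i, iteratedDeriv j f (z i) = 0) :
    HasZeros f (∑ i, Multiset.replicate (μ i) (z i)) := by
  intro p j hj
  simp only [Multiset.count_sum', Multiset.count_replicate] at hj
  obtain ⟨i, rfl⟩ : ∃ i, z i = p := by
    by_contra! h
    simp [h] at hj
  simp only [hinj.eq_iff, Finset.sum_ite_eq', Finset.mem_univ, if_true] at hj
  exact hmult i j hj

section Dslope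

variable {V : Set ℂ} {f : ℂ → ℂ} {w x : ℂ}

theorem sub_mul_dslope_of_eq_zero (hfw : f w = 0) (x : ℂ) : (x - w) * dslope f w x = f x := by
  simpa [hfw] using sub_smul_dslope f w x

theorem analyticOnNhd_dslope (hVo : IsOpen V) (hf : DifferentiableOn ℂ f V) (hw : w ∈ V) :
    AnalyticOnNhd ℂ (dslope f w) V :=
  ((Complex.differentiableOn_dslope (hVo.mem_nhds hw)).2 hf).analyticOnNhd hVo

theorem iteratedDeriv_succ_eq_dslope (hVo : IsOpen V) (hf : DifferentiableOn ℂ f V)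
    (hw : w ∈ V) (hfw : f w = 0) (n : ℕ) (hx : x ∈ V) :
    iteratedDeriv (n + 1) f x = (x - w) * iteratedDeriv (n + 1) (dslope f w) x
      + (n + 1) * iteratedDeriv n (dslope f w) x := by
  rw [← iteratedDeriv_succ_sub_mul (analyticOnNhd_dslope hVo hf hw x hx).contDiffAt]
  simp_rw [sub_mul_dslope_of_eq_zero hfw]

theorem HasZeros.dslope (hVo : IsOpen V) (hf : DifferentiableOn ℂ f V) (hw : w ∈ V)
    {s : Multiset ℂ} (hsV : ∀ p ∈ s, p ∈ V) (hz : HasZeros f (w ::ₘ s)) :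
    HasZeros (dslope f w) s := by
  have hfw : f w = 0 := hz w 0 (by simp)
  intro p j hj
  have hpV : p ∈ V := hsV p (Multiset.count_pos.1 (by omega))
  rcases eq_or_ne p w with rfl | hpw
  · have h := hz p (j + 1) (by rw [Multiset.count_cons_self]; omega)
    rw [iteratedDeriv_succ_eq_dslope hVo hf hw hfw j hpV, sub_self, zero_mul, zero_add] at h
    exact (mul_eq_zero.1 h).resolve_left (Nat.cast_add_one_ne_zero j)
  · rw [← Multiset.count_cons_of_ne hpw] at hj
    have hpw' : p - w ≠ 0 := sub_ne_zero.2 hpw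
    induction j with
    | zero =>
      have h := hz p 0 hj
      rw [iteratedDeriv_zero, ← sub_mul_dslope_of_eq_zero hfw] at h
      simpa [hpw'] using h
    | succ j ih =>
      have h := hz p (j + 1) hj
      rw [iteratedDeriv_succ_eq_dslope hVo hf hw hfw j hpV, ih (by omega)] at h
      simpa [hpw'] using h

theorem norm_iteratedDeriv_dslope_le_s10 (hVo : IsOpen V) (hVc : Convex ℝ V)
    (hf : DifferentiableOn ℂ f V) (hw : w ∈ V) (hfw : f w = 0) {q : ℕ} {M : ℝ}
    (hM : ∀ x ∈ V, ‖iteratedDeriv (q + 1) f x‖ ≤ M) (hx : x ∈ V) :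
    ‖iteratedDeriv q (dslope f w) x‖ ≤ M / (q + 1) := by
  set h := iteratedDeriv q (dslope f w)
  have hleib : ∀ ζ ∈ V, iteratedDeriv (q + 1) f ζ = (ζ - w) * deriv h ζ + (q + 1) * h ζ :=
    fun ζ hζ => by rw [iteratedDeriv_succ_eq_dslope hVo hf hw hfw q hζ, iteratedDeriv_succ]
  have hq : (0 : ℝ) < q + 1 := by positivity
  rw [le_div_iff₀ hq]
  rcases eq_or_ne x w with rfl | hxw
  · have hMx := hM x hx
    rw [hleib x hx, sub_self, zero_mul, zero_add, norm_mul] at hMx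
    have hnorm : ‖(q : ℂ) + 1‖ = q + 1 := by exact_mod_cast Complex.norm_natCast (q + 1)
    rwa [hnorm, mul_comm] at hMx
  have hψ : ∀ ζ ∈ V, HasDerivAt (fun ζ => (ζ - w) ^ (q + 1) * h ζ)
      ((ζ - w) ^ q * iteratedDeriv (q + 1) f ζ) ζ := by
    intro ζ hζ
    have hh : HasDerivAt h (deriv h ζ) ζ :=
      ((analyticOnNhd_dslope hVo hf hw).iteratedDeriv q ζ hζ).differentiableAt.hasDerivAt
    refine ((((hasDerivAt_id ζ).sub_const w).fun_pow (q + 1)).mul hh).congr_deriv ?_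
    rw [hleib ζ hζ]
    simp only [id, Nat.add_sub_cancel]
    push_cast
    ring
  have key := norm_sub_le_of_norm_deriv_le_mul_pow hVc hψ (M := M) (fun ζ hζ => by
    rw [norm_mul, norm_pow, mul_comm]
    exact mul_le_mul_of_nonneg_right (hM ζ hζ) (by positivity)) hw hx
  have hpos : 0 < ‖x - w‖ ^ (q + 1) := by
    have := norm_pos_iff.2 (sub_ne_zero.2 hxw)
    positivity
  rw [sub_self, zero_pow (Nat.succ_ne_zero q), zero_mul, sub_zero, norm_mul, norm_pow] at key
  rw [← mul_le_mul_iff_of_pos_left hpos]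
  calc ‖x - w‖ ^ (q + 1) * (‖h x‖ * (q + 1)) = ‖x - w‖ ^ (q + 1) * ‖h x‖ * (q + 1) := by ring
    _ ≤ M * ‖x - w‖ ^ (q + 1) / (q + 1) * (q + 1) := by gcongr
    _ = ‖x - w‖ ^ (q + 1) * M := by field_simp

theorem norm_iteratedDeriv_le_of_dslope (hVo : IsOpen V) (hf : DifferentiableOn ℂ f V)
    (hw : w ∈ V) (hfw : f w = 0) (hx : x ∈ V) {ℓ M : ℝ} (hxw : ‖x - w‖ ≤ ℓ) {q : ℕ}
    (hg : ∀ {j k : ℕ}, j + k = q →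
      ‖iteratedDeriv j (dslope f w) x‖ ≤ M / (q + 1) * ℓ ^ k / k.factorial)
    (htop : ‖iteratedDeriv (q + 1) f x‖ ≤ M) {j k : ℕ} (hjk : j + k = q + 1) :
    ‖iteratedDeriv j f x‖ ≤ M * ℓ ^ k / k.factorial := by
  have hℓ : 0 ≤ ℓ := (norm_nonneg _).trans hxw
  rcases k with _ | k
  · simpa [show j = q + 1 by omega] using htop
  rcases j with _ | j
  · obtain rfl : k = q := by omega
    rw [iteratedDeriv_zero, ← sub_mul_dslope_of_eq_zero hfw, norm_mul]
    calc ‖x - w‖ * ‖dslope f w x‖ ≤ ℓ * (M / (k + 1) * ℓ ^ k / k.factorial) := by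
          gcongr
          simpa using hg (j := 0) (k := k) (by omega)
      _ = M * ℓ ^ (k + 1) / (k + 1).factorial := by
          rw [Nat.factorial_succ]
          push_cast
          field_simp
          ring
  rw [iteratedDeriv_succ_eq_dslope hVo hf hw hfw j hx]
  calc ‖(x - w) * iteratedDeriv (j + 1) (dslope f w) x
          + (j + 1) * iteratedDeriv j (dslope f w) x‖
      ≤ ‖x - w‖ * ‖iteratedDeriv (j + 1) (dslope f w) x‖
          + (j + 1) * ‖iteratedDeriv j (dslope f w) x‖ := by
        refine (norm_add_le _ _).trans_eq ?_
        rw [norm_mul, norm_mul]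
        norm_cast
    _ ≤ ℓ * (M / (q + 1) * ℓ ^ k / k.factorial)
          + (j + 1) * (M / (q + 1) * ℓ ^ (k + 1) / (k + 1).factorial) := by
        gcongr
        · exact hg (by omega)
        · exact hg (by omega)
    _ = M * ℓ ^ (k + 1) / (k + 1).factorial := by
        have hqjk : (q : ℝ) = j + k + 1 := by norm_cast; omega
        rw [Nat.factorial_succ, hqjk]
        push_cast
        field_simp
        ring

end Dslope

theorem norm_iteratedDeriv_le_of_hasZeros {V : Set ℂ} (hVo : IsOpen V) (hVc : Convex ℝ V)
    {ℓ : ℝ} (hℓ : ∀ x ∈ V, ∀ y ∈ V, dist x y ≤ ℓ) {s : Multiset ℂ} (hsV : ∀ p ∈ s, p ∈ V)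
    {f : ℂ → ℂ} (hf : DifferentiableOn ℂ f V) (hz : HasZeros f s) {M : ℝ}
    (hM : ∀ x ∈ V, ‖iteratedDeriv (Multiset.card s) f x‖ ≤ M) {j k : ℕ}
    (hjk : j + k = Multiset.card s) {x : ℂ} (hx : x ∈ V) :
    ‖iteratedDeriv j f x‖ ≤ M * ℓ ^ k / k.factorial := by
  induction s using Multiset.induction_on generalizing f M j k x with
  | empty =>
    obtain ⟨rfl, rfl⟩ : j = 0 ∧ k = 0 := by simpa using hjk
    simpa using hM x hx
  | cons w s ih =>
    have hwV : w ∈ V := hsV w (Multiset.mem_cons_self w s)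
    have hfw : f w = 0 := hz w 0 (by simp)
    have hsV' : ∀ p ∈ s, p ∈ V := fun p hp => hsV p (Multiset.mem_cons_of_mem hp)
    rw [Multiset.card_cons] at hM hjk
    refine norm_iteratedDeriv_le_of_dslope hVo hf hwV hfw hx
      (dist_eq_norm x w ▸ hℓ x hx w hwV) (fun hjk' => ?_) (hM x hx) hjk
    exact ih hsV' (analyticOnNhd_dslope hVo hf hwV).differentiableOn (hz.dslope hVo hf hwV hsV')
      (fun y hy => norm_iteratedDeriv_dslope_le_s10 hVo hVc hf hwV hfw hM hy) hjk' hx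

theorem eq_zero_of_add_sum_mul_eq_zero {n : ℕ} {F a : ℕ → ℂ} {A : ℕ → ℝ} {ℓ : ℝ}
    (hF : ∀ k ∈ Finset.Icc 1 n, ‖F (n - k)‖ ≤ ‖F n‖ * ℓ ^ k / k.factorial)
    (ha : ∀ k ∈ Finset.Icc 1 n, ‖a k‖ ≤ A k)
    (hsmall : ∑ k ∈ Finset.Icc 1 n, A k * ℓ ^ k / k.factorial < 1)
    (heq : F n + ∑ k ∈ Finset.Icc 1 n, a k * F (n - k) = 0) : F n = 0 := by
  have hle : ‖F n‖ ≤ ‖F n‖ * ∑ k ∈ Finset.Icc 1 n, A k * ℓ ^ k / k.factorial :=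
    calc ‖F n‖ = ‖∑ k ∈ Finset.Icc 1 n, a k * F (n - k)‖ := by
          rw [eq_neg_of_add_eq_zero_left heq, norm_neg]
      _ ≤ ∑ k ∈ Finset.Icc 1 n, ‖a k‖ * ‖F (n - k)‖ := by
          simpa only [norm_mul] using norm_sum_le (Finset.Icc 1 n) fun k => a k * F (n - k)
      _ ≤ ∑ k ∈ Finset.Icc 1 n, A k * (‖F n‖ * ℓ ^ k / k.factorial) :=
          Finset.sum_le_sum fun k hk =>
            mul_le_mul (ha k hk) (hF k hk) (norm_nonneg _) ((norm_nonneg _).trans (ha k hk))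
      _ = ‖F n‖ * ∑ k ∈ Finset.Icc 1 n, A k * ℓ ^ k / k.factorial := by
          rw [Finset.mul_sum]
          exact Finset.sum_congr rfl fun k _ => by ring
  by_contra h
  have hpos : 0 < ‖F n‖ := norm_pos_iff.2 h
  nlinarith

theorem eqOn_zero_of_hasZeros {V : Set ℂ} (hVo : IsOpen V) (hVc : Convex ℝ V)
    (hVcpt : IsCompact (closure V)) {ℓ : ℝ} (hℓ : ∀ x ∈ V, ∀ y ∈ V, dist x y ≤ ℓ) {n : ℕ}
    {a : ℕ → ℂ → ℂ} {A : ℕ → ℝ} (hbd : ∀ k ∈ Finset.Icc 1 n, ∀ z ∈ closure V, ‖a k z‖ ≤ A k)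
    (hsmall : ∑ k ∈ Finset.Icc 1 n, A k * ℓ ^ k / (k.factorial : ℝ) < 1)
    {f : ℂ → ℂ} (hf : DifferentiableOn ℂ f V)
    (hcont : ∀ j ≤ n, ContinuousOn (iteratedDeriv j f) (closure V))
    (hode : ∀ z ∈ closure V,
      iteratedDeriv n f z + ∑ k ∈ Finset.Icc 1 n, a k z * iteratedDeriv (n - k) f z = 0)
    {s : Multiset ℂ} (hsV : ∀ p ∈ s, p ∈ V) (hz : HasZeros f s) (hcard : Multiset.card s = n) :
    EqOn f 0 V := by
  subst hcard
  intro x hx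
  obtain ⟨xs, hxs, hmax⟩ :=
    hVcpt.exists_isMaxOn ⟨x, subset_closure hx⟩ (hcont _ le_rfl).norm
  have hbound : ∀ {j k : ℕ}, j + k = Multiset.card s → ∀ {y}, y ∈ V →
      ‖iteratedDeriv j f y‖ ≤ ‖iteratedDeriv (Multiset.card s) f xs‖ * ℓ ^ k / k.factorial :=
    fun hjk _ hy => norm_iteratedDeriv_le_of_hasZeros hVo hVc hℓ hsV hf hz
      (fun y hy => hmax (subset_closure hy)) hjk hy
  have hmax_eq_zero : iteratedDeriv (Multiset.card s) f xs = 0 :=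
    eq_zero_of_add_sum_mul_eq_zero (F := fun j => iteratedDeriv j f xs) (a := fun k => a k xs)
      (fun k hk => ContinuousWithinAt.closure_le hxs
        (((hcont _ (Nat.sub_le _ _)).norm xs hxs).mono subset_closure) continuousWithinAt_const
        fun y hy => hbound (by have := (Finset.mem_Icc.1 hk).2; omega) hy)
      (fun k hk => hbd k hk xs hxs) hsmall (hode xs hxs)
  simpa [hmax_eq_zero] using hbound (zero_add _) hx

theorem stmt10_general (U : Set ℂ) (hUo : IsOpen U) (hUc : Convex ℝ U)
    (hUb : Bornology.IsBounded U) (ℓ : ℝ) (hdiam : Metric.diam U = ℓ)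
    (n : ℕ) (a : ℕ → ℂ → ℂ) (A : ℕ → ℝ)
    (hbd : ∀ k ∈ Finset.Icc 1 n, ∀ z ∈ U, ‖a k z‖ ≤ A k)
    (hsmall : ∑ k ∈ Finset.Icc 1 n, A k * ℓ ^ k / (k.factorial : ℝ) < 1)
    (f : ℂ → ℂ) (hf : DifferentiableOn ℂ f U)
    (hode : ∀ z ∈ U,
      iteratedDeriv n f z + ∑ k ∈ Finset.Icc 1 n, a k z * iteratedDeriv (n - k) f z = 0)
    (m : ℕ) (z : Fin m → ℂ) (μ : Fin m → ℕ)
    (hinj : Function.Injective z) (hzU : ∀ i, z i ∈ U)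
    (hmult : ∀ i, ∀ j < μ i, iteratedDeriv j f (z i) = 0)
    (hsum : n ≤ ∑ i, μ i) :
    ∀ z ∈ U, f z = 0 := by
  rcases Nat.eq_zero_or_pos n with rfl | hn
  · intro y hy
    simpa using hode y hy
  have hfa := hf.analyticOnNhd hUo
  obtain ⟨V, hVo, hVc, hzV, hVcpt, hVU⟩ := exists_isOpen_convex_isCompact_closure_subset hUo hUc
    (finite_range z) (range_subset_iff.2 hzU)
  obtain ⟨s, hs, hcard⟩ := Multiset.exists_le_card_eq
    (s := ∑ i, Multiset.replicate (μ i) (z i)) (by simpa [Multiset.card_sum] using hsum)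
  have hsV : ∀ p ∈ s, p ∈ V := fun p hp => by
    obtain ⟨i, -, hi⟩ := Multiset.mem_sum.1 (Multiset.mem_of_le hs hp)
    exact Multiset.eq_of_mem_replicate hi ▸ hzV (mem_range_self i)
  have hfV : EqOn f 0 V := eqOn_zero_of_hasZeros hVo hVc hVcpt
    (fun x hx y hy => hdiam ▸ dist_le_diam_of_mem hUb (hVU (subset_closure hx))
      (hVU (subset_closure hy)))
    (fun k hk y hy => hbd k hk y (hVU hy)) hsmall (hf.mono (subset_closure.trans hVU))
    (fun j _ => (hfa.iteratedDeriv j).continuousOn.mono hVU) (fun y hy => hode y (hVU hy))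
    hsV ((hasZeros_sum_replicate hinj hmult).mono hs) hcard
  obtain ⟨p, hp⟩ := Multiset.card_pos_iff_exists_mem.1 (hcard ▸ hn)
  exact fun y hy => hfa.eqOn_zero_of_preconnected_of_eventuallyEq_zero hUc.isPreconnected
    (hVU (subset_closure (hsV p hp))) (hfV.eventuallyEq_of_mem (hVo.mem_nhds (hsV p hp))) hy

/-- **Kim's theorem.** Let `U ⊆ ℂ` be a bounded convex open set of diameter
`ℓ`, and let `f` be holomorphic on `U`, continuous on its closure, solving
`f^{(n)} + a₁ f^{(n-1)} + ⋯ + aₙ f = 0` with `|a_k| ≤ A_k` on `U` and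
`Σ A_k ℓ^k/k! < 1`.  If `f` has at least `n` zeros in `U` counted with
multiplicities, then `f` vanishes identically on `U`. -/
theorem stmt10 (U : Set ℂ) (hUo : IsOpen U) (hUc : Convex ℝ U)
    (hUb : Bornology.IsBounded U) (ℓ : ℝ) (hdiam : Metric.diam U = ℓ)
    (n : ℕ) (a : ℕ → ℂ → ℂ) (A : ℕ → ℝ)
    (ha : ∀ k ∈ Finset.Icc 1 n, DifferentiableOn ℂ (a k) U)
    (hbd : ∀ k ∈ Finset.Icc 1 n, ∀ z ∈ U, ‖a k z‖ ≤ A k)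
    (hsmall : ∑ k ∈ Finset.Icc 1 n, A k * ℓ ^ k / (k.factorial : ℝ) < 1)
    (f : ℂ → ℂ) (hf : DifferentiableOn ℂ f U) (hfc : ContinuousOn f (closure U))
    (hode : ∀ z ∈ U,
      iteratedDeriv n f z + ∑ k ∈ Finset.Icc 1 n, a k z * iteratedDeriv (n - k) f z = 0)
    (m : ℕ) (z : Fin m → ℂ) (μ : Fin m → ℕ)
    (hinj : Function.Injective z) (hzU : ∀ i, z i ∈ U)
    (hmult : ∀ i, ∀ j < μ i, iteratedDeriv j f (z i) = 0)
    (hsum : n ≤ ∑ i, μ i) :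
    ∀ z ∈ U, f z = 0 :=
  stmt10_general U hUo hUc hUb ℓ hdiam n a A hbd hsmall f hf hode m z μ hinj hzU hmult hsum
end

section
/- (Variation of argument for complex-valued linear ODEs) Let ℓ > 0 and let a_1,…,a_n : [0,ℓ] → ℂ be continuous with |a_k(t)| ≤ A_k for all t, where Σ_{k=1}^n A_k · ℓ^k / k! < 1/2. Let f : [0,ℓ] → ℂ be n times continuously differentiable, satisfy f^{(n)}(t) + a_1(t) f^{(n−1)}(t) + ⋯ + a_n(t) f(t) = 0 on [0,ℓ], and suppose f(t) ≠ 0 for all t ∈ [0,ℓ]. Let θ : [0,ℓ] → ℝ be any continuous branch of the argument of f, i.e. a continuous function with f(t) = |f(t)| · exp(i θ(t)) for all t. Then |θ(ℓ) − θ(0)| < (n+1)π. -/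
/-!
If the argument of `f` varied by at least `(n + 1)π`, then for every direction `α` the
projection `Re (e^{-iα} f)` would vanish at `n + 1` points of `[0, ℓ]`, so by Rolle
`Re (e^{-iα} f^{(n-k)})` vanishes at `k` points. The error bound of Lagrange interpolation then
gives `|Re (e^{-iα} f^{(n-k)})| ≤ M ℓ^k / k!` with `M = max ‖f^{(n)}‖`, and choosing
`α = arg f^{(n-k)}(t)` turns this into `‖f^{(n-k)}(t)‖ ≤ M ℓ^k / k!`. Evaluating the equation where
`‖f^{(n)}‖ = M` yields `M ≤ M Σ A_k ℓ^k / k!`, so `M = 0`, and then `f = 0`, which is excluded.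
-/

open Set Complex Polynomial
open scoped Nat Finset

def IsDerivChain {E : Type*} [NormedAddCommGroup E] [NormedSpace ℝ E]
    (G : ℕ → ℝ → E) (k : ℕ) (s : Set ℝ) : Prop :=
  ∀ i < k, ∀ x ∈ s, HasDerivWithinAt (G i) (G (i + 1) x) s x

theorem ContDiffOn.isDerivChain_iteratedDerivWithin {E : Type*} [NormedAddCommGroup E]
    [NormedSpace ℝ E] {f : ℝ → E} {s : Set ℝ} {n : ℕ} (hf : ContDiffOn ℝ n f s)
    (hs : UniqueDiffOn ℝ s) :
    IsDerivChain (fun k => iteratedDerivWithin k f s) n s := fun k hk x hx => by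
  have hd := ((hf.differentiableOn_iteratedDerivWithin (by exact_mod_cast hk) hs) x hx)
  simpa only [iteratedDerivWithin_succ] using hd.hasDerivWithinAt

theorem Set.OrdConnected.exists_finset_deriv_zeros {s : Set ℝ} (hs : s.OrdConnected)
    {G G' : ℝ → ℝ} (hG : ∀ x ∈ s, HasDerivWithinAt G (G' x) s x)
    {Z : Finset ℝ} (hZs : ↑Z ⊆ s) (hZ : ∀ z ∈ Z, G z = 0) :
    ∃ Z' : Finset ℝ, ↑Z' ⊆ s ∧ #Z ≤ #Z' + 1 ∧ ∀ z ∈ Z', G' z = 0 := by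
  have rolle : ∀ x ∈ Z, ∀ y ∈ Z, x < y → ∃ ξ ∈ Ioo x y, G' ξ = 0 := by
    intro x hx y hy hxy
    have hsub : Icc x y ⊆ s := hs.out (hZs hx) (hZs hy)
    refine exists_hasDerivAt_eq_zero hxy
      (fun t ht => ((hG t (hsub ht)).continuousWithinAt).mono hsub)
      ((hZ x hx).trans (hZ y hy).symm) fun t ht => ?_
    exact (hG t (hsub (Ioo_subset_Icc_self ht))).hasDerivAt
      (Filter.mem_of_superset (Icc_mem_nhds ht.1 ht.2) hsub)
  -- a Rolle point for every pair of zeros; `card_le_of_interleaved` finds `#Z - 1` distinct ones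
  choose! ξ hξ hξ0 using rolle
  classical
  refine ⟨((Z ×ˢ Z).filter fun p => p.1 < p.2).image fun p => ξ p.1 p.2, ?_, ?_, ?_⟩
  · intro z hz
    simp only [Finset.coe_image, Finset.coe_filter, Finset.mem_product, mem_image] at hz
    obtain ⟨⟨x, y⟩, ⟨⟨hx, hy⟩, hxy⟩, rfl⟩ := hz
    exact hs.out (hZs hx) (hZs hy) (Ioo_subset_Icc_self (hξ x hx y hy hxy))
  · refine Finset.card_le_of_interleaved fun x hx y hy hxy _ => ⟨ξ x y, ?_, hξ x hx y hy hxy⟩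
    exact Finset.mem_image_of_mem (fun p : ℝ × ℝ => ξ p.1 p.2) (a := (x, y))
      (Finset.mem_filter.2 ⟨Finset.mem_product.2 ⟨hx, hy⟩, hxy⟩)
  · intro z hz
    simp only [Finset.mem_image, Finset.mem_filter, Finset.mem_product] at hz
    obtain ⟨⟨x, y⟩, ⟨⟨hx, hy⟩, hxy⟩, rfl⟩ := hz
    exact hξ0 x hx y hy hxy

theorem IsDerivChain.exists_finset_zeros {s : Set ℝ} (hs : s.OrdConnected) {G : ℕ → ℝ → ℝ}
    {k : ℕ} (hG : IsDerivChain G k s) {Z : Finset ℝ} (hZs : ↑Z ⊆ s) (hZ : ∀ z ∈ Z, G 0 z = 0) :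
    ∃ Z' : Finset ℝ, ↑Z' ⊆ s ∧ #Z ≤ #Z' + k ∧ ∀ z ∈ Z', G k z = 0 := by
  induction k with
  | zero => exact ⟨Z, hZs, le_rfl, hZ⟩
  | succ k ih =>
    obtain ⟨Z₁, hZ₁s, hZ₁, hZ₁0⟩ := ih fun i hi => hG i (by omega)
    obtain ⟨Z₂, hZ₂s, hZ₂, hZ₂0⟩ := hs.exists_finset_deriv_zeros (hG k (by omega)) hZ₁s hZ₁0
    exact ⟨Z₂, hZ₂s, by omega, hZ₂0⟩

theorem IsDerivChain.abs_mul_factorial_le {s : Set ℝ} (hs : s.OrdConnected) {G : ℕ → ℝ → ℝ}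
    {Z : Finset ℝ} (hG : IsDerivChain G #Z s) (hZs : ↑Z ⊆ s) (hZ : ∀ z ∈ Z, G 0 z = 0)
    {M : ℝ} (hM : ∀ x ∈ s, |G #Z x| ≤ M) {t : ℝ} (ht : t ∈ s) :
    |G 0 t| * (#Z)! ≤ M * ∏ z ∈ Z, |t - z| := by
  by_cases htZ : t ∈ Z
  · rw [hZ t htZ, abs_zero, zero_mul, Finset.prod_eq_zero htZ (by simp), mul_zero]
  set p : ℝ[X] := ∏ z ∈ Z, (X - C z)
  have hp_eval : ∀ x, p.eval x = ∏ z ∈ Z, (x - z) := by simp [p, eval_prod]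
  have hpt : p.eval t ≠ 0 := by
    rw [hp_eval]
    exact Finset.prod_ne_zero_iff.2 fun z hz => sub_ne_zero.2 (ne_of_mem_of_not_mem hz htZ).symm
  have hp_iter : derivative^[#Z] p = C ((#Z)! : ℝ) := by
    simp [p, iterate_derivative_prod_X_sub_C le_rfl]
  -- interpolate `G 0` at `t` by a multiple of `p`; the difference then has `#Z + 1` zeros
  set c := G 0 t / p.eval t
  set Φ : ℕ → ℝ → ℝ := fun i x => G i x - c * (derivative^[i] p).eval x
  have hΦ : IsDerivChain Φ #Z s := fun i hi x hx => by
    have hpi := ((derivative^[i] p).hasDerivAt x).hasDerivWithinAt (s := s)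
    rw [← Function.iterate_succ_apply' derivative] at hpi
    exact (hG i hi x hx).sub (hpi.const_mul c)
  have hΦ0 : ∀ z ∈ insert t Z, Φ 0 z = 0 := by
    intro z hz
    rcases Finset.mem_insert.1 hz with rfl | hz
    · simp [Φ, c, hpt]
    · simp [Φ, hZ z hz, hp_eval, Finset.prod_eq_zero hz]
  obtain ⟨Z', hZ's, hcard, hZ'0⟩ :=
    hΦ.exists_finset_zeros hs (Finset.coe_insert t Z ▸ insert_subset ht hZs) hΦ0
  rw [Finset.card_insert_of_notMem htZ] at hcard
  obtain ⟨ξ, hξ⟩ : Z'.Nonempty := Finset.card_pos.1 (by omega)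
  have hGξ : G #Z ξ = c * (#Z)! := by
    have := hZ'0 ξ hξ
    simp only [Φ, hp_iter, eval_C] at this
    linarith
  have hc : |c| * (#Z)! ≤ M := by
    simpa [hGξ, abs_mul] using hM ξ (hZ's hξ)
  calc |G 0 t| * (#Z)! = |c| * (#Z)! * |p.eval t| := by
        rw [abs_div]; field_simp
    _ ≤ M * |p.eval t| := by gcongr
    _ = M * ∏ z ∈ Z, |t - z| := by rw [hp_eval, Finset.abs_prod]

theorem IsDerivChain.abs_le_of_card_le {a b : ℝ} {G : ℕ → ℝ → ℝ} {k : ℕ}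
    (hG : IsDerivChain G k (Icc a b)) {Z : Finset ℝ} (hZs : ↑Z ⊆ Icc a b) (hk : k ≤ #Z)
    (hZ : ∀ z ∈ Z, G 0 z = 0) {M : ℝ} (hM : ∀ x ∈ Icc a b, |G k x| ≤ M) {t : ℝ}
    (ht : t ∈ Icc a b) :
    |G 0 t| ≤ M * (b - a) ^ k / k ! := by
  obtain ⟨W, hWZ, rfl⟩ := Finset.exists_subset_card_eq hk
  have hM0 : 0 ≤ M := (abs_nonneg _).trans (hM t ht)
  have hprod : ∏ z ∈ W, |t - z| ≤ (b - a) ^ #W := by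
    rw [← Finset.prod_const]
    exact Finset.prod_le_prod (fun _ _ => abs_nonneg _)
      fun z hz => Real.dist_eq t z ▸ Real.dist_le_of_mem_Icc ht (hZs (hWZ hz))
  rw [le_div_iff₀ (by positivity)]
  calc |G 0 t| * (#W)! ≤ M * ∏ z ∈ W, |t - z| :=
        hG.abs_mul_factorial_le ordConnected_Icc ((Finset.coe_subset.2 hWZ).trans hZs)
          (fun z hz => hZ z (hWZ hz)) hM ht
    _ ≤ M * (b - a) ^ #W := by gcongr

def ProjectionsVanishAtLeast (f : ℝ → ℂ) (s : Set ℝ) (m : ℕ) : Prop :=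
  ∀ α : ℝ, ∃ Z : Finset ℝ, ↑Z ⊆ s ∧ m ≤ #Z ∧ ∀ z ∈ Z, (exp (-(α * I)) * f z).re = 0

theorem Complex.exp_neg_arg_mul_I_mul (z : ℂ) : exp (-(arg z * I)) * z = ‖z‖ := by
  conv_lhs => enter [2]; rw [← norm_mul_exp_arg_mul_I z]
  rw [mul_left_comm, ← exp_add, neg_add_cancel, exp_zero, mul_one]

theorem IsDerivChain.norm_le_of_projectionsVanishAtLeast {a b : ℝ} {G : ℕ → ℝ → ℂ} {n : ℕ}
    (hG : IsDerivChain G n (Icc a b)) (hzeros : ProjectionsVanishAtLeast (G 0) (Icc a b) n)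
    {M : ℝ} (hM : ∀ x ∈ Icc a b, ‖G n x‖ ≤ M) {k : ℕ} (hk : k ≤ n) {t : ℝ}
    (ht : t ∈ Icc a b) :
    ‖G (n - k) t‖ ≤ M * (b - a) ^ k / k ! := by
  set α := arg (G (n - k) t)
  set g : ℕ → ℝ → ℝ := fun i x => (exp (-(α * I)) * G i x).re
  have hg : IsDerivChain g n (Icc a b) := fun i hi x hx =>
    reCLM.hasFDerivAt.comp_hasDerivWithinAt x ((hG i hi x hx).const_mul _)
  obtain ⟨Z, hZs, hnZ, hZ⟩ := hzeros α
  obtain ⟨Z', hZ's, hcard, hZ'0⟩ :=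
    IsDerivChain.exists_finset_zeros ordConnected_Icc (k := n - k) (fun i hi => hg i (by omega))
      hZs hZ
  have hg_shift : IsDerivChain (fun i => g (n - k + i)) k (Icc a b) := fun i hi x hx => by
    simpa only [add_assoc] using hg (n - k + i) (by omega) x hx
  have hgn : ∀ x ∈ Icc a b, |g (n - k + k) x| ≤ M := fun x hx => by
    rw [Nat.sub_add_cancel hk]
    exact (abs_re_le_norm _).trans (by simpa [norm_exp] using hM x hx)
  have hnorm : ‖G (n - k) t‖ = g (n - k) t := by
    simp only [g, α, exp_neg_arg_mul_I_mul, ofReal_re]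
  rw [hnorm]
  exact (le_abs_self _).trans
    (hg_shift.abs_le_of_card_le hZ's (by omega) hZ'0 hgn ht)

theorem eqOn_zero_of_linearODE_of_projectionsVanishAtLeast {a b : ℝ} (hab : a < b) {n : ℕ}
    {c : ℕ → ℝ → ℂ} {A : ℕ → ℝ} (hbd : ∀ k ∈ Finset.Icc 1 n, ∀ t ∈ Icc a b, ‖c k t‖ ≤ A k)
    (hsmall : ∑ k ∈ Finset.Icc 1 n, A k * (b - a) ^ k / k ! < 1)
    {f : ℝ → ℂ} (hf : ContDiffOn ℝ n f (Icc a b))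
    (hode : ∀ t ∈ Icc a b, iteratedDerivWithin n f (Icc a b) t
        + ∑ k ∈ Finset.Icc 1 n, c k t * iteratedDerivWithin (n - k) f (Icc a b) t = 0)
    (hzeros : ProjectionsVanishAtLeast f (Icc a b) n) :
    EqOn f 0 (Icc a b) := by
  set F := fun k => iteratedDerivWithin k f (Icc a b)
  have hF : IsDerivChain F n (Icc a b) :=
    hf.isDerivChain_iteratedDerivWithin (uniqueDiffOn_Icc hab)
  have hF0 : F 0 = f := iteratedDerivWithin_zero
  obtain ⟨t₀, ht₀, hmax⟩ := isCompact_Icc.exists_isMaxOn (nonempty_Icc.2 hab.le)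
    (hf.continuousOn_iteratedDerivWithin le_rfl (uniqueDiffOn_Icc hab)).norm
  set M := ‖F n t₀‖
  have hM : ∀ x ∈ Icc a b, ‖F n x‖ ≤ M := fun x hx => hmax hx
  have hlower (k : ℕ) (hk : k ∈ Finset.Icc 1 n) : ‖F (n - k) t₀‖ ≤ M * (b - a) ^ k / k ! :=
    hF.norm_le_of_projectionsVanishAtLeast (hF0 ▸ hzeros) hM (Finset.mem_Icc.1 hk).2 ht₀
  have hM_le : M ≤ (∑ k ∈ Finset.Icc 1 n, A k * (b - a) ^ k / k !) * M :=
    calc M = ‖∑ k ∈ Finset.Icc 1 n, c k t₀ * F (n - k) t₀‖ := by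
          rw [← norm_neg, ← eq_neg_of_add_eq_zero_left (hode t₀ ht₀)]
      _ ≤ ∑ k ∈ Finset.Icc 1 n, ‖c k t₀ * F (n - k) t₀‖ := norm_sum_le _ _
      _ ≤ ∑ k ∈ Finset.Icc 1 n, A k * (M * (b - a) ^ k / k !) := by
          refine Finset.sum_le_sum fun k hk => ?_
          rw [norm_mul]
          exact mul_le_mul (hbd k hk t₀ ht₀) (hlower k hk) (norm_nonneg _)
            ((norm_nonneg _).trans (hbd k hk t₀ ht₀))
      _ = (∑ k ∈ Finset.Icc 1 n, A k * (b - a) ^ k / k !) * M := by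
          rw [Finset.sum_mul]
          exact Finset.sum_congr rfl fun _ _ => by ring
  have hM0 : M = 0 := by nlinarith [norm_nonneg (F n t₀)]
  intro t ht
  simpa [hF0, hM0] using hF.norm_le_of_projectionsVanishAtLeast (hF0 ▸ hzeros) hM le_rfl ht

theorem exists_finset_subset_Icc_add_int_mul {c d β h : ℝ} (hh : 0 < h) {m : ℕ}
    (hm : m * h ≤ d - c) :
    ∃ V : Finset ℝ, #V = m ∧ ↑V ⊆ Icc c d ∧ ∀ v ∈ V, ∃ j : ℤ, v = β + j * h := by
  set j₀ := ⌈(c - β) / h⌉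
  set v : ℕ → ℝ := fun i => β + (j₀ + i) * h
  have hv_inj : v.Injective := fun i i' hii' => by
    simpa [v, hh.ne'] using hii'
  have hj₀_ge : c - β ≤ j₀ * h := (div_le_iff₀ hh).1 (Int.le_ceil _)
  have hj₀_lt : j₀ * h < c - β + h := by
    have := (lt_div_iff₀ hh).1 (sub_lt_iff_lt_add.2 (Int.ceil_lt_add_one ((c - β) / h)))
    linarith
  refine ⟨(Finset.range m).image v, by rw [Finset.card_image_of_injective _ hv_inj,
    Finset.card_range], ?_, ?_⟩
  · intro x hx
    simp only [Finset.coe_image, Finset.coe_range, mem_image, mem_Iio] at hx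
    obtain ⟨i, hi, rfl⟩ := hx
    have hi' : (i : ℝ) + 1 ≤ m := by exact_mod_cast hi
    constructor <;> nlinarith [(Nat.cast_nonneg i : (0 : ℝ) ≤ i)]
  · simp only [Finset.mem_image, Finset.mem_range]
    rintro _ ⟨i, -, rfl⟩
    exact ⟨j₀ + i, by push_cast; ring⟩

theorem projectionsVanishAtLeast_of_arg {a b : ℝ} (hab : a ≤ b) {f : ℝ → ℂ} {θ : ℝ → ℝ}
    (hθc : ContinuousOn θ (Icc a b)) (hθ : ∀ t ∈ Icc a b, f t = ‖f t‖ * exp (θ t * I))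
    {m : ℕ} (hm : m * Real.pi ≤ |θ b - θ a|) :
    ProjectionsVanishAtLeast f (Icc a b) m := by
  intro α
  obtain ⟨V, hVcard, hVsub, hV⟩ := exists_finset_subset_Icc_add_int_mul (β := α + Real.pi / 2)
    (c := min (θ a) (θ b)) (d := max (θ a) (θ b)) (m := m) Real.pi_pos
    (by rwa [max_sub_min_eq_abs])
  have hVθ : ↑V ⊆ θ '' Icc a b :=
    hVsub.trans (uIcc_of_le hab ▸ intermediate_value_uIcc ((uIcc_of_le hab).symm ▸ hθc))
  obtain ⟨Z, hZs, rfl⟩ := Finset.subset_set_image_iff.1 hVθ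
  refine ⟨Z, hZs, hVcard ▸ Finset.card_image_le, fun z hz => ?_⟩
  obtain ⟨j, hj⟩ := hV (θ z) (Finset.mem_image_of_mem θ hz)
  have hrot : exp (-(α * I)) * f z = ‖f z‖ * exp (↑(θ z - α) * I) := by
    conv_lhs => rw [hθ z (hZs hz), mul_left_comm, ← exp_add]
    congr 2
    push_cast
    ring
  rw [hrot, re_ofReal_mul, exp_ofReal_mul_I_re, Real.cos_eq_zero_iff.2 ⟨j, by rw [hj]; ring⟩,
    mul_zero]

theorem stmt11_general (ℓ : ℝ) (hℓ : 0 < ℓ) (n : ℕ) (a : ℕ → ℝ → ℂ) (A : ℕ → ℝ)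
    (hbd : ∀ k ∈ Finset.Icc 1 n, ∀ t ∈ Set.Icc 0 ℓ, ‖a k t‖ ≤ A k)
    (hsmall : ∑ k ∈ Finset.Icc 1 n, A k * ℓ ^ k / (k.factorial : ℝ) < 1 / 2)
    (f : ℝ → ℂ) (hf : ContDiffOn ℝ n f (Set.Icc 0 ℓ))
    (hode : ∀ t ∈ Set.Icc 0 ℓ,
      iteratedDerivWithin n f (Set.Icc 0 ℓ) t
        + ∑ k ∈ Finset.Icc 1 n, a k t * iteratedDerivWithin (n - k) f (Set.Icc 0 ℓ) t = 0)
    (hfne : ∀ t ∈ Set.Icc 0 ℓ, f t ≠ 0)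
    (θ : ℝ → ℝ) (hθc : ContinuousOn θ (Set.Icc 0 ℓ))
    (hθ : ∀ t ∈ Set.Icc 0 ℓ,
      f t = ((‖f t‖ : ℝ) : ℂ) * Complex.exp (θ t * Complex.I)) :
    |θ ℓ - θ 0| < (n + 1) * Real.pi := by
  by_contra! hvar
  have hzeros : ProjectionsVanishAtLeast f (Icc 0 ℓ) n := fun α => by
    obtain ⟨Z, hZs, hZ, hZ0⟩ :=
      projectionsVanishAtLeast_of_arg hℓ.le hθc hθ (m := n + 1) (by push_cast; linarith) α
    exact ⟨Z, hZs, by omega, hZ0⟩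
  have hf0 : EqOn f 0 (Icc 0 ℓ) :=
    eqOn_zero_of_linearODE_of_projectionsVanishAtLeast hℓ hbd
      (by simpa using hsmall.trans one_half_lt_one) hf hode hzeros
  exact hfne 0 (left_mem_Icc.2 hℓ.le) (hf0 (left_mem_Icc.2 hℓ.le))

/-- **Variation of argument for complex-valued linear ODEs.** If the complex
coefficients of `f^{(n)} + a₁ f^{(n-1)} + ⋯ + aₙ f = 0` on `[0,ℓ]` satisfy
`|a_k| ≤ A_k` with `Σ A_k ℓ^k / k! < 1/2`, and a solution `f` is nonvanishing
on `[0,ℓ]`, then any continuous branch `θ` of the argument of `f` satisfies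
`|θ(ℓ) − θ(0)| < (n+1)π`. -/
theorem stmt11 (ℓ : ℝ) (hℓ : 0 < ℓ) (n : ℕ) (a : ℕ → ℝ → ℂ) (A : ℕ → ℝ)
    (hacont : ∀ k ∈ Finset.Icc 1 n, ContinuousOn (a k) (Set.Icc 0 ℓ))
    (hbd : ∀ k ∈ Finset.Icc 1 n, ∀ t ∈ Set.Icc 0 ℓ, ‖a k t‖ ≤ A k)
    (hsmall : ∑ k ∈ Finset.Icc 1 n, A k * ℓ ^ k / (k.factorial : ℝ) < 1 / 2)
    (f : ℝ → ℂ) (hf : ContDiffOn ℝ n f (Set.Icc 0 ℓ))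
    (hode : ∀ t ∈ Set.Icc 0 ℓ,
      iteratedDerivWithin n f (Set.Icc 0 ℓ) t
        + ∑ k ∈ Finset.Icc 1 n, a k t * iteratedDerivWithin (n - k) f (Set.Icc 0 ℓ) t = 0)
    (hfne : ∀ t ∈ Set.Icc 0 ℓ, f t ≠ 0)
    (θ : ℝ → ℝ) (hθc : ContinuousOn θ (Set.Icc 0 ℓ))
    (hθ : ∀ t ∈ Set.Icc 0 ℓ,
      f t = ((‖f t‖ : ℝ) : ℂ) * Complex.exp (θ t * Complex.I)) :
    |θ ℓ - θ 0| < (n + 1) * Real.pi :=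
  stmt11_general ℓ hℓ n a A hbd hsmall f hf hode hfne θ hθc hθ
end

section
/- For every k ∈ ℕ there exists a constant δ_k > 0, depending only on k, with the following property. Let f be holomorphic in the open unit disk 𝔻 and continuous on its closure, normalized so that sup_{z∈𝔻} |f(z)| = 1, and suppose |f^{(k)}(0)| = s > 0. Then f has at most k zeros, counted with multiplicities, in the open disk { z : |z| < δ_k · s }. -/
/-!
Let `r = δ s` and `n = ∑ μ i`, and write `f = P g` with `P w = ∏ (w - z i) ^ μ i`. Since the zeros
lie in `‖w‖ ≤ r ≤ 1/4`, we have `‖P‖ ≥ (1/4) ^ n` on `‖w‖ = 1/2`, so the maximum principle bounds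
`g` by `4 ^ n` on the disk of radius `1/2`, whence `‖f‖ ≤ (2r) ^ n 4 ^ n = (8r) ^ n` on `‖w‖ = r`.
Cauchy's estimate on that circle gives `s ≤ k! (8r) ^ n / r ^ k`; if `n > k` this is at most
`k! 8 ^ (k + 1) r`, which is `s / 2` for `δ = (2 k! 8 ^ (k + 1))⁻¹`. Cauchy's estimate on
`‖w‖ = 1/2` gives `s ≤ k! 2 ^ k`, which keeps `r ≤ 1/16`.
-/

open Metric Set Function
open scoped Topology Nat

section NormedField

variable {𝕜 ι : Type*} [NormedField 𝕜] (s : Finset ι) (x : ι → 𝕜) (μ : ι → ℕ) {c : ℝ}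

theorem norm_prod_pow_le (hx : ∀ i ∈ s, ‖x i‖ ≤ c) :
    ‖∏ i ∈ s, x i ^ μ i‖ ≤ c ^ (∑ i ∈ s, μ i : ℕ) := by
  rw [norm_prod, ← Finset.prod_pow_eq_pow_sum]
  refine Finset.prod_le_prod (fun i _ => norm_nonneg _) fun i hi => ?_
  rw [norm_pow]
  exact pow_le_pow_left₀ (norm_nonneg _) (hx i hi) _

theorem pow_sum_le_norm_prod_pow (hc : 0 ≤ c) (hx : ∀ i ∈ s, c ≤ ‖x i‖) :
    c ^ (∑ i ∈ s, μ i : ℕ) ≤ ‖∏ i ∈ s, x i ^ μ i‖ := by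
  rw [norm_prod, ← Finset.prod_pow_eq_pow_sum]
  refine Finset.prod_le_prod (fun i _ => by positivity) fun i hi => ?_
  rw [norm_pow]
  exact pow_le_pow_left₀ hc (hx i hi) _

end NormedField

theorem exists_eq_sub_pow_mul {U : Set ℂ} (hU : IsOpen U) {f : ℂ → ℂ}
    (hf : DifferentiableOn ℂ f U) {a : ℂ} (ha : a ∈ U) {n : ℕ}
    (hn : (n : ℕ∞) ≤ analyticOrderAt f a) :
    ∃ g : ℂ → ℂ, DifferentiableOn ℂ g U ∧ ∀ w, f w = (w - a) ^ n * g w := by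
  obtain ⟨h, hh, hfh⟩ := (natCast_le_analyticOrderAt (hf.analyticAt (hU.mem_nhds ha))).mp hn
  set g := update (fun w => f w / (w - a) ^ n) a (h a)
  have hg_ne {w : ℂ} (hw : w ≠ a) : g w = f w / (w - a) ^ n := update_of_ne hw ..
  have hgh : g =ᶠ[𝓝 a] h := by
    filter_upwards [hfh] with w hw
    rcases eq_or_ne w a with rfl | hwa
    · simp [g]
    · rw [hg_ne hwa, hw, smul_eq_mul, mul_div_cancel_left₀ _ (pow_ne_zero _ (sub_ne_zero.mpr hwa))]
  refine ⟨g, fun w hw => ?_, fun w => ?_⟩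
  · rcases eq_or_ne w a with rfl | hwa
    · exact (hh.differentiableAt.congr_of_eventuallyEq hgh).differentiableWithinAt
    · have hquot : DifferentiableAt ℂ (fun w => f w / (w - a) ^ n) w :=
        (hf.differentiableAt (hU.mem_nhds hw)).div (by fun_prop)
          (pow_ne_zero _ (sub_ne_zero.mpr hwa))
      refine (hquot.congr_of_eventuallyEq ?_).differentiableWithinAt
      filter_upwards [eventually_ne_nhds hwa] with v hv using hg_ne hv
  · rcases eq_or_ne w a with rfl | hwa
    · simpa [g] using hfh.self_of_nhds
    · rw [hg_ne hwa, mul_div_cancel₀ _ (pow_ne_zero _ (sub_ne_zero.mpr hwa))]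

theorem exists_eq_prod_sub_pow_mul {ι : Type*} {U : Set ℂ} (hU : IsOpen U) {z : ι → ℂ}
    (hz : Injective z) (μ : ι → ℕ) (s : Finset ι) {f : ℂ → ℂ} (hf : DifferentiableOn ℂ f U)
    (hzU : ∀ i ∈ s, z i ∈ U) (hμ : ∀ i ∈ s, (μ i : ℕ∞) ≤ analyticOrderAt f (z i)) :
    ∃ g : ℂ → ℂ, DifferentiableOn ℂ g U ∧ ∀ w, f w = (∏ i ∈ s, (w - z i) ^ μ i) * g w := by
  classical
  induction s using Finset.induction_on generalizing f with
  | empty => exact ⟨f, hf, by simp⟩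
  | insert i s hi ih =>
    obtain ⟨f₁, hf₁, hff₁⟩ := exists_eq_sub_pow_mul hU hf (hzU i (s.mem_insert_self i))
      (hμ i (s.mem_insert_self i))
    have hμ₁ : ∀ j ∈ s, (μ j : ℕ∞) ≤ analyticOrderAt f₁ (z j) := by
      intro j hj
      have hji : z j - z i ≠ 0 := sub_ne_zero.mpr (hz.ne (ne_of_mem_of_not_mem hj hi))
      have hunit : analyticOrderAt (fun w => (w - z i) ^ μ i) (z j) = 0 :=
        analyticOrderAt_eq_zero.mpr (Or.inr (pow_ne_zero _ hji))
      have horder := analyticOrderAt_mul (f := fun w => (w - z i) ^ μ i) (g := f₁) (z₀ := z j)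
        (by fun_prop) (hf₁.analyticAt (hU.mem_nhds (hzU j (Finset.mem_insert_of_mem hj))))
      rw [hunit, zero_add, show (fun w => (w - z i) ^ μ i) * f₁ = f from (funext hff₁).symm]
        at horder
      exact horder ▸ hμ j (Finset.mem_insert_of_mem hj)
    obtain ⟨g, hg, hf₁g⟩ := ih hf₁ (fun j hj => hzU j (Finset.mem_insert_of_mem hj)) hμ₁
    exact ⟨g, hg, fun w => by rw [hff₁, hf₁g, Finset.prod_insert hi, mul_assoc]⟩

theorem norm_le_of_eq_prod_sub_pow_mul {ι : Type*} {f g : ℂ → ℂ} {z : ι → ℂ} {μ : ι → ℕ}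
    {s : Finset ι} {r R M : ℝ} (hrR : r < R) (hg : DiffContOnCl ℂ g (ball 0 R))
    (hfM : ∀ w ∈ sphere (0 : ℂ) R, ‖f w‖ ≤ M) (hzr : ∀ i ∈ s, ‖z i‖ ≤ r)
    (hfg : ∀ w, f w = (∏ i ∈ s, (w - z i) ^ μ i) * g w) {w : ℂ} (hw : ‖w‖ = r) :
    ‖f w‖ ≤ M * (2 * r / (R - r)) ^ (∑ i ∈ s, μ i : ℕ) := by
  have hr : 0 ≤ r := hw ▸ norm_nonneg w
  have hR : 0 < R := hr.trans_lt hrR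
  have hRr : 0 < R - r := sub_pos.mpr hrR
  have hg_sphere : ∀ v ∈ frontier (ball (0 : ℂ) R), ‖g v‖ ≤ M / (R - r) ^ (∑ i ∈ s, μ i : ℕ) := by
    intro v hv
    rw [frontier_ball 0 hR.ne', mem_sphere_zero_iff_norm] at hv
    have hP : (R - r) ^ (∑ i ∈ s, μ i : ℕ) ≤ ‖∏ i ∈ s, (v - z i) ^ μ i‖ :=
      pow_sum_le_norm_prod_pow _ _ _ hRr.le fun i hi => by
        linarith [norm_sub_norm_le v (z i), hzr i hi]
    rw [le_div_iff₀ (by positivity)]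
    calc ‖g v‖ * (R - r) ^ (∑ i ∈ s, μ i : ℕ)
        ≤ ‖g v‖ * ‖∏ i ∈ s, (v - z i) ^ μ i‖ := by gcongr
      _ = ‖f v‖ := by rw [hfg, norm_mul, mul_comm]
      _ ≤ M := hfM v (mem_sphere_zero_iff_norm.mpr hv)
  have hgw : ‖g w‖ ≤ M / (R - r) ^ (∑ i ∈ s, μ i : ℕ) :=
    Complex.norm_le_of_forall_mem_frontier_norm_le isBounded_ball hg hg_sphere
      (by rw [closure_ball 0 hR.ne', mem_closedBall_zero_iff, hw]; exact hrR.le)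
  have hPw : ‖∏ i ∈ s, (w - z i) ^ μ i‖ ≤ (2 * r) ^ (∑ i ∈ s, μ i : ℕ) :=
    norm_prod_pow_le _ _ _ fun i hi => by linarith [norm_sub_le w (z i), hzr i hi]
  calc ‖f w‖ = ‖∏ i ∈ s, (w - z i) ^ μ i‖ * ‖g w‖ := by rw [hfg, norm_mul]
    _ ≤ (2 * r) ^ (∑ i ∈ s, μ i : ℕ) * (M / (R - r) ^ (∑ i ∈ s, μ i : ℕ)) := by gcongr
    _ = M * (2 * r / (R - r)) ^ (∑ i ∈ s, μ i : ℕ) := by rw [div_pow]; ring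

theorem norm_iteratedDeriv_le_of_analyticOrderAt_le {ι : Type*} {f : ℂ → ℂ}
    (hf : DifferentiableOn ℂ f (ball 0 1)) (hf₁ : ∀ w ∈ ball (0 : ℂ) 1, ‖f w‖ ≤ 1)
    {z : ι → ℂ} (hz : Injective z) {μ : ι → ℕ} {s : Finset ι}
    (hμ : ∀ i ∈ s, (μ i : ℕ∞) ≤ analyticOrderAt f (z i)) {r : ℝ} (hr₀ : 0 < r) (hr : r ≤ 1 / 4)
    (hzr : ∀ i ∈ s, ‖z i‖ ≤ r) (k : ℕ) :
    ‖iteratedDeriv k f 0‖ ≤ k ! * (8 * r) ^ (∑ i ∈ s, μ i : ℕ) / r ^ k := by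
  obtain ⟨g, hg, hfg⟩ := exists_eq_prod_sub_pow_mul isOpen_ball hz μ s hf
    (fun i hi => mem_ball_zero_iff.mpr ((hzr i hi).trans_lt (by linarith))) hμ
  have hf_sphere : ∀ w ∈ sphere (0 : ℂ) r, ‖f w‖ ≤ (8 * r) ^ (∑ i ∈ s, μ i : ℕ) := by
    intro w hw
    rw [mem_sphere_zero_iff_norm] at hw
    have hq : 2 * r / (1 / 2 - r) ≤ 8 * r := by
      rw [div_le_iff₀ (by linarith)]; nlinarith
    calc ‖f w‖ ≤ 1 * (2 * r / (1 / 2 - r)) ^ (∑ i ∈ s, μ i : ℕ) :=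
          norm_le_of_eq_prod_sub_pow_mul (by linarith)
            (hg.diffContOnCl_ball (closedBall_subset_ball (by norm_num)))
            (fun v hv => hf₁ v (sphere_subset_ball (by norm_num) hv)) hzr hfg hw
      _ ≤ (8 * r) ^ (∑ i ∈ s, μ i : ℕ) := by
          rw [one_mul]; gcongr; exact div_nonneg (by linarith) (by linarith)
  simpa [mul_div_assoc] using Complex.norm_iteratedDeriv_le_of_forall_mem_sphere_norm_le k hr₀
    (hf.diffContOnCl_ball (closedBall_subset_ball (by linarith))) hf_sphere

/-- For every `k` there is a universal `δ_k > 0` such that every `f`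
holomorphic in the open unit disk, continuous on its closure, normalized by
`sup_𝔻 |f| = 1` and with `|f^{(k)}(0)| = s > 0`, has at most `k` zeros,
counted with multiplicities, in the disk `{|z| < δ_k · s}`. -/
theorem stmt17 (k : ℕ) :
    ∃ δ : ℝ, 0 < δ ∧
      ∀ f : ℂ → ℂ, DifferentiableOn ℂ f (Metric.ball (0:ℂ) 1) →
        ContinuousOn f (Metric.closedBall (0:ℂ) 1) →
        sSup ((fun z => ‖f z‖) '' Metric.ball (0:ℂ) 1) = 1 →
        ∀ s : ℝ, 0 < s → ‖iteratedDeriv k f 0‖ = s →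
        ∀ (m : ℕ) (z : Fin m → ℂ) (μ : Fin m → ℕ),
          Function.Injective z → (∀ i, z i ∈ Metric.ball (0:ℂ) (δ * s)) →
          (∀ i, 1 ≤ μ i) →
          (∀ i, ∀ j < μ i, iteratedDeriv j f (z i) = 0) →
          ∑ i, μ i ≤ k := by
  refine ⟨(2 * k ! * 8 ^ (k + 1))⁻¹, by positivity, ?_⟩
  intro f hf hfc hsup s hs hks m z μ hz hzr _ hμ
  set r := (2 * k ! * 8 ^ (k + 1) : ℝ)⁻¹ * s with hr_def
  have hf₁ : ∀ w ∈ ball (0 : ℂ) 1, ‖f w‖ ≤ 1 := fun w hw =>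
    hsup ▸ le_csSup (((isCompact_closedBall 0 1).image_of_continuousOn hfc.norm).bddAbove.mono
      (image_mono ball_subset_closedBall)) (mem_image_of_mem _ hw)
  have hs_le : s ≤ k ! * 2 ^ k := by
    simpa [← hks] using Complex.norm_iteratedDeriv_le_of_forall_mem_sphere_norm_le k
      (by norm_num : (0 : ℝ) < 1 / 2) (hf.diffContOnCl_ball (closedBall_subset_ball (by norm_num)))
      fun w hw => hf₁ w (sphere_subset_ball (by norm_num) hw)
  have hr₀ : 0 < r := by rw [hr_def]; positivity
  have hr : r ≤ 1 / 16 := calc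
    r ≤ (2 * k ! * 8 ^ (k + 1) : ℝ)⁻¹ * (k ! * 2 ^ k) := by rw [hr_def]; gcongr
    _ ≤ (2 * k ! * 8 ^ (k + 1) : ℝ)⁻¹ * (k ! * 8 ^ k) := by gcongr; norm_num
    _ = 1 / 16 := by field_simp; ring
  have hzeros := norm_iteratedDeriv_le_of_analyticOrderAt_le hf hf₁ hz (s := Finset.univ)
    (fun i _ => (natCast_le_analyticOrderAt_iff_iteratedDeriv_eq_zero (hf.analyticAt
      (isOpen_ball.mem_nhds (ball_subset_ball (by linarith) (hzr i))))).2 (hμ i))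
    hr₀ (by linarith) (fun i _ => (mem_ball_zero_iff.1 (hzr i)).le) k
  by_contra! hk
  have h8r : (8 * r) ^ (∑ i, μ i : ℕ) ≤ (8 * r) ^ (k + 1) :=
    pow_le_pow_of_le_one (by positivity) (by linarith) hk
  have hs_half : s ≤ s / 2 := calc
    s ≤ k ! * (8 * r) ^ (k + 1) / r ^ k := by
      rw [← hks]; exact hzeros.trans (by gcongr)
    _ = k ! * 8 ^ (k + 1) * r := by rw [mul_pow, pow_succ r]; field_simp
    _ = s / 2 := by rw [hr_def]; field_simp
  linarith
end
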